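/- arXiv:1906.02511 — 7 statements merged into one kernel-verified Lean document; each statement's English description precedes it below -/
import Mathlib

section
/- Let s₁,…,sₙ ∈ [0,1) and v₁,…,vₙ ∈ ℝ, and let k := |{v₁,…,vₙ}| be the number of distinct values among v₁,…,vₙ. Then there exists t ∈ ℝ such that B(s₁+v₁t,…,sₙ+vₙt) ≥ √(k/12). -/
open scoped Real

/-- The bias `B(r₁,…,rₙ)`: the supremum over `0 ≤ a ≤ b ≤ 1` of
`|#{i : {rᵢ} ∈ [a,b]} − n(b−a)|`, where `{r}` denotes the fractional part. -/
noncomputable def bias (n : ℕ) (r : Fin n → ℝ) : ℝ :=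
  sSup {x : ℝ | ∃ a b : ℝ, 0 ≤ a ∧ a ≤ b ∧ b ≤ 1 ∧
    x = |((Finset.univ.filter
        (fun i : Fin n => a ≤ Int.fract (r i) ∧ Int.fract (r i) ≤ b)).card : ℝ) - n * (b - a)|}

noncomputable section
open MeasureTheory intervalIntegral Finset Set

/-- periodic Bernoulli-like function -/
def bb (x : ℝ) : ℝ := Int.fract x ^ 2 - Int.fract x + 1/6

/-- arc indicator -/
def chi (u c l : ℝ) : ℝ := if Int.fract (u - c) < l then 1 else 0

lemma bb_abs_le (x : ℝ) : |bb x| ≤ 1/6 := by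
  have h0 := Int.fract_nonneg x
  have h1 := Int.fract_lt_one x
  have h2 := sq_nonneg (Int.fract x - 1/2)
  unfold bb
  rw [abs_le]; constructor <;> nlinarith

lemma measurable_bb : Measurable bb := by
  unfold bb; exact ((measurable_fract.pow_const 2).sub measurable_fract).add_const _

lemma bb_int_add (x : ℝ) (z : ℤ) : bb (x + z) = bb x := by
  simp [bb, Int.fract_add_intCast]

lemma bb_periodic : Function.Periodic bb 1 := by
  intro x; simpa using bb_int_add x 1

lemma bb_neg (x : ℝ) : bb (-x) = bb x := by
  rcases eq_or_ne (Int.fract x) 0 with h | h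
  · rw [bb, bb, Int.fract_neg_eq_zero.mpr h, h]
  · rw [bb, bb, Int.fract_neg h]; ring

lemma chi_mem (u c l : ℝ) : chi u c l = 0 ∨ chi u c l = 1 := by
  unfold chi; split <;> simp

lemma chi_nonneg (u c l : ℝ) : 0 ≤ chi u c l := by rcases chi_mem u c l with h|h <;> simp [h]

lemma chi_abs_le (u c l : ℝ) : |chi u c l| ≤ 1 := by
  rcases chi_mem u c l with h|h <;> simp [h]

lemma measurable_chi (u l : ℝ) : Measurable (fun c => chi u c l) := by
  unfold chi
  exact Measurable.ite
    ((measurable_fract.comp (measurable_const.sub measurable_id)) measurableSet_Iio)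
    measurable_const measurable_const

lemma chi_fract (u c l : ℝ) : chi u c l = chi (Int.fract u) c l := by
  unfold chi
  rw [show Int.fract u - c = (u - c) - ↑⌊u⌋ by rw [Int.fract]; ring, Int.fract_sub_intCast]

/-- bounded measurable functions are interval integrable -/
lemma intInt_of_bdd {f : ℝ → ℝ} {C a b : ℝ} (hm : Measurable f) (h : ∀ x, |f x| ≤ C) :
    IntervalIntegrable f volume a b := by
  constructor <;>
  · refine Integrable.mono' (g := fun _ => C) (integrableOn_const measure_Ioc_lt_top.ne)
      hm.aestronglyMeasurable ?_
    exact Filter.Eventually.of_forall fun x => by simpa [Real.norm_eq_abs] using h x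

/-- helper: integral of a right-ray indicator -/
lemma H1 {a b : ℝ} (hab : a ≤ b) (s : ℝ) :
    ∫ c in a..b, (if s < c then (1:ℝ) else 0) = b - min (max s a) b := by
  have hm : Measurable fun c : ℝ => (if s < c then (1:ℝ) else 0) :=
    Measurable.ite measurableSet_Ioi measurable_const measurable_const
  rcases le_or_gt s a with h | h
  · rw [intervalIntegral.integral_congr_ae (g := fun _ => (1:ℝ)) ?_]
    · rw [intervalIntegral.integral_const, max_eq_right h, min_eq_left hab]; simp
    · filter_upwards with c hc
      rw [Set.uIoc_of_le hab] at hc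
      simp [lt_of_le_of_lt h hc.1]
  · rcases le_or_gt b s with h2 | h2
    · rw [intervalIntegral.integral_congr_ae (g := fun _ => (0:ℝ)) ?_]
      · rw [intervalIntegral.integral_const, max_eq_left h.le, min_eq_right h2]; simp
      · filter_upwards with c hc
        rw [Set.uIoc_of_le hab] at hc
        simp [not_lt.mpr (hc.2.trans h2)]
    · have e1 : ∫ c in a..s, (if s < c then (1:ℝ) else 0) = 0 := by
        rw [intervalIntegral.integral_congr_ae (g := fun _ => (0:ℝ)) ?_]
        · simp
        · filter_upwards with c hc
          rw [Set.uIoc_of_le h.le] at hc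
          simp [not_lt.mpr hc.2]
      have e2 : ∫ c in s..b, (if s < c then (1:ℝ) else 0) = b - s := by
        rw [intervalIntegral.integral_congr_ae (g := fun _ => (1:ℝ)) ?_]
        · simp
        · filter_upwards with c hc
          rw [Set.uIoc_of_le h2.le] at hc
          simp [hc.1]
      rw [← integral_add_adjacent_intervals (b := s)
        (intInt_of_bdd (C := 1) hm (fun x => by split <;> norm_num))
        (intInt_of_bdd (C := 1) hm (fun x => by split <;> norm_num)),
        e1, e2, max_eq_left h.le, min_eq_left h2.le]
      ring

/-- helper: integral of max ramp -/
lemma H2 {s : ℝ} (h0 : 0 ≤ s) (h1 : s ≤ 1) :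
    ∫ l in (0:ℝ)..1, max (l - s) 0 = (1 - s)^2/2 := by
  have i1 : IntervalIntegrable (fun l : ℝ => max (l - s) 0) volume 0 s :=
    (Continuous.max (by continuity) continuous_const).intervalIntegrable _ _
  have i2 : IntervalIntegrable (fun l : ℝ => max (l - s) 0) volume s 1 :=
    (Continuous.max (by continuity) continuous_const).intervalIntegrable _ _
  rw [← integral_add_adjacent_intervals i1 i2]
  have e1 : ∫ l in (0:ℝ)..s, max (l - s) 0 = 0 := by
    rw [integral_congr (g := fun _ => 0)]
    · simp
    · intro c hc
      rw [Set.uIcc_of_le h0] at hc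
      simp [max_eq_right, hc.2, sub_nonpos.mpr hc.2]
  have e2 : ∫ l in s..1, max (l - s) 0 = (1-s)^2/2 := by
    rw [integral_congr (g := fun l => l - s)]
    · rw [integral_sub (by apply intervalIntegrable_id) (intervalIntegrable_const)]
      simp; ring
    · intro c hc
      rw [Set.uIcc_of_le h1] at hc
      simp [max_eq_left, sub_nonneg.mpr hc.1]
  rw [e1, e2]; ring

/-- fract on [-1,0) -/
lemma fract_neg_seg {y : ℝ} (h0 : -1 ≤ y) (h1 : y < 0) : Int.fract y = y + 1 := by
  have : ⌊y⌋ = -1 := by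
    rw [Int.floor_eq_iff]
    refine ⟨by exact_mod_cast h0, by push_cast; linarith⟩
  rw [Int.fract, this]; push_cast; ring

lemma chi_eq_on_lo {x l : ℝ} (hx0 : 0 ≤ x) (hx1 : x < 1) {c : ℝ} (hc0 : 0 ≤ c) (hcx : c ≤ x) :
    chi x c l = if x - l < c then 1 else 0 := by
  unfold chi
  rw [Int.fract_eq_self.mpr ⟨by linarith, by linarith⟩]
  have : (x - c < l) ↔ (x - l < c) := Iff.intro (fun h => (by linarith)) (fun h => (by linarith))
  simp only [this]

lemma chi_eq_on_hi {x l : ℝ} (hx0 : 0 ≤ x) (hx1 : x < 1) {c : ℝ} (hcx : x < c) (hc1 : c ≤ 1) :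
    chi x c l = if x + 1 - l < c then 1 else 0 := by
  unfold chi
  rw [fract_neg_seg (by linarith) (by linarith)]
  have : (x - c + 1 < l) ↔ (x + 1 - l < c) := Iff.intro (fun h => (by linarith)) (fun h => (by linarith))
  simp only [this]

lemma chi_intInt (u l a b : ℝ) : IntervalIntegrable (fun c => chi u c l) volume a b :=
  intInt_of_bdd (C := 1) (measurable_chi u l) (chi_abs_le u · l)

lemma chi_chi_intInt (x w l a b : ℝ) :
    IntervalIntegrable (fun c => chi x c l * chi w c l) volume a b := by
  refine intInt_of_bdd (C := 1) ((measurable_chi x l).mul (measurable_chi w l)) (fun c => ?_)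
  rw [abs_mul]
  calc |chi x c l| * |chi w c l| ≤ 1 * 1 :=
        mul_le_mul (chi_abs_le x c l) (chi_abs_le w c l) (abs_nonneg _) zero_le_one
    _ = 1 := by norm_num

/-- Core integral 1 -/
lemma core1 (u : ℝ) {l : ℝ} (hl0 : 0 ≤ l) (hl1 : l ≤ 1) :
    ∫ c in (0:ℝ)..1, chi u c l = l := by
  have key : ∀ x : ℝ, 0 ≤ x → x < 1 → ∫ c in (0:ℝ)..1, chi x c l = l := by
    intro x hx0 hx1
    rw [← integral_add_adjacent_intervals (b := x) (chi_intInt x l 0 x) (chi_intInt x l x 1)]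
    have e1 : ∫ c in (0:ℝ)..x, chi x c l = x - min (max (x - l) 0) x := by
      rw [integral_congr (g := fun c => if x - l < c then 1 else 0) (fun c hc => by
        rw [Set.uIcc_of_le hx0] at hc
        show chi x c l = _
        exact chi_eq_on_lo hx0 hx1 hc.1 hc.2), H1 hx0]
    have e2 : ∫ c in x..1, chi x c l = 1 - min (max (x + 1 - l) x) 1 := by
      rw [intervalIntegral.integral_congr_ae (g := fun c => if x + 1 - l < c then 1 else 0)
        (Filter.Eventually.of_forall (fun c hc => by
          rw [Set.uIoc_of_le hx1.le] at hc
          show chi x c l = _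
          exact chi_eq_on_hi hx0 hx1 hc.1 hc.2)), H1 hx1.le]
    rw [e1, e2]
    rcases le_total l x with h | h
    · rw [max_eq_left (by linarith), min_eq_left (by linarith),
        max_eq_left (by linarith), min_eq_right (by linarith)]
      ring
    · rw [max_eq_right (by linarith), min_eq_left hx0,
        max_eq_left (by linarith), min_eq_left (by linarith)]
      ring
  have : (fun c => chi u c l) = fun c => chi (Int.fract u) c l :=
    funext fun c => chi_fract u c l
  rw [this]
  exact key _ (Int.fract_nonneg u) (Int.fract_lt_one u)

set_option maxHeartbeats 2000000 in
/-- pure algebra for core2 -/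
lemma core2_alg {w x l : ℝ} (hw : 0 ≤ w) (hwx : w ≤ x) (hx : x < 1) (hl0 : 0 ≤ l) (hl1 : l ≤ 1) :
    (w - min (max (x - l) 0) w) + (x - min (max (w + 1 - l) w) x) + (1 - min (max (x + 1 - l) x) 1)
      = max (l - (x - w)) 0 + max (l - 1 + (x - w)) 0 := by
  simp only [min_def, max_def]
  split_ifs <;> linarith

/-- Core integral 2, main case -/
lemma core2_main {w x l : ℝ} (hw : 0 ≤ w) (hwx : w ≤ x) (hx : x < 1) (hl0 : 0 ≤ l) (hl1 : l ≤ 1) :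
    ∫ c in (0:ℝ)..1, chi x c l * chi w c l
      = max (l - (x - w)) 0 + max (l - 1 + (x - w)) 0 := by
  have hmint := fun a b => chi_chi_intInt x w l a b
  rw [← integral_add_adjacent_intervals (a := (0:ℝ)) (b := x) (c := 1) (hmint 0 x) (hmint x 1),
    ← integral_add_adjacent_intervals (a := (0:ℝ)) (b := w) (c := x) (hmint 0 w) (hmint w x)]
  have hw1 : w < 1 := lt_of_le_of_lt hwx hx
  have e1 : ∫ c in (0:ℝ)..w, chi x c l * chi w c l = w - min (max (x - l) 0) w := by
    rw [integral_congr (g := fun c => if x - l < c then 1 else 0) (fun c hc => by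
      rw [Set.uIcc_of_le hw] at hc
      show chi x c l * chi w c l = if x - l < c then 1 else 0
      rw [chi_eq_on_lo (by linarith) hx hc.1 (hc.2.trans hwx), chi_eq_on_lo hw hw1 hc.1 hc.2]
      rcases le_or_gt c (x - l) with h | h
      · rw [if_neg (not_lt.mpr h), zero_mul]
      · rw [if_pos h, one_mul, if_pos (lt_of_le_of_lt (by linarith : w - l ≤ x - l) h)]),
      H1 hw]
  have e2 : ∫ c in w..x, chi x c l * chi w c l = x - min (max (w + 1 - l) w) x := by
    rw [intervalIntegral.integral_congr_ae (g := fun c => if w + 1 - l < c then 1 else 0)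
      (Filter.Eventually.of_forall (fun c hc => by
        rw [Set.uIoc_of_le hwx] at hc
        show chi x c l * chi w c l = if w + 1 - l < c then 1 else 0
        rw [chi_eq_on_lo (by linarith) hx (le_of_lt (lt_of_le_of_lt hw hc.1)) hc.2,
          chi_eq_on_hi hw hw1 hc.1 (hc.2.trans hx.le)]
        rcases le_or_gt c (w + 1 - l) with h | h
        · rw [if_neg (not_lt.mpr h), mul_zero]
        · rw [if_pos h, mul_one, if_pos (lt_of_le_of_lt (by linarith : x - l ≤ w + 1 - l) h)])),
      H1 hwx]
  have e3 : ∫ c in x..1, chi x c l * chi w c l = 1 - min (max (x + 1 - l) x) 1 := by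
    rw [intervalIntegral.integral_congr_ae (g := fun c => if x + 1 - l < c then 1 else 0)
      (Filter.Eventually.of_forall (fun c hc => by
        rw [Set.uIoc_of_le hx.le] at hc
        show chi x c l * chi w c l = if x + 1 - l < c then 1 else 0
        rw [chi_eq_on_hi (by linarith) hx hc.1 hc.2,
          chi_eq_on_hi hw hw1 (lt_of_le_of_lt hwx hc.1) hc.2]
        rcases le_or_gt c (x + 1 - l) with h | h
        · rw [if_neg (not_lt.mpr h), zero_mul]
        · rw [if_pos h, one_mul, if_pos (lt_of_le_of_lt (by linarith : w + 1 - l ≤ x + 1 - l) h)])),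
      H1 hx.le]
  rw [e1, e2, e3]
  have := core2_alg hw hwx hx hl0 hl1
  linarith

lemma fract_fract_sub (u w : ℝ) : Int.fract (Int.fract u - Int.fract w) = Int.fract (u - w) := by
  have : Int.fract u - Int.fract w = (u - w) - ((⌊u⌋ - ⌊w⌋ : ℤ) : ℝ) := by
    rw [Int.fract, Int.fract]; push_cast; ring
  rw [this, Int.fract_sub_intCast]

/-- Core integral 2, general -/
lemma core2 (u w : ℝ) {l : ℝ} (hl0 : 0 ≤ l) (hl1 : l ≤ 1) :
    ∫ c in (0:ℝ)..1, chi u c l * chi w c l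
      = max (l - Int.fract (u - w)) 0 + max (l - 1 + Int.fract (u - w)) 0 := by
  have hfu : (fun c => chi u c l * chi w c l)
      = fun c => chi (Int.fract u) c l * chi (Int.fract w) c l := by
    funext c; rw [chi_fract u, chi_fract w]
  rw [hfu, ← fract_fract_sub u w]
  set x := Int.fract u with hxdef
  set y := Int.fract w with hydef
  have hx0 : 0 ≤ x := Int.fract_nonneg u
  have hx1 : x < 1 := Int.fract_lt_one u
  have hy0 : 0 ≤ y := Int.fract_nonneg w
  have hy1 : y < 1 := Int.fract_lt_one w
  rcases le_total y x with h | h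
  · rw [core2_main hy0 h hx1 hl0 hl1, Int.fract_eq_self.mpr ⟨by linarith, by linarith⟩]
  · have hcom : (fun c => chi x c l * chi y c l) = fun c => chi y c l * chi x c l := by
      funext c; rw [mul_comm]
    rw [hcom, core2_main hx0 h hy1 hl0 hl1]
    rcases eq_or_lt_of_le h with he | hlt
    · rw [he, Int.fract_eq_self.mpr (by constructor <;> linarith)]
    · rw [fract_neg_seg (by linarith) (by linarith)]
      rw [show l - (x - y + 1) = l - 1 + (y - x) by ring,
        show l - 1 + (x - y + 1) = l - (y - x) by ring, add_comm]

/-- the ℓ-integral producing bb -/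
lemma core_beta (u w : ℝ) :
    ∫ l in (0:ℝ)..1,
      (max (l - Int.fract (u - w)) 0 + max (l - 1 + Int.fract (u - w)) 0 - l^2) = bb (u - w) := by
  set d := Int.fract (u - w) with hd
  have hd0 : 0 ≤ d := Int.fract_nonneg _
  have hd1 : d < 1 := Int.fract_lt_one _
  have i1 : IntervalIntegrable (fun l : ℝ => max (l - d) 0) volume 0 1 :=
    (Continuous.max (by continuity) continuous_const).intervalIntegrable _ _
  have i2 : IntervalIntegrable (fun l : ℝ => max (l - 1 + d) 0) volume 0 1 :=
    (Continuous.max (by continuity) continuous_const).intervalIntegrable _ _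
  have i3 : IntervalIntegrable (fun l : ℝ => l^2) volume 0 1 :=
    (continuous_pow 2).intervalIntegrable _ _
  rw [integral_sub (i1.add i2) i3, integral_add i1 i2]
  have e2 : ∫ l in (0:ℝ)..1, max (l - 1 + d) 0 = (1 - (1 - d))^2/2 := by
    have : (fun l : ℝ => max (l - 1 + d) 0) = fun l => max (l - (1 - d)) 0 := by
      funext l; ring_nf
    rw [this]
    exact H2 (by linarith) (by linarith)
  rw [H2 hd0 hd1.le, e2, integral_pow]
  unfold bb
  rw [← hd]
  push_cast
  ring

/-- sum of chi's is a card -/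
lemma sum_chi_card {n : ℕ} (x : Fin n → ℝ) (A : Finset (Fin n)) (c l : ℝ) :
    ∑ i ∈ A, chi (x i) c l = ((A.filter (fun i => Int.fract (x i - c) < l)).card : ℝ) := by
  rw [Finset.card_filter]
  push_cast
  exact Finset.sum_congr rfl fun i _ => rfl

lemma measurable_DD {n : ℕ} (x : Fin n → ℝ) (A : Finset (Fin n)) (l : ℝ) :
    Measurable (fun c => ∑ i ∈ A, (chi (x i) c l - l)) :=
  Finset.measurable_sum _ fun i _ => (measurable_chi (x i) l).sub measurable_const

lemma DD_abs_le {n : ℕ} (x : Fin n → ℝ) (A : Finset (Fin n)) (c : ℝ) {l : ℝ}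
    (hl0 : 0 ≤ l) (hl1 : l ≤ 1) : |∑ i ∈ A, (chi (x i) c l - l)| ≤ 2 * n := by
  calc |∑ i ∈ A, (chi (x i) c l - l)| ≤ ∑ i ∈ A, |chi (x i) c l - l| :=
        Finset.abs_sum_le_sum_abs _ _
    _ ≤ ∑ _i ∈ A, 2 := by
        refine Finset.sum_le_sum fun i _ => ?_
        have := chi_abs_le (x i) c l
        rw [abs_le] at *
        constructor <;> [linarith [this.1]; linarith [this.2]]
    _ = 2 * A.card := by rw [Finset.sum_const]; push_cast; ring
    _ ≤ 2 * n := by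
        have := A.card_le_univ
        have : (A.card : ℝ) ≤ n := by exact_mod_cast le_trans this (le_of_eq (by simp))
        linarith

lemma intInt_sum {ι : Type*} {a b : ℝ} (s : Finset ι) {f : ι → ℝ → ℝ}
    (h : ∀ i ∈ s, IntervalIntegrable (f i) volume a b) :
    IntervalIntegrable (fun c => ∑ i ∈ s, f i c) volume a b := by
  have := IntervalIntegrable.sum s h
  have he : (∑ i ∈ s, f i) = fun c => ∑ i ∈ s, f i c := by
    funext c; simp [Finset.sum_apply]
  rwa [he] at this

/-- expansion of the inner (c-)integral -/
lemma inner_eq {n : ℕ} (x : Fin n → ℝ) (A : Finset (Fin n)) {l : ℝ}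
    (hl0 : 0 ≤ l) (hl1 : l ≤ 1) :
    ∫ c in (0:ℝ)..1, (∑ i ∈ A, (chi (x i) c l - l))^2
      = ∑ i ∈ A, ∑ j ∈ A,
          (max (l - Int.fract (x i - x j)) 0 + max (l - 1 + Int.fract (x i - x j)) 0 - l^2) := by
  have hint : ∀ i j : Fin n,
      IntervalIntegrable (fun c => (chi (x i) c l - l) * (chi (x j) c l - l)) volume 0 1 := by
    intro i j
    refine intInt_of_bdd (C := 4) (((measurable_chi _ l).sub measurable_const).mul
      ((measurable_chi _ l).sub measurable_const)) (fun c => ?_)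
    rw [abs_mul]
    have h1 : |chi (x i) c l - l| ≤ 2 := by
      have := chi_abs_le (x i) c l; rw [abs_le] at *
      constructor <;> [linarith [this.1]; linarith [this.2]]
    have h2 : |chi (x j) c l - l| ≤ 2 := by
      have := chi_abs_le (x j) c l; rw [abs_le] at *
      constructor <;> [linarith [this.1]; linarith [this.2]]
    calc |chi (x i) c l - l| * |chi (x j) c l - l| ≤ 2 * 2 :=
          mul_le_mul h1 h2 (abs_nonneg _) (by norm_num)
      _ = 4 := by norm_num
  have hexp : (fun c => (∑ i ∈ A, (chi (x i) c l - l))^2)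
      = fun c => ∑ i ∈ A, ∑ j ∈ A, ((chi (x i) c l - l) * (chi (x j) c l - l)) := by
    funext c
    rw [sq, Finset.sum_mul_sum]
  rw [hexp, intervalIntegral.integral_finset_sum
    (fun i _ => intInt_sum _ (fun j _ => hint i j))]
  refine Finset.sum_congr rfl fun i _ => ?_
  rw [intervalIntegral.integral_finset_sum (fun j _ => hint i j)]
  refine Finset.sum_congr rfl fun j _ => ?_
  have hfe : (fun c => (chi (x i) c l - l) * (chi (x j) c l - l))
      = fun c => chi (x i) c l * chi (x j) c l - l * chi (x i) c l - l * chi (x j) c l + l * l := by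
    funext c; ring
  rw [hfe]
  rw [integral_add (((chi_chi_intInt _ _ _ _ _).sub ((chi_intInt _ _ _ _).const_mul l)).sub
      ((chi_intInt _ _ _ _).const_mul l)) intervalIntegrable_const,
    integral_sub ((chi_chi_intInt _ _ _ _ _).sub ((chi_intInt _ _ _ _).const_mul l))
      ((chi_intInt _ _ _ _).const_mul l),
    integral_sub (chi_chi_intInt _ _ _ _ _) ((chi_intInt _ _ _ _).const_mul l),
    intervalIntegral.integral_const_mul, intervalIntegral.integral_const_mul, core1 _ hl0 hl1, core1 _ hl0 hl1,
    core2 _ _ hl0 hl1, intervalIntegral.integral_const]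
  simp only [smul_eq_mul]
  ring

lemma term_cont (d : ℝ) :
    Continuous (fun l : ℝ => max (l - d) 0 + max (l - 1 + d) 0 - l^2) := by
  refine Continuous.sub (Continuous.add ?_ ?_) (continuous_pow 2) <;>
    exact Continuous.max (by continuity) continuous_const

/-- the outer (ℓ-)integral of the expanded sum -/
lemma psi_eq {n : ℕ} (x : Fin n → ℝ) (A : Finset (Fin n)) :
    ∫ l in (0:ℝ)..1, (∑ i ∈ A, ∑ j ∈ A,
        (max (l - Int.fract (x i - x j)) 0 + max (l - 1 + Int.fract (x i - x j)) 0 - l^2))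
      = ∑ i ∈ A, ∑ j ∈ A, bb (x i - x j) := by
  rw [intervalIntegral.integral_finset_sum (fun i _ => intInt_sum _
    (fun j _ => (term_cont _).intervalIntegrable _ _))]
  refine Finset.sum_congr rfl fun i _ => ?_
  rw [intervalIntegral.integral_finset_sum (fun j _ => (term_cont _).intervalIntegrable _ _)]
  exact Finset.sum_congr rfl fun j _ => core_beta _ _

lemma int_trick (p : ℕ) (a : ℤ) : 0 ≤ ((p:ℝ) - a) * ((p:ℝ) - a - 1) := by
  rcases le_or_gt (p:ℤ) a with h | h
  · have h' : (p:ℝ) ≤ a := by exact_mod_cast h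
    nlinarith
  · have h' : (a:ℝ) + 1 ≤ p := by exact_mod_cast h
    have := mul_nonneg (by linarith : (0:ℝ) ≤ (p:ℝ) - a) (by linarith : (0:ℝ) ≤ (p:ℝ) - a - 1)
    linarith

/-- lower bound for the c-integral of the squared discrepancy -/
lemma inner_lower {n : ℕ} (x : Fin n → ℝ) (A : Finset (Fin n)) {l : ℝ}
    (hl0 : 0 ≤ l) (hl1 : l ≤ 1) :
    Int.fract ((A.card : ℝ) * l) - Int.fract ((A.card : ℝ) * l)^2
      ≤ ∫ c in (0:ℝ)..1, (∑ i ∈ A, (chi (x i) c l - l))^2 := by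
  set m : ℝ := (A.card : ℝ) with hm
  set a : ℤ := ⌊m * l⌋ with ha
  have hDD2int : IntervalIntegrable (fun c => (∑ i ∈ A, (chi (x i) c l - l))^2) volume 0 1 := by
    refine intInt_of_bdd (C := (2*n)^2) ((measurable_DD x A l).pow_const 2) (fun c => ?_)
    rw [abs_pow]
    exact pow_le_pow_left₀ (abs_nonneg _) (DD_abs_le x A c hl0 hl1) 2
  have hNNint : IntervalIntegrable (fun c => ∑ i ∈ A, chi (x i) c l) volume 0 1 :=
    intInt_sum _ (fun i _ => chi_intInt _ _ _ _)
  have hlin : ∫ c in (0:ℝ)..1,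
      ((2*(a:ℝ)+1-2*m*l) * (∑ i ∈ A, chi (x i) c l) + ((m*l)^2 - (a:ℝ)^2 - a))
      = (2*(a:ℝ)+1-2*m*l) * (m*l) + ((m*l)^2 - (a:ℝ)^2 - a) := by
    rw [integral_add (hNNint.const_mul _) intervalIntegrable_const, intervalIntegral.integral_const_mul,
      intervalIntegral.integral_finset_sum (fun i _ => chi_intInt _ _ _ _)]
    have : ∀ i ∈ A, ∫ c in (0:ℝ)..1, chi (x i) c l = l := fun i _ => core1 _ hl0 hl1
    rw [Finset.sum_congr rfl this, Finset.sum_const, intervalIntegral.integral_const]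
    simp only [smul_eq_mul, nsmul_eq_mul]
    rw [hm]; ring
  have hmono : ∫ c in (0:ℝ)..1,
      ((2*(a:ℝ)+1-2*m*l) * (∑ i ∈ A, chi (x i) c l) + ((m*l)^2 - (a:ℝ)^2 - a))
      ≤ ∫ c in (0:ℝ)..1, (∑ i ∈ A, (chi (x i) c l - l))^2 := by
    refine integral_mono_on (by norm_num)
      ((hNNint.const_mul _).add intervalIntegrable_const) hDD2int (fun c _ => ?_)
    have hcard : ∑ i ∈ A, chi (x i) c l
        = ((A.filter (fun i => Int.fract (x i - c) < l)).card : ℝ) := sum_chi_card x A c l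
    have hDD : ∑ i ∈ A, (chi (x i) c l - l) = (∑ i ∈ A, chi (x i) c l) - m * l := by
      rw [Finset.sum_sub_distrib, Finset.sum_const, hm]
      push_cast; ring
    set p : ℕ := (A.filter (fun i => Int.fract (x i - c) < l)).card with hp
    have htrick := int_trick p a
    rw [hDD, hcard]
    nlinarith [htrick]
  have hq : Int.fract (m*l) = m*l - a := by rw [Int.fract, ha]
  calc Int.fract (m*l) - Int.fract (m*l)^2
      = (2*(a:ℝ)+1-2*m*l) * (m*l) + ((m*l)^2 - (a:ℝ)^2 - a) := by rw [hq]; ring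
    _ ≤ _ := by rw [← hlin] at *; exact hmono

lemma bb_intInt (a b : ℝ) : IntervalIntegrable bb volume a b :=
  intInt_of_bdd measurable_bb bb_abs_le

lemma bb_int01 : ∫ x in (0:ℝ)..1, bb x = 0 := by
  have h1 : ∀ᵐ (c : ℝ), c ≠ 1 := by
    rw [MeasureTheory.ae_iff]
    have : {c : ℝ | ¬ c ≠ 1} = {1} := by ext c; simp
    rw [this]
    exact Real.volume_singleton
  rw [intervalIntegral.integral_congr_ae (g := fun c => c^2 - c + 1/6) ?_]
  · rw [integral_add ((intervalIntegrable_pow 2).sub intervalIntegrable_id)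
      intervalIntegrable_const,
      integral_sub (intervalIntegrable_pow 2) intervalIntegrable_id, integral_pow, integral_id,
      intervalIntegral.integral_const]
    norm_num
  · filter_upwards [h1] with c hc hmem
    rw [Set.uIoc_of_le (by norm_num : (0:ℝ) ≤ 1)] at hmem
    unfold bb
    rw [Int.fract_eq_self.mpr ⟨hmem.1.le, lt_of_le_of_ne hmem.2 hc⟩]

lemma bb_int_zsmul (z : ℤ) : ∫ x in (0:ℝ)..(z:ℝ), bb x = 0 := by
  have := bb_periodic.intervalIntegral_add_zsmul_eq z 0 (fun a b => bb_intInt a b)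
  simp only [zero_add, zsmul_eq_mul, mul_one] at this
  rw [this, bb_int01, mul_zero]

lemma F_abs_le (x : ℝ) : |∫ u in (0:ℝ)..x, bb u| ≤ 1/6 := by
  have h2 : ∫ u in Int.fract x..x, bb u = 0 := by
    have hx : x = Int.fract x + (⌊x⌋ : ℤ) • (1:ℝ) := by
      rw [Int.fract, zsmul_eq_mul]; ring
    rw [show (∫ u in Int.fract x..x, bb u) = ∫ u in Int.fract x..(Int.fract x + (⌊x⌋:ℤ) • (1:ℝ)),
        bb u by rw [← hx],
      bb_periodic.intervalIntegral_add_zsmul_eq ⌊x⌋ (Int.fract x) (fun a b => bb_intInt a b),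
      bb_periodic.intervalIntegral_add_eq (Int.fract x) 0, zero_add, bb_int01, smul_zero]
  have hsplit : ∫ u in (0:ℝ)..x, bb u
      = (∫ u in (0:ℝ)..Int.fract x, bb u) + ∫ u in Int.fract x..x, bb u :=
    (integral_add_adjacent_intervals (bb_intInt _ _) (bb_intInt _ _)).symm
  have h3 : |∫ u in (0:ℝ)..Int.fract x, bb u| ≤ 1/6 := by
    have := intervalIntegral.norm_integral_le_of_norm_le_const (C := 1/6)
      (f := bb) (a := 0) (b := Int.fract x) (fun u _ => by
        rw [Real.norm_eq_abs]; exact bb_abs_le u)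
    rw [Real.norm_eq_abs] at this
    have hb : |Int.fract x - 0| ≤ 1 := by
      rw [sub_zero, abs_of_nonneg (Int.fract_nonneg x)]
      exact (Int.fract_lt_one x).le
    calc |∫ u in (0:ℝ)..Int.fract x, bb u| ≤ 1/6 * |Int.fract x - 0| := this
      _ ≤ 1/6 * 1 := by nlinarith [abs_nonneg (Int.fract x - 0)]
      _ = 1/6 := by norm_num
  rw [hsplit, h2, add_zero]
  exact h3

lemma F_diff_abs_le (a b : ℝ) : |∫ u in a..b, bb u| ≤ 1/3 := by
  have : ∫ u in a..b, bb u = (∫ u in (0:ℝ)..b, bb u) - ∫ u in (0:ℝ)..a, bb u :=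
    (intervalIntegral.integral_interval_sub_left (bb_intInt _ _) (bb_intInt _ _)).symm
  rw [this]
  have h1 := F_abs_le b
  have h2 := F_abs_le a
  calc |(∫ u in (0:ℝ)..b, bb u) - ∫ u in (0:ℝ)..a, bb u|
      ≤ |∫ u in (0:ℝ)..b, bb u| + |∫ u in (0:ℝ)..a, bb u| := abs_sub _ _
    _ ≤ 1/3 := by linarith

lemma time_avg_bound (d w' : ℝ) (hw : w' ≠ 0) (T : ℝ) :
    |∫ t in (0:ℝ)..T, bb (d + w' * t)| ≤ 1/(3*|w'|) := by
  rw [intervalIntegral.integral_comp_add_mul bb hw d]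
  rw [smul_eq_mul, abs_mul, abs_inv]
  have h := F_diff_abs_le (d + w' * 0) (d + w' * T)
  have hpos : 0 < |w'| := abs_pos.mpr hw
  have hinv := (inv_pos.mpr hpos).le
  have hstep : |w'|⁻¹ * |∫ x in (d + w'*0)..(d + w'*T), bb x| ≤ |w'|⁻¹ * (1/3) := by nlinarith
  refine hstep.trans (le_of_eq ?_)
  field_simp

lemma bb_mul_int (m : ℕ) (hm : 0 < m) : ∫ l in (0:ℝ)..1, bb ((m:ℝ) * l) = 0 := by
  have hm' : (m:ℝ) ≠ 0 := by positivity
  rw [intervalIntegral.integral_comp_mul_left bb hm']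
  have : ((m:ℝ) * 1) = ((m:ℤ):ℝ) := by push_cast; ring
  rw [mul_zero, this, bb_int_zsmul, smul_zero]

/-- Key class lemma: each class contributes at least 1/6 -/
lemma classC {n : ℕ} (x : Fin n → ℝ) (A : Finset (Fin n)) (hA : A.Nonempty) :
    (1:ℝ)/6 ≤ ∑ i ∈ A, ∑ j ∈ A, bb (x i - x j) := by
  rw [← psi_eq x A]
  have hfr : IntervalIntegrable
      (fun l => Int.fract ((A.card:ℝ) * l) - Int.fract ((A.card:ℝ) * l)^2) volume 0 1 := by
    refine intInt_of_bdd (C := 2) ?_ (fun l => ?_)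
    · exact (measurable_fract.comp (measurable_const.mul measurable_id)).sub
        ((measurable_fract.comp (measurable_const.mul measurable_id)).pow_const 2)
    · have h0 := Int.fract_nonneg ((A.card:ℝ) * l)
      have h1 := Int.fract_lt_one ((A.card:ℝ) * l)
      rw [abs_le]
      constructor <;> nlinarith
  have hRRint : IntervalIntegrable (fun l => ∑ i ∈ A, ∑ j ∈ A,
      (max (l - Int.fract (x i - x j)) 0 + max (l - 1 + Int.fract (x i - x j)) 0 - l^2))
      volume 0 1 :=
    intInt_sum _ (fun i _ => intInt_sum _ (fun j _ => (term_cont _).intervalIntegrable _ _))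
  have hmono : ∫ l in (0:ℝ)..1,
      (Int.fract ((A.card:ℝ) * l) - Int.fract ((A.card:ℝ) * l)^2)
      ≤ ∫ l in (0:ℝ)..1, (∑ i ∈ A, ∑ j ∈ A,
        (max (l - Int.fract (x i - x j)) 0 + max (l - 1 + Int.fract (x i - x j)) 0 - l^2)) := by
    refine integral_mono_on (by norm_num) hfr hRRint (fun l hl => ?_)
    have := inner_lower x A hl.1 hl.2
    rwa [inner_eq x A hl.1 hl.2] at this
  refine le_trans (le_of_eq ?_) hmono
  have heq : (fun l => Int.fract ((A.card:ℝ) * l) - Int.fract ((A.card:ℝ) * l)^2)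
      = fun l => 1/6 - bb ((A.card:ℝ) * l) := by
    funext l; unfold bb; ring
  have hbbml : IntervalIntegrable (fun l => bb ((A.card:ℝ) * l)) volume 0 1 :=
    intInt_of_bdd (C := 1/6) (measurable_bb.comp (measurable_const.mul measurable_id))
      (fun l => bb_abs_le _)
  rw [heq, integral_sub intervalIntegrable_const hbbml,
    bb_mul_int A.card (Finset.card_pos.mpr hA), intervalIntegral.integral_const]
  norm_num

lemma fract_fract_sub_left (u c : ℝ) : Int.fract (Int.fract u - c) = Int.fract (u - c) := by
  rw [show Int.fract u - c = (u - c) - (⌊u⌋ : ℝ) by rw [Int.fract]; ring]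
  exact_mod_cast Int.fract_sub_intCast (u - c) ⌊u⌋

lemma bias_bdd (n : ℕ) (r : Fin n → ℝ) : BddAbove {x : ℝ | ∃ a b : ℝ, 0 ≤ a ∧ a ≤ b ∧ b ≤ 1 ∧
    x = |((Finset.univ.filter
        (fun i : Fin n => a ≤ Int.fract (r i) ∧ Int.fract (r i) ≤ b)).card : ℝ) - n * (b - a)|} := by
  refine ⟨2*n, fun X hX => ?_⟩
  obtain ⟨a, b, h0, hab, hb, rfl⟩ := hX
  have hcard : ((Finset.univ.filter
      (fun i : Fin n => a ≤ Int.fract (r i) ∧ Int.fract (r i) ≤ b)).card : ℝ) ≤ n := by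
    have h := Finset.card_filter_le (Finset.univ : Finset (Fin n))
      (fun i => a ≤ Int.fract (r i) ∧ Int.fract (r i) ≤ b)
    have h2 : (Finset.univ : Finset (Fin n)).card = n := by simp
    exact_mod_cast h2 ▸ h
  have hpos : (0:ℝ) ≤ ((Finset.univ.filter
      (fun i : Fin n => a ≤ Int.fract (r i) ∧ Int.fract (r i) ≤ b)).card : ℝ) := by positivity
  have hn0 : (0:ℝ) ≤ (n:ℝ) := Nat.cast_nonneg n
  rw [abs_le]
  constructor <;> nlinarith

lemma bias_ge (n : ℕ) (r : Fin n → ℝ) {a b : ℝ} (h0 : 0 ≤ a) (hab : a ≤ b) (hb : b ≤ 1) :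
    |((Finset.univ.filter
        (fun i : Fin n => a ≤ Int.fract (r i) ∧ Int.fract (r i) ≤ b)).card : ℝ) - n * (b - a)|
      ≤ bias n r :=
  le_csSup (bias_bdd n r) ⟨a, b, h0, hab, hb, rfl⟩

lemma bias_nonneg (n : ℕ) (r : Fin n → ℝ) : 0 ≤ bias n r :=
  le_trans (abs_nonneg _) (bias_ge n r le_rfl le_rfl zero_le_one)

lemma eps_le {B P : ℝ} (n : ℕ) {l0 : ℝ} (hl0 : 0 < l0)
    (h : ∀ ε : ℝ, 0 < ε → ε ≤ l0 → P - (n:ℝ) * ε ≤ B) : P ≤ B := by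
  by_contra hc
  push_neg at hc
  set δ := P - B with hδ
  have hδpos : 0 < δ := by simp only [hδ]; linarith
  have hn : (0:ℝ) ≤ n := Nat.cast_nonneg n
  have hn1 : (0:ℝ) < (n:ℝ) + 1 := by linarith
  have hεpos : 0 < min l0 (δ/((n:ℝ)+1)) := lt_min hl0 (by positivity)
  have h1 := h _ hεpos (min_le_left _ _)
  have h2 : (n:ℝ) * min l0 (δ/((n:ℝ)+1)) ≤ (n:ℝ) * (δ/((n:ℝ)+1)) :=
    mul_le_mul_of_nonneg_left (min_le_right _ _) hn
  have h3 : (n:ℝ) * (δ/((n:ℝ)+1)) < δ := by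
    rw [mul_div_assoc']
    rw [div_lt_iff₀ hn1]
    nlinarith
  simp only [hδ] at h1 h2 h3
  linarith

/-- Lemma B : the arc-count discrepancy is at most the bias, for c ∈ [0,1), l ∈ [0,1]. -/
lemma lemB {n : ℕ} (r : Fin n → ℝ) {c l : ℝ} (hc0 : 0 ≤ c) (hc1 : c < 1)
    (hl0 : 0 ≤ l) (hl1 : l ≤ 1) :
    |((Finset.univ.filter (fun i : Fin n => Int.fract (r i - c) < l)).card : ℝ) - n * l|
      ≤ bias n r := by
  have hf0 : ∀ i, 0 ≤ Int.fract (r i) := fun i => Int.fract_nonneg _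
  have hf1 : ∀ i, Int.fract (r i) < 1 := fun i => Int.fract_lt_one _
  have hfr : ∀ i, Int.fract (r i - c) = Int.fract (Int.fract (r i) - c) := fun i =>
    (fract_fract_sub_left (r i) c).symm
  rcases eq_or_lt_of_le hl1 with hleq | hllt
  · -- l = 1 : all points counted
    have hall : (Finset.univ.filter (fun i : Fin n => Int.fract (r i - c) < l)) = Finset.univ := by
      refine Finset.filter_true_of_mem (fun i _ => ?_)
      rw [hleq]; exact Int.fract_lt_one _
    rw [hall, hleq]
    simp only [Finset.card_univ, Fintype.card_fin, mul_one, sub_self, abs_zero]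
    exact bias_nonneg n r
  · rcases le_or_gt (c + l) 1 with hcl | hcl
    · -- non-wrapping case
      have hNeq : (Finset.univ.filter (fun i : Fin n => Int.fract (r i - c) < l))
          = (Finset.univ.filter (fun i : Fin n =>
              c ≤ Int.fract (r i) ∧ Int.fract (r i) < c + l)) := by
        refine Finset.filter_congr (fun i _ => ?_)
        rw [hfr i]
        rcases le_or_gt c (Int.fract (r i)) with hcf | hcf
        · rw [Int.fract_eq_self.mpr ⟨by linarith [hf0 i], by linarith [hf1 i]⟩]
          constructor
          · intro h; exact ⟨hcf, by linarith⟩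
          · intro h; linarith [h.2]
        · rw [fract_neg_seg (by linarith [hf0 i]) (by linarith)]
          constructor
          · intro h; exact absurd h (not_lt.mpr (by linarith [hf0 i]))
          · intro h; exact absurd h.1 (not_le.mpr hcf)
      set N := ((Finset.univ.filter (fun i : Fin n => Int.fract (r i - c) < l)).card : ℝ) with hN
      rcases le_or_gt ((n:ℝ) * l) N with hge | hlt
      · -- take the closed interval [c, c+l]
        have hsub := Finset.monotone_filter_right (Finset.univ : Finset (Fin n))
          (fun i _ (h : c ≤ Int.fract (r i) ∧ Int.fract (r i) < c + l) =>
            (⟨h.1, h.2.le⟩ : c ≤ Int.fract (r i) ∧ Int.fract (r i) ≤ c + l))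
        have hXN : N ≤ ((Finset.univ.filter (fun i : Fin n =>
            c ≤ Int.fract (r i) ∧ Int.fract (r i) ≤ c + l)).card : ℝ) := by
          rw [hN, hNeq]; exact_mod_cast Finset.card_le_card hsub
        have hbias := bias_ge n r hc0 (by linarith : c ≤ c + l) hcl
        calc |N - n * l| = N - n * l := abs_of_nonneg (by linarith)
          _ ≤ ((Finset.univ.filter (fun i : Fin n =>
              c ≤ Int.fract (r i) ∧ Int.fract (r i) ≤ c + l)).card : ℝ) - n * (c + l - c) := by
              rw [show c + l - c = l by ring]; linarith
          _ ≤ |((Finset.univ.filter (fun i : Fin n =>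
              c ≤ Int.fract (r i) ∧ Int.fract (r i) ≤ c + l)).card : ℝ) - n * (c + l - c)| :=
              le_abs_self _
          _ ≤ bias n r := hbias
      · -- shrink the interval: [c, c+l-ε]
        have hlpos : 0 < l := by
          rcases eq_or_lt_of_le hl0 with h | h
          · exfalso; rw [← h] at hlt; simp at hlt; linarith [Finset.card_filter_le
              (Finset.univ : Finset (Fin n)) (fun i : Fin n => Int.fract (r i - c) < l)]
          · exact h
        rw [abs_of_nonpos (by linarith)]
        refine eps_le n hlpos (fun ε hε0 hεl => ?_)
        have hsub2 := Finset.monotone_filter_right (Finset.univ : Finset (Fin n))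
          (fun i _ (h : c ≤ Int.fract (r i) ∧ Int.fract (r i) ≤ c + l - ε) =>
            (⟨h.1, by linarith [h.2]⟩ : c ≤ Int.fract (r i) ∧ Int.fract (r i) < c + l))
        have hXN : ((Finset.univ.filter (fun i : Fin n =>
            c ≤ Int.fract (r i) ∧ Int.fract (r i) ≤ c + l - ε)).card : ℝ) ≤ N := by
          rw [hN, hNeq]; exact_mod_cast Finset.card_le_card hsub2
        have hbias := bias_ge n r hc0 (by linarith : c ≤ c + l - ε) (by linarith)
        have habs : (n:ℝ) * (c + l - ε - c) - ((Finset.univ.filter (fun i : Fin n =>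
            c ≤ Int.fract (r i) ∧ Int.fract (r i) ≤ c + l - ε)).card : ℝ)
            ≤ |((Finset.univ.filter (fun i : Fin n =>
              c ≤ Int.fract (r i) ∧ Int.fract (r i) ≤ c + l - ε)).card : ℝ)
              - n * (c + l - ε - c)| := by
          rw [abs_sub_comm]; exact le_abs_self _
        have := le_trans habs hbias
        have hn : (0:ℝ) ≤ (n:ℝ) := Nat.cast_nonneg n
        nlinarith [this]
    · -- wrapping case
      set b' := c + l - 1 with hb'
      have hb'0 : 0 ≤ b' := by simp only [hb']; linarith
      have hb'c : b' < c := by simp only [hb']; linarith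
      have hcompl : ∀ i : Fin n, ¬ (Int.fract (r i - c) < l)
          ↔ (b' ≤ Int.fract (r i) ∧ Int.fract (r i) < c) := by
        intro i
        rw [hfr i]
        rcases le_or_gt c (Int.fract (r i)) with hcf | hcf
        · rw [Int.fract_eq_self.mpr ⟨by linarith [hf0 i], by linarith [hf1 i]⟩]
          constructor
          · intro h; exact absurd (by linarith [hf1 i] : Int.fract (r i) - c < l) h
          · intro h; linarith [h.2]
        · rw [fract_neg_seg (by linarith [hf0 i]) (by linarith)]
          constructor
          · intro h
            push_neg at h
            exact ⟨by simp only [hb']; linarith, hcf⟩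
          · intro h; simp only [hb'] at h; push_neg; linarith [h.1]
      set N := ((Finset.univ.filter (fun i : Fin n => Int.fract (r i - c) < l)).card : ℝ) with hN
      set M := ((Finset.univ.filter (fun i : Fin n =>
          b' ≤ Int.fract (r i) ∧ Int.fract (r i) < c)).card : ℝ) with hM
      have hNM : N + M = n := by
        have := Finset.card_filter_add_card_filter_not
          (s := (Finset.univ : Finset (Fin n)))
          (p := fun i : Fin n => Int.fract (r i - c) < l)
        have hre : (Finset.univ.filter (fun i : Fin n => ¬ Int.fract (r i - c) < l))
            = (Finset.univ.filter (fun i : Fin n =>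
                b' ≤ Int.fract (r i) ∧ Int.fract (r i) < c)) :=
          Finset.filter_congr (fun i _ => hcompl i)
        rw [hre] at this
        rw [hN, hM]
        exact_mod_cast (by simpa using this)
      have hkey : |N - n * l| = |M - n * (c - b')| := by
        have h1 : c - b' = 1 - l := by simp only [hb']; ring
        have h2 : M = n - N := by linarith
        rw [h1, h2, show (n:ℝ) - N - (n:ℝ) * (1 - l) = -(N - n*l) by ring, abs_neg]
      rw [hkey]
      rcases le_or_gt ((n:ℝ) * (c - b')) M with hge | hlt
      · have hsub := Finset.monotone_filter_right (Finset.univ : Finset (Fin n))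
          (fun i _ (h : b' ≤ Int.fract (r i) ∧ Int.fract (r i) < c) =>
            (⟨h.1, h.2.le⟩ : b' ≤ Int.fract (r i) ∧ Int.fract (r i) ≤ c))
        have hXM : M ≤ ((Finset.univ.filter (fun i : Fin n =>
            b' ≤ Int.fract (r i) ∧ Int.fract (r i) ≤ c)).card : ℝ) := by
          rw [hM]; exact_mod_cast Finset.card_le_card hsub
        have hbias := bias_ge n r hb'0 hb'c.le hc1.le
        calc |M - n * (c - b')| = M - n * (c - b') := abs_of_nonneg (by linarith)
          _ ≤ ((Finset.univ.filter (fun i : Fin n =>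
              b' ≤ Int.fract (r i) ∧ Int.fract (r i) ≤ c)).card : ℝ) - n * (c - b') := by linarith
          _ ≤ |((Finset.univ.filter (fun i : Fin n =>
              b' ≤ Int.fract (r i) ∧ Int.fract (r i) ≤ c)).card : ℝ) - n * (c - b')| :=
              le_abs_self _
          _ ≤ bias n r := hbias
      · have hgap : 0 < c - b' := by linarith
        rw [abs_of_nonpos (by linarith)]
        refine eps_le n hgap (fun ε hε0 hεl => ?_)
        have hsub2 := Finset.monotone_filter_right (Finset.univ : Finset (Fin n))
          (fun i _ (h : b' ≤ Int.fract (r i) ∧ Int.fract (r i) ≤ c - ε) =>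
            (⟨h.1, by linarith [h.2]⟩ : b' ≤ Int.fract (r i) ∧ Int.fract (r i) < c))
        have hXM : ((Finset.univ.filter (fun i : Fin n =>
            b' ≤ Int.fract (r i) ∧ Int.fract (r i) ≤ c - ε)).card : ℝ) ≤ M := by
          rw [hM]; exact_mod_cast Finset.card_le_card hsub2
        have hbias := bias_ge n r hb'0 (by linarith : b' ≤ c - ε) (by linarith)
        have habs : (n:ℝ) * (c - ε - b') - ((Finset.univ.filter (fun i : Fin n =>
            b' ≤ Int.fract (r i) ∧ Int.fract (r i) ≤ c - ε)).card : ℝ)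
            ≤ |((Finset.univ.filter (fun i : Fin n =>
              b' ≤ Int.fract (r i) ∧ Int.fract (r i) ≤ c - ε)).card : ℝ)
              - n * (c - ε - b')| := by
          rw [abs_sub_comm]; exact le_abs_self _
        have := le_trans habs hbias
        nlinarith [this]

/-- Key 1 : the double sum of bb is at most bias squared -/
lemma key1 {n : ℕ} (r : Fin n → ℝ) :
    ∑ i : Fin n, ∑ j : Fin n, bb (r i - r j) ≤ (bias n r)^2 := by
  rw [← psi_eq r Finset.univ]
  have hRRint : IntervalIntegrable (fun l => ∑ i : Fin n, ∑ j : Fin n,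
      (max (l - Int.fract (r i - r j)) 0 + max (l - 1 + Int.fract (r i - r j)) 0 - l^2))
      volume 0 1 :=
    intInt_sum _ (fun i _ => intInt_sum _ (fun j _ => (term_cont _).intervalIntegrable _ _))
  have hmain : ∀ l ∈ Set.Icc (0:ℝ) 1, (∑ i : Fin n, ∑ j : Fin n,
      (max (l - Int.fract (r i - r j)) 0 + max (l - 1 + Int.fract (r i - r j)) 0 - l^2))
      ≤ (bias n r)^2 := by
    intro l hl
    rw [← inner_eq r Finset.univ hl.1 hl.2]
    have hDD2int : IntervalIntegrable
        (fun c => (∑ i : Fin n, (chi (r i) c l - l))^2) volume 0 1 := by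
      refine intInt_of_bdd (C := (2*n)^2) ((measurable_DD r Finset.univ l).pow_const 2)
        (fun c => ?_)
      rw [abs_pow]
      exact pow_le_pow_left₀ (abs_nonneg _) (DD_abs_le r Finset.univ c hl.1 hl.2) 2
    have hae : (fun c => (∑ i : Fin n, (chi (r i) c l - l))^2)
        ≤ᵐ[MeasureSpace.volume.restrict (Set.Icc (0:ℝ) 1)] (fun _ => (bias n r)^2) := by
      have hae1 : ∀ᵐ c ∂(MeasureSpace.volume.restrict (Set.Icc (0:ℝ) 1)), c ≠ 1 := by
        refine (MeasureTheory.ae_iff).mpr ?_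
        have hset : {c : ℝ | ¬ c ≠ 1} = {1} := by ext; simp
        rw [hset, Measure.restrict_apply (measurableSet_singleton _)]
        exact measure_mono_null Set.inter_subset_left Real.volume_singleton
      have hae2 : ∀ᵐ c ∂(MeasureSpace.volume.restrict (Set.Icc (0:ℝ) 1)),
          c ∈ Set.Icc (0:ℝ) 1 := ae_restrict_mem measurableSet_Icc
      filter_upwards [hae1, hae2] with c hne hmem
      have hb := lemB r (c := c) (l := l) hmem.1 (lt_of_le_of_ne hmem.2 hne) hl.1 hl.2
      have hDD : ∑ i : Fin n, (chi (r i) c l - l)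
          = ((Finset.univ.filter (fun i : Fin n => Int.fract (r i - c) < l)).card : ℝ)
            - n * l := by
        rw [Finset.sum_sub_distrib, sum_chi_card r Finset.univ c l, Finset.sum_const,
          Finset.card_univ, Fintype.card_fin, nsmul_eq_mul]
      calc (∑ i : Fin n, (chi (r i) c l - l))^2 = |∑ i : Fin n, (chi (r i) c l - l)|^2 :=
            (sq_abs _).symm
        _ ≤ (bias n r)^2 := by
            refine pow_le_pow_left₀ (abs_nonneg _) ?_ 2
            rw [hDD]; exact hb
    have := intervalIntegral.integral_mono_ae_restrict (by norm_num : (0:ℝ) ≤ 1) hDD2int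
      intervalIntegrable_const hae
    calc ∫ c in (0:ℝ)..1, (∑ i : Fin n, (chi (r i) c l - l))^2
        ≤ ∫ _c in (0:ℝ)..1, (bias n r)^2 := this
      _ = (bias n r)^2 := by rw [intervalIntegral.integral_const]; simp
  have := integral_mono_on (by norm_num : (0:ℝ) ≤ 1) hRRint intervalIntegrable_const hmain
  calc ∫ l in (0:ℝ)..1, (∑ i : Fin n, ∑ j : Fin n,
        (max (l - Int.fract (r i - r j)) 0 + max (l - 1 + Int.fract (r i - r j)) 0 - l^2))
      ≤ ∫ _l in (0:ℝ)..1, (bias n r)^2 := this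
    _ = (bias n r)^2 := by rw [intervalIntegral.integral_const]; simp


/-- Theorem 1 (main theorem on runners): if `k` of the speeds `v₁,…,vₙ` are distinct, then
at some time `t` the bias of the runners' positions is at least `√(k/12)`. -/
theorem stmt0 (n : ℕ) (s v : Fin n → ℝ) (hs : ∀ i, s i ∈ Set.Ico (0 : ℝ) 1)
    (k : ℕ) (hk : k = (Finset.univ.image v).card) :
    ∃ t : ℝ, Real.sqrt (k / 12) ≤ bias n (fun i => s i + v i * t) := by
  rcases Nat.eq_zero_or_pos n with hn | hn
  · subst hn
    refine ⟨0, ?_⟩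
    have hk0 : k = 0 := by simp [hk]
    rw [hk0]
    simpa using bias_nonneg 0 _
  · by_contra hcon
    push_neg at hcon
    -- the two-variable double sum function of time
    set Phi : ℝ → ℝ :=
      fun t => ∑ i : Fin n, ∑ j : Fin n, bb ((s i - s j) + (v i - v j) * t) with hPhidef
    have hPhiBias : ∀ t : ℝ, Phi t ≤ (bias n (fun i => s i + v i * t))^2 := by
      intro t
      have he : Phi t = ∑ i : Fin n, ∑ j : Fin n,
          bb ((fun i => s i + v i * t) i - (fun i => s i + v i * t) j) := by
        refine Finset.sum_congr rfl fun i _ => Finset.sum_congr rfl fun j _ => ?_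
        congr 1
        ring
      rw [he]
      exact key1 _
    have hk1 : (1:ℝ) ≤ (k:ℝ) := by
      have : 0 < (Finset.univ.image v).card := by
        refine Finset.card_pos.mpr (Finset.image_nonempty.mpr ?_)
        exact Finset.univ_nonempty_iff.mpr (Fin.pos_iff_nonempty.mp hn)
      rw [hk]
      exact_mod_cast this
    -- the constant S0 and its lower bound k/6
    set S0 : ℝ := ∑ i : Fin n, ∑ j : Fin n,
      (if v i = v j then bb (s i - s j) else 0) with hS0def
    have hS0 : (k:ℝ)/6 ≤ S0 := by
      have hregroup : S0 = ∑ y ∈ Finset.univ.image v,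
          ∑ i ∈ Finset.univ.filter (fun i => v i = y),
            ∑ j ∈ Finset.univ.filter (fun j => v j = y), bb (s i - s j) := by
        rw [hS0def, ← Finset.sum_fiberwise_of_maps_to (g := v) (t := Finset.univ.image v)
          (fun i _ => Finset.mem_image_of_mem v (Finset.mem_univ i))
          (fun i => ∑ j : Fin n, (if v i = v j then bb (s i - s j) else 0))]
        refine Finset.sum_congr rfl fun y _ => Finset.sum_congr rfl fun i hi => ?_
        have hiy : v i = y := (Finset.mem_filter.mp hi).2
        rw [Finset.sum_filter]
        refine Finset.sum_congr rfl fun j _ => ?_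
        by_cases hj : v j = y
        · rw [if_pos hj, if_pos (by rw [hiy, hj])]
        · rw [if_neg hj, if_neg (by rw [hiy]; exact fun h => hj h.symm)]
      have hclass : ∀ y ∈ Finset.univ.image v, (1:ℝ)/6
          ≤ ∑ i ∈ Finset.univ.filter (fun i => v i = y),
              ∑ j ∈ Finset.univ.filter (fun j => v j = y), bb (s i - s j) := by
        intro y hy
        obtain ⟨i, _, hiv⟩ := Finset.mem_image.mp hy
        exact classC s _ ⟨i, Finset.mem_filter.mpr ⟨Finset.mem_univ i, hiv⟩⟩
      calc (k:ℝ)/6 = ((Finset.univ.image v).card : ℝ) * (1/6) := by rw [← hk]; ring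
        _ = ∑ _y ∈ Finset.univ.image v, (1:ℝ)/6 := by
            rw [Finset.sum_const, nsmul_eq_mul]
        _ ≤ _ := by rw [hregroup]; exact Finset.sum_le_sum hclass
    -- error constant
    set C0 : ℝ := ∑ i : Fin n, ∑ j : Fin n,
      (if v i = v j then 0 else 1/(3*|v i - v j|)) with hC0def
    have hC0nn : 0 ≤ C0 := Finset.sum_nonneg fun i _ => Finset.sum_nonneg fun j _ => by
      split
      · exact le_rfl
      · positivity
    set T : ℝ := 12*C0 + 1 with hTdef
    have hTpos : 0 < T := by rw [hTdef]; linarith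
    have hint : ∀ i j : Fin n,
        IntervalIntegrable (fun t => bb ((s i - s j) + (v i - v j)*t)) volume 0 T := by
      intro i j
      exact intInt_of_bdd (C := 1/6) (measurable_bb.comp
        (measurable_const.add (measurable_id.const_mul _))) (fun t => bb_abs_le _)
    have hPhiInt : IntervalIntegrable Phi volume 0 T := by
      rw [hPhidef]
      exact intInt_sum _ (fun i _ => intInt_sum _ (fun j _ => hint i j))
    -- lower bound for the time integral
    have hterm : ∀ i j : Fin n,
        (if v i = v j then T * bb (s i - s j) else -(1/(3*|v i - v j|)))
          ≤ ∫ t in (0:ℝ)..T, bb ((s i - s j) + (v i - v j)*t) := by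
      intro i j
      by_cases hvij : v i = v j
      · rw [if_pos hvij]
        have hconst : (fun t => bb ((s i - s j) + (v i - v j)*t))
            = fun _ => bb (s i - s j) := by
          funext t; rw [hvij, sub_self, zero_mul, add_zero]
        rw [hconst, intervalIntegral.integral_const, smul_eq_mul, sub_zero]
      · rw [if_neg hvij]
        have hb := time_avg_bound (s i - s j) (v i - v j) (sub_ne_zero.mpr hvij) T
        have hna := neg_abs_le (∫ t in (0:ℝ)..T, bb ((s i - s j) + (v i - v j)*t))
        rw [abs_le] at hb
        linarith [hb.1]
    have hlow : T * S0 - C0 ≤ ∫ t in (0:ℝ)..T, Phi t := by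
      have hsplit : ∀ i j : Fin n,
          (if v i = v j then T * bb (s i - s j) else -(1/(3*|v i - v j|)))
            = T * (if v i = v j then bb (s i - s j) else 0)
              - (if v i = v j then 0 else 1/(3*|v i - v j|)) := by
        intro i j
        by_cases hvij : v i = v j <;> simp [hvij]
      have hPhiint_eq : ∫ t in (0:ℝ)..T, Phi t
          = ∑ i : Fin n, ∑ j : Fin n, ∫ t in (0:ℝ)..T, bb ((s i - s j) + (v i - v j)*t) := by
        rw [hPhidef, intervalIntegral.integral_finset_sum
          (fun i _ => intInt_sum _ (fun j _ => hint i j))]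
        exact Finset.sum_congr rfl fun i _ =>
          intervalIntegral.integral_finset_sum (fun j _ => hint i j)
      calc T * S0 - C0
          = ∑ i : Fin n, ∑ j : Fin n,
            (if v i = v j then T * bb (s i - s j) else -(1/(3*|v i - v j|))) := by
            rw [hS0def, hC0def, Finset.mul_sum, ← Finset.sum_sub_distrib]
            refine Finset.sum_congr rfl fun i _ => ?_
            rw [Finset.mul_sum, ← Finset.sum_sub_distrib]
            exact Finset.sum_congr rfl fun j _ => (hsplit i j).symm
        _ ≤ ∑ i : Fin n, ∑ j : Fin n, ∫ t in (0:ℝ)..T, bb ((s i - s j) + (v i - v j)*t) :=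
            Finset.sum_le_sum fun i _ => Finset.sum_le_sum fun j _ => hterm i j
        _ = ∫ t in (0:ℝ)..T, Phi t := hPhiint_eq.symm
    have hstrict : T * ((k:ℝ)/12) < ∫ t in (0:ℝ)..T, Phi t := by
      have h1 : T * ((k:ℝ)/6) ≤ T * S0 := mul_le_mul_of_nonneg_left hS0 hTpos.le
      have h2 : T * ((k:ℝ)/12) < T * ((k:ℝ)/6) - C0 := by
        rw [hTdef]
        nlinarith
      exact lt_of_lt_of_le (by linarith) hlow
    -- upper bound from the contradiction hypothesis
    have hup : ∀ t ∈ Set.Icc (0:ℝ) T, Phi t ≤ (k:ℝ)/12 := by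
      intro t _
      have h1 := hPhiBias t
      have h2 := hcon t
      have hbnn := bias_nonneg n (fun i => s i + v i * t)
      have h3 : (bias n (fun i => s i + v i * t))^2 < (Real.sqrt ((k:ℝ)/12))^2 :=
        pow_lt_pow_left₀ h2 hbnn (by norm_num)
      rw [Real.sq_sqrt (by positivity)] at h3
      have : ((k:ℕ):ℝ)/12 = (k:ℝ)/12 := by norm_num
      linarith [h1, h3]
    have hle : ∫ t in (0:ℝ)..T, Phi t ≤ T * ((k:ℝ)/12) := by
      have := integral_mono_on hTpos.le hPhiInt intervalIntegrable_const hup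
      calc ∫ t in (0:ℝ)..T, Phi t ≤ ∫ _t in (0:ℝ)..T, (k:ℝ)/12 := this
        _ = T * ((k:ℝ)/12) := by rw [intervalIntegral.integral_const, smul_eq_mul, sub_zero]
    linarith
end
end

section
/- Let s₁, s₂ ∈ ℝ, let v₁, v₂ be distinct integers, and let γ ∈ [0,1]. Then ∫₀¹∫₀¹ χ_{α,γ}(s₁+v₁t) dα dt = γ, and ∫₀¹∫₀¹ χ_{α,γ}(s₁+v₁t)·χ_{α,γ}(s₂+v₂t) dα dt = γ². -/
open scoped Real
open MeasureTheory intervalIntegral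

/-- The indicator `χ_{α,γ}(x)`: equals `1` if the fractional part of `x − α` is at most `γ`,
i.e. if `x` lies in the closed circular sector of aperture `γ` starting at `α`. -/
noncomputable def chiSector (α γ x : ℝ) : ℝ :=
  if Int.fract (x - α) ≤ γ then 1 else 0

noncomputable def gSec (γ β : ℝ) : ℝ := if Int.fract β ≤ γ then 1 else 0

lemma gSec_meas (γ : ℝ) : Measurable (gSec γ) := by
  unfold gSec
  exact Measurable.ite (measurableSet_le measurable_fract measurable_const)
    measurable_const measurable_const

lemma gSec_bdd (γ β : ℝ) : ‖gSec γ β‖ ≤ 1 := by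
  unfold gSec; split <;> simp

lemma gSec_per (γ : ℝ) : Function.Periodic (gSec γ) 1 := by
  intro β; unfold gSec; rw [Int.fract_add_one]

lemma bdd_intInt (f : ℝ → ℝ) (hm : Measurable f) (hb : ∀ x, ‖f x‖ ≤ 1) (a b : ℝ) :
    IntervalIntegrable f volume a b := by
  rw [intervalIntegrable_iff]
  refine MeasureTheory.Integrable.mono' (g := fun _ => (1:ℝ)) ?_ hm.aestronglyMeasurable ?_
  · exact (integrableOn_const_iff).mpr (Or.inr measure_Ioc_lt_top)
  · exact Filter.Eventually.of_forall fun x => hb x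

lemma gSec_int01 {γ : ℝ} (hγ : γ ∈ Set.Icc (0:ℝ) 1) : (∫ β in (0:ℝ)..1, gSec γ β) = γ := by
  obtain ⟨h0, h1⟩ := hγ
  have step1 : (∫ β in (0:ℝ)..1, gSec γ β) = ∫ β in (0:ℝ)..1, (if β ≤ γ then (1:ℝ) else 0) := by
    rw [integral_of_le zero_le_one, integral_of_le zero_le_one,
      MeasureTheory.integral_Ioc_eq_integral_Ioo, MeasureTheory.integral_Ioc_eq_integral_Ioo]
    refine MeasureTheory.setIntegral_congr_fun measurableSet_Ioo fun β hβ => ?_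
    unfold gSec
    rw [Int.fract_eq_self.mpr ⟨le_of_lt hβ.1, hβ.2⟩]
  rw [step1]
  have hint : ∀ a b : ℝ, IntervalIntegrable (fun β => if β ≤ γ then (1:ℝ) else 0) volume a b := by
    refine bdd_intInt _ ?_ ?_
    · exact Measurable.ite (measurableSet_le measurable_id measurable_const)
        measurable_const measurable_const
    · intro x; split <;> simp
  rw [← intervalIntegral.integral_add_adjacent_intervals (b := γ) (hint 0 γ) (hint γ 1)]
  have e1 : (∫ β in (0:ℝ)..γ, (if β ≤ γ then (1:ℝ) else 0)) = γ := by
    rw [intervalIntegral.integral_congr (g := fun _ => (1:ℝ)) ?_]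
    · simp
    · intro β hβ
      rw [Set.uIcc_of_le h0] at hβ
      simp [hβ.2]
  have e2 : (∫ β in γ..(1:ℝ), (if β ≤ γ then (1:ℝ) else 0)) = 0 := by
    rw [integral_of_le h1]
    refine MeasureTheory.setIntegral_eq_zero_of_forall_eq_zero fun β hβ => ?_
    simp [not_le.mpr hβ.1]
  rw [e1, e2, add_zero]

lemma gSec_int_shift {γ : ℝ} (hγ : γ ∈ Set.Icc (0:ℝ) 1) (a : ℝ) :
    (∫ β in a..(a+1), gSec γ β) = γ := by
  rw [(gSec_per γ).intervalIntegral_add_eq a 0, zero_add, gSec_int01 hγ]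

lemma lemA {γ : ℝ} (hγ : γ ∈ Set.Icc (0:ℝ) 1) (x : ℝ) :
    (∫ α in (0:ℝ)..1, chiSector α γ x) = γ := by
  have : (fun α => chiSector α γ x) = fun α => gSec γ (x - α) := rfl
  rw [this, intervalIntegral.integral_comp_sub_left (gSec γ) x]
  have : x - 0 = (x - 1) + 1 := by ring
  rw [this, gSec_int_shift hγ]

noncomputable def FSec (γ d : ℝ) : ℝ := ∫ β in (0:ℝ)..1, gSec γ β * gSec γ (β + d)

lemma prod_per (γ d : ℝ) : Function.Periodic (fun β => gSec γ β * gSec γ (β + d)) 1 := by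
  intro β
  have : β + 1 + d = (β + d) + 1 := by ring
  simp only [this, gSec_per γ β, gSec_per γ (β + d)]

lemma FSec_per (γ : ℝ) : Function.Periodic (FSec γ) 1 := by
  intro d
  unfold FSec
  refine intervalIntegral.integral_congr fun β _ => ?_
  have : β + (d + 1) = (β + d) + 1 := by ring
  rw [this, gSec_per γ (β + d)]

lemma FSec_eq_set (γ d : ℝ) :
    FSec γ d = ∫ β in Set.Ioc (0:ℝ) 1, gSec γ β * gSec γ (β + d) := by
  rw [FSec, integral_of_le zero_le_one]

lemma FSec_meas (γ : ℝ) : Measurable (FSec γ) := by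
  have : FSec γ = fun d => ∫ β in Set.Ioc (0:ℝ) 1, gSec γ β * gSec γ (β + d) := by
    funext d; exact FSec_eq_set γ d
  rw [this]
  apply MeasureTheory.StronglyMeasurable.measurable
  apply MeasureTheory.StronglyMeasurable.integral_prod_right (f := fun d β => gSec γ β * gSec γ (β + d))
  exact (((gSec_meas γ).comp measurable_snd).mul
    ((gSec_meas γ).comp (measurable_snd.add measurable_fst))).stronglyMeasurable

lemma FSec_bdd (γ d : ℝ) : ‖FSec γ d‖ ≤ 1 := by
  have := intervalIntegral.norm_integral_le_of_norm_le_const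
    (C := 1) (a := (0:ℝ)) (b := 1) (f := fun β => gSec γ β * gSec γ (β + d)) ?_
  · simpa [FSec] using this
  · intro x _
    calc ‖gSec γ x * gSec γ (x + d)‖ = ‖gSec γ x‖ * ‖gSec γ (x + d)‖ := norm_mul _ _
      _ ≤ 1 * 1 := mul_le_mul (gSec_bdd γ x) (gSec_bdd γ (x + d)) (norm_nonneg _) zero_le_one
      _ = 1 := mul_one 1

lemma FSec_int01 {γ : ℝ} (hγ : γ ∈ Set.Icc (0:ℝ) 1) : (∫ d in (0:ℝ)..1, FSec γ d) = γ ^ 2 := by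
  haveI : IsFiniteMeasure (volume.restrict (Set.Ioc (0:ℝ) 1)) := by
    constructor
    rw [Measure.restrict_apply MeasurableSet.univ, Set.univ_inter, Real.volume_Ioc]
    simp
  have hmeas : Measurable (fun p : ℝ × ℝ => gSec γ p.2 * gSec γ (p.2 + p.1)) :=
    ((gSec_meas γ).comp measurable_snd).mul
      ((gSec_meas γ).comp (measurable_snd.add measurable_fst))
  have hInt : Integrable (fun p : ℝ × ℝ => gSec γ p.2 * gSec γ (p.2 + p.1))
      ((volume.restrict (Set.Ioc (0:ℝ) 1)).prod (volume.restrict (Set.Ioc (0:ℝ) 1))) := by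
    refine MeasureTheory.Integrable.mono' (g := fun _ => (1:ℝ)) (integrable_const 1)
      hmeas.aestronglyMeasurable ?_
    refine Filter.Eventually.of_forall fun p => ?_
    calc ‖gSec γ p.2 * gSec γ (p.2 + p.1)‖ = ‖gSec γ p.2‖ * ‖gSec γ (p.2 + p.1)‖ := norm_mul _ _
      _ ≤ 1 * 1 := mul_le_mul (gSec_bdd _ _) (gSec_bdd _ _) (norm_nonneg _) zero_le_one
      _ = 1 := mul_one 1
  rw [integral_of_le zero_le_one]
  have swap := MeasureTheory.integral_integral_swap
    (f := fun d β => gSec γ β * gSec γ (β + d)) hInt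
  calc (∫ d in Set.Ioc (0:ℝ) 1, FSec γ d)
      = ∫ d in Set.Ioc (0:ℝ) 1, ∫ β in Set.Ioc (0:ℝ) 1, gSec γ β * gSec γ (β + d) := by
        refine MeasureTheory.setIntegral_congr_fun measurableSet_Ioc fun d _ => FSec_eq_set γ d
    _ = ∫ β in Set.Ioc (0:ℝ) 1, ∫ d in Set.Ioc (0:ℝ) 1, gSec γ β * gSec γ (β + d) := swap
    _ = ∫ β in Set.Ioc (0:ℝ) 1, gSec γ β * γ := by
        refine MeasureTheory.setIntegral_congr_fun measurableSet_Ioc fun β _ => ?_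
        rw [MeasureTheory.integral_const_mul]
        congr 1
        have : (∫ d in Set.Ioc (0:ℝ) 1, gSec γ (β + d)) = ∫ d in (0:ℝ)..1, gSec γ (β + d) :=
          (integral_of_le zero_le_one).symm
        rw [this, intervalIntegral.integral_comp_add_left (gSec γ) β, add_zero,
          gSec_int_shift hγ]
    _ = γ ^ 2 := by
        rw [MeasureTheory.integral_mul_const, ← integral_of_le zero_le_one, gSec_int01 hγ]
        ring


/-- Lemma 1: for distinct integer speeds `v₁ ≠ v₂`,
`∫₀¹∫₀¹ χ_{α,γ}(s₁+v₁t) dα dt = γ` and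
`∫₀¹∫₀¹ χ_{α,γ}(s₁+v₁t)·χ_{α,γ}(s₂+v₂t) dα dt = γ²`. -/
theorem stmt2 (s₁ s₂ : ℝ) (v₁ v₂ : ℤ) (hv : v₁ ≠ v₂) (γ : ℝ) (hγ : γ ∈ Set.Icc (0 : ℝ) 1) :
    (∫ t in (0:ℝ)..1, ∫ α in (0:ℝ)..1, chiSector α γ (s₁ + (v₁ : ℝ) * t)) = γ ∧
    (∫ t in (0:ℝ)..1, ∫ α in (0:ℝ)..1,
        chiSector α γ (s₁ + (v₁ : ℝ) * t) * chiSector α γ (s₂ + (v₂ : ℝ) * t)) = γ ^ 2 := by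
  constructor
  · have : (∫ t in (0:ℝ)..1, ∫ α in (0:ℝ)..1, chiSector α γ (s₁ + (v₁ : ℝ) * t))
        = ∫ t in (0:ℝ)..1, γ := by
      refine intervalIntegral.integral_congr fun t _ => lemA hγ _
    rw [this]; simp
  · -- inner integral equals FSec γ (x₂ - x₁)
    have inner : ∀ x₁ x₂ : ℝ,
        (∫ α in (0:ℝ)..1, chiSector α γ x₁ * chiSector α γ x₂) = FSec γ (x₂ - x₁) := by
      intro x₁ x₂
      have e1 : (fun α => chiSector α γ x₁ * chiSector α γ x₂)
          = fun α => (fun β => gSec γ β * gSec γ (β + (x₂ - x₁))) (x₁ - α) := by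
        funext α
        have : x₁ - α + (x₂ - x₁) = x₂ - α := by ring
        simp only [this]
        rfl
      rw [e1, intervalIntegral.integral_comp_sub_left
        (fun β => gSec γ β * gSec γ (β + (x₂ - x₁))) x₁]
      have e2 : x₁ - 0 = (x₁ - 1) + 1 := by ring
      rw [e2, (prod_per γ (x₂ - x₁)).intervalIntegral_add_eq (x₁ - 1) 0, zero_add]
      rfl
    have outer : (∫ t in (0:ℝ)..1, ∫ α in (0:ℝ)..1,
        chiSector α γ (s₁ + (v₁ : ℝ) * t) * chiSector α γ (s₂ + (v₂ : ℝ) * t))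
        = ∫ t in (0:ℝ)..1, FSec γ (((v₂ - v₁ : ℤ) : ℝ) * t + (s₂ - s₁)) := by
      refine intervalIntegral.integral_congr fun t _ => ?_
      rw [inner]
      congr 1
      push_cast
      ring
    rw [outer]
    set n : ℤ := v₂ - v₁ with hn
    have hn0 : (n : ℝ) ≠ 0 := by
      simp only [hn]
      exact_mod_cast sub_ne_zero.mpr (Ne.symm hv)
    have hFint : ∀ a b : ℝ, IntervalIntegrable (FSec γ) volume a b :=
      bdd_intInt _ (FSec_meas γ) (FSec_bdd γ)
    rw [intervalIntegral.integral_comp_mul_add (FSec γ) hn0 (s₂ - s₁)]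
    have e3 : (n:ℝ) * 1 + (s₂ - s₁) = (s₂ - s₁) + n • (1:ℝ) := by
      simp [zsmul_eq_mul]; ring
    have e4 : (n:ℝ) * 0 + (s₂ - s₁) = s₂ - s₁ := by ring
    rw [e3, e4, (FSec_per γ).intervalIntegral_add_zsmul_eq n (s₂ - s₁) hFint,
      (FSec_per γ).intervalIntegral_add_eq (s₂ - s₁) 0, zero_add, FSec_int01 hγ]
    rw [zsmul_eq_mul, smul_eq_mul]
    field_simp
end

section
/- Fix a prime p and a primitive p-th root of unity ξ ∈ ℂ, and define the polynomials Q_{i,r} as in the generalized Shapiro construction. Then for every r ≥ 0 and every x ∈ ℂ with |x| = 1, Σ_{i=0}^{p−1} |Q_{i,r}(x)|² = p^{r+1}. -/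
open scoped Real

noncomputable def shapiroQ (p : ℕ) (ξ : ℂ) : ℕ → ℕ → Polynomial ℂ
  | _, 0 => 1
  | j, r + 1 =>
      ∑ k ∈ Finset.range p, Polynomial.C (ξ ^ (j * k)) * Polynomial.X ^ (k * p ^ r) *
        shapiroQ p ξ k r

lemma shapiro_ortho (p : ℕ) (hp : p.Prime) (ξ : ℂ) (hξ : IsPrimitiveRoot ξ p)
    (k k' : ℕ) (hk : k < p) (hk' : k' < p) :
    ∑ j ∈ Finset.range p, ξ ^ (j * k) * (starRingEnd ℂ) ξ ^ (j * k') =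
      if k = k' then (p : ℂ) else 0 := by
  have hne : ξ ≠ 0 := hξ.ne_zero hp.ne_zero
  have habs : ‖ξ‖ = 1 := by
    exact Complex.norm_eq_one_of_pow_eq_one hξ.pow_eq_one hp.ne_zero
  have hmulc : ξ * (starRingEnd ℂ) ξ = 1 := by
    rw [Complex.mul_conj]
    norm_cast
    rw [Complex.normSq_eq_norm_sq, habs]; norm_num
  set ζ : ℂ := ξ ^ k * ((starRingEnd ℂ) ξ) ^ k' with hζ
  have hterm : ∀ j, ξ ^ (j * k) * (starRingEnd ℂ) ξ ^ (j * k') = ζ ^ j := by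
    intro j
    rw [hζ, mul_pow, ← pow_mul, ← pow_mul, mul_comm j k, mul_comm j k']
  rw [Finset.sum_congr rfl fun j _ => hterm j]
  have hζp : ζ ^ p = 1 := by
    rw [hζ, mul_pow, ← pow_mul, ← pow_mul, mul_comm k p, mul_comm k' p,
      pow_mul, pow_mul, hξ.pow_eq_one, ← map_pow, hξ.pow_eq_one, map_one]
    simp
  by_cases h : k = k'
  · subst h
    have : ζ = 1 := by
      rw [hζ, ← mul_pow, hmulc, one_pow]
    simp [this]
  · have hζ1 : ζ ≠ 1 := by
      intro hc
      apply h
      have : ξ ^ k = ξ ^ k' := by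
        have := congrArg (· * ξ ^ k') hc
        simp only [hζ, one_mul] at this
        rw [mul_assoc, ← mul_pow, mul_comm ((starRingEnd ℂ) ξ) ξ, hmulc, one_pow, mul_one] at this
        exact this
      exact hξ.pow_inj hk hk' this
    rw [if_neg h, geom_sum_eq hζ1, hζp, sub_self, zero_div]

lemma shapiro_sum (p : ℕ) (hp : p.Prime) (ξ : ℂ) (hξ : IsPrimitiveRoot ξ p)
    (x : ℂ) (hx : ‖x‖ = 1) (r : ℕ) :
    ∑ i ∈ Finset.range p, (shapiroQ p ξ i r).eval x *
      (starRingEnd ℂ) ((shapiroQ p ξ i r).eval x) = (p : ℂ) ^ (r + 1) := by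
  induction r with
  | zero => simp [shapiroQ]
  | succ r ih =>
    have hxc : x * (starRingEnd ℂ) x = 1 := by
      rw [Complex.mul_conj]
      norm_cast
      rw [Complex.normSq_eq_norm_sq, hx]; norm_num
    set E : ℕ → ℂ := fun k => (shapiroQ p ξ k r).eval x with hE
    have heval : ∀ j, (shapiroQ p ξ j (r+1)).eval x
        = ∑ k ∈ Finset.range p, ξ ^ (j * k) * x ^ (k * p ^ r) * E k := by
      intro j
      rw [shapiroQ]
      simp [Polynomial.eval_finset_sum, hE]
    calc ∑ j ∈ Finset.range p, (shapiroQ p ξ j (r+1)).eval x *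
          (starRingEnd ℂ) ((shapiroQ p ξ j (r+1)).eval x)
        = ∑ j ∈ Finset.range p, ∑ k ∈ Finset.range p, ∑ k' ∈ Finset.range p,
            (ξ ^ (j * k) * x ^ (k * p ^ r) * E k) *
            ((starRingEnd ℂ) ξ ^ (j * k') * (starRingEnd ℂ) x ^ (k' * p ^ r)
              * (starRingEnd ℂ) (E k')) := by
          refine Finset.sum_congr rfl fun j _ => ?_
          rw [heval j, map_sum, Finset.sum_mul_sum]
          refine Finset.sum_congr rfl fun k _ => Finset.sum_congr rfl fun k' _ => ?_
          simp [map_mul, map_pow]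
      _ = ∑ k ∈ Finset.range p, ∑ k' ∈ Finset.range p,
            (∑ j ∈ Finset.range p, ξ ^ (j * k) * (starRingEnd ℂ) ξ ^ (j * k')) *
            (x ^ (k * p ^ r) * (starRingEnd ℂ) x ^ (k' * p ^ r) * (E k * (starRingEnd ℂ) (E k'))) := by
          rw [Finset.sum_comm]
          refine Finset.sum_congr rfl fun k _ => ?_
          rw [Finset.sum_comm]
          refine Finset.sum_congr rfl fun k' _ => ?_
          rw [Finset.sum_mul]
          refine Finset.sum_congr rfl fun j _ => ?_
          ring
      _ = ∑ k ∈ Finset.range p, (p : ℂ) * (E k * (starRingEnd ℂ) (E k)) := by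
          refine Finset.sum_congr rfl fun k hk => ?_
          rw [Finset.sum_congr rfl fun k' hk' =>
            by rw [shapiro_ortho p hp ξ hξ k k' (Finset.mem_range.mp hk) (Finset.mem_range.mp hk')]]
          rw [Finset.sum_eq_single_of_mem k hk
            (fun k' _ hne => by rw [if_neg (Ne.symm hne), zero_mul]), if_pos rfl]
          have hxn : x ^ (k * p ^ r) * (starRingEnd ℂ) x ^ (k * p ^ r) = 1 := by
            rw [← mul_pow, hxc, one_pow]
          rw [hxn, one_mul]
      _ = (p : ℂ) ^ (r + 1 + 1) := by
          rw [← Finset.mul_sum, ih]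
          ring
/-- Equation (9): for every `r ≥ 0` and every `x` on the unit circle,
`Σ_{i=0}^{p−1} |Q_{i,r}(x)|² = p^{r+1}`. -/
theorem stmt6 (p : ℕ) (hp : p.Prime) (ξ : ℂ) (hξ : IsPrimitiveRoot ξ p)
    (r : ℕ) (x : ℂ) (hx : ‖x‖ = 1) :
    ∑ i ∈ Finset.range p, ‖(shapiroQ p ξ i r).eval x‖ ^ 2 = (p : ℝ) ^ (r + 1) := by
  have h := shapiro_sum p hp ξ hξ x hx r
  have key : ((∑ i ∈ Finset.range p, ‖(shapiroQ p ξ i r).eval x‖ ^ 2 : ℝ) : ℂ)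
      = (((p : ℝ) ^ (r + 1) : ℝ) : ℂ) := by
    push_cast
    rw [← h]
    refine Finset.sum_congr rfl fun i _ => ?_
    rw [Complex.mul_conj]
    norm_cast
    exact Complex.sq_norm _
  exact_mod_cast key
end

section
/- Fix a prime p and a primitive p-th root of unity ξ ∈ ℂ, and define the polynomials Q_{i,r} as in the generalized Shapiro construction. Let 0 ≤ i ≤ p−1, r ≥ 0, and let k be a positive integer not divisible by p. Then |Q_{i,r}^{(k)}|_m ≤ p^{(r+1)/2}, i.e. the k-th Hadamard power of Q_{i,r} has absolute value at most p^{(r+1)/2} = √(p·(p^r−1+1)) at every point of the unit circle. -/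
open scoped Real

/-- The `k`-th Hadamard power of a polynomial: `f^{(k)}(x) := Σᵢ aᵢᵏ xⁱ` for `f = Σᵢ aᵢxⁱ`. -/
noncomputable def hadamardPow (f : Polynomial ℂ) (k : ℕ) : Polynomial ℂ :=
  f.sum fun i a => Polynomial.C (a ^ k) * Polynomial.X ^ i

open Polynomial Finset Complex

lemma coeff_term (a : ℂ) (e : ℕ) (Q : Polynomial ℂ) (n : ℕ) :
    (Polynomial.C a * Polynomial.X ^ e * Q).coeff n =
      a * (if e ≤ n then Q.coeff (n - e) else 0) := by
  rw [mul_right_comm, Polynomial.coeff_mul_X_pow']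
  split_ifs with h
  · rw [Polynomial.coeff_C_mul]
  · rw [mul_zero]

lemma shapiroQ_coeff_eq_zero (p : ℕ) (ξ : ℂ) :
    ∀ r j n, p ^ r ≤ n → (shapiroQ p ξ j r).coeff n = 0 := by
  intro r
  induction r with
  | zero =>
    intro j n hn
    have : n ≠ 0 := by simp at hn; omega
    simp [shapiroQ, Polynomial.coeff_one, this]
  | succ r ih =>
    intro j n hn
    rw [shapiroQ, Polynomial.finset_sum_coeff]
    apply Finset.sum_eq_zero
    intro m hm
    rw [coeff_term]
    split_ifs with h
    · rw [ih m (n - m * p ^ r) ?_, mul_zero]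
      have hm' : m + 1 ≤ p := Finset.mem_range.mp hm
      have : (m + 1) * p ^ r ≤ p * p ^ r := Nat.mul_le_mul_right _ hm'
      rw [pow_succ'] at hn
      have h2 : (m + 1) * p ^ r = m * p ^ r + p ^ r := by ring
      omega
    · rw [mul_zero]

lemma shapiroQ_coeff_succ (p : ℕ) (hp0 : 0 < p) (ξ : ℂ) (r j n : ℕ) (hn : n < p ^ (r + 1)) :
    (shapiroQ p ξ j (r + 1)).coeff n =
      ξ ^ (j * (n / p ^ r)) * (shapiroQ p ξ (n / p ^ r) r).coeff (n % p ^ r) := by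
  have hpr : 0 < p ^ r := Nat.pow_pos hp0
  set m := n / p ^ r with hmdef
  have hdm : m * p ^ r + n % p ^ r = n := by rw [Nat.mul_comm]; exact Nat.div_add_mod n (p ^ r)
  have hms : m * p ^ r ≤ n := Nat.div_mul_le_self n (p ^ r)
  have hm : m < p := by
    rw [hmdef]
    apply Nat.div_lt_of_lt_mul
    rw [pow_succ] at hn
    omega
  rw [shapiroQ, Polynomial.finset_sum_coeff]
  rw [Finset.sum_eq_single m]
  · rw [coeff_term, if_pos hms]
    congr 2
    have h5 : n = n % p ^ r + m * p ^ r := by rw [Nat.add_comm]; exact hdm.symm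
    exact Nat.sub_eq_of_eq_add h5
  · intro b hb hbm
    rw [coeff_term]
    split_ifs with h
    · rw [shapiroQ_coeff_eq_zero p ξ r b (n - b * p ^ r) ?_, mul_zero]
      have hb' : b ≤ m := by
        have := Nat.le_div_iff_mul_le hpr |>.mpr h
        omega
      have hb2 : b + 1 ≤ m := by omega
      have h5 : (b + 1) * p ^ r ≤ m * p ^ r := Nat.mul_le_mul_right _ hb2
      have h3 : (b + 1) * p ^ r = b * p ^ r + p ^ r := by ring
      omega
    · rw [mul_zero]
  · intro h
    exact absurd (Finset.mem_range.mpr hm) h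

lemma hadamardPow_coeff (f : Polynomial ℂ) (k : ℕ) (hk : 0 < k) (n : ℕ) :
    (hadamardPow f k).coeff n = f.coeff n ^ k := by
  rw [hadamardPow, Polynomial.sum_def, Polynomial.finset_sum_coeff]
  have : ∀ i ∈ f.support, (Polynomial.C (f.coeff i ^ k) * Polynomial.X ^ i).coeff n
      = if i = n then f.coeff i ^ k else 0 := by
    intro i _
    rw [Polynomial.coeff_C_mul, Polynomial.coeff_X_pow]
    split_ifs with h1 h2 h2
    · rw [mul_one]
    · exact absurd h1.symm h2
    · exact absurd h2.symm h1
    · rw [mul_zero]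
  rw [Finset.sum_congr rfl this, Finset.sum_ite_eq' f.support n (fun i => f.coeff i ^ k)]
  split_ifs with h
  · rfl
  · rw [Polynomial.notMem_support_iff.mp h, zero_pow hk.ne']

lemma hadamard_shapiro (p : ℕ) (hp0 : 0 < p) (ξ : ℂ) (k : ℕ) (hk : 0 < k) :
    ∀ r j, hadamardPow (shapiroQ p ξ j r) k = shapiroQ p (ξ ^ k) j r := by
  intro r
  induction r with
  | zero =>
    intro j
    ext n
    rw [hadamardPow_coeff _ _ hk]
    show (shapiroQ p ξ j 0).coeff n ^ k = (shapiroQ p (ξ ^ k) j 0).coeff n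
    rw [shapiroQ, shapiroQ, Polynomial.coeff_one]
    split_ifs with h
    · exact one_pow k
    · exact zero_pow hk.ne'
  | succ r ih =>
    intro j
    ext n
    rw [hadamardPow_coeff _ _ hk]
    by_cases hn : n < p ^ (r + 1)
    · rw [shapiroQ_coeff_succ p hp0 ξ r j n hn, shapiroQ_coeff_succ p hp0 (ξ ^ k) r j n hn,
        mul_pow, ← pow_mul, Nat.mul_comm (j * (n / p ^ r)) k, pow_mul]
      congr 1
      have := ih (n / p ^ r)
      rw [← this, hadamardPow_coeff _ _ hk]
    · rw [shapiroQ_coeff_eq_zero p ξ (r + 1) j n (by omega),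
        shapiroQ_coeff_eq_zero p (ξ ^ k) (r + 1) j n (by omega), zero_pow hk.ne']

lemma shapiro_inner_sum (p : ℕ) (hp : p.Prime) (ξ : ℂ) (hξ : IsPrimitiveRoot ξ p)
    (m m' : ℕ) (hm : m < p) (hm' : m' < p) :
    ∑ j ∈ Finset.range p, (ξ ^ m * (starRingEnd ℂ) ξ ^ m') ^ j
      = if m = m' then (p : ℂ) else 0 := by
  have hξp : ξ ^ p = 1 := hξ.pow_eq_one
  have habs : ‖ξ‖ = 1 :=
    Complex.norm_eq_one_of_pow_eq_one hξp hp.ne_zero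
  have hmc : ξ * (starRingEnd ℂ) ξ = 1 := by
    rw [Complex.mul_conj, Complex.normSq_eq_norm_sq, habs]
    norm_num
  split_ifs with h
  · subst h
    have : ξ ^ m * (starRingEnd ℂ) ξ ^ m = 1 := by
      rw [← mul_pow, hmc, one_pow]
    simp [this]
  · set ζ := ξ ^ m * (starRingEnd ℂ) ξ ^ m' with hζ
    have hζp : ζ ^ p = 1 := by
      rw [hζ, mul_pow, ← pow_mul, ← pow_mul, Nat.mul_comm m p, Nat.mul_comm m' p,
        pow_mul, pow_mul, hξp, ← map_pow, hξp, map_one, one_pow, one_pow, one_mul]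
    have hζ1 : ζ ≠ 1 := by
      intro hone
      apply h
      apply hξ.pow_inj hm hm'
      have : ξ ^ m * (starRingEnd ℂ) ξ ^ m' * ξ ^ m' = ξ ^ m' := by
        rw [← hζ, hone, one_mul]
      rw [mul_assoc, ← mul_pow, mul_comm ((starRingEnd ℂ) ξ) ξ, hmc, one_pow, mul_one] at this
      exact this
    have := geom_sum_eq hζ1 p
    rw [this, hζp, sub_self, zero_div]

lemma shapiro_sum_sq (p : ℕ) (hp : p.Prime) (ξ : ℂ) (hξ : IsPrimitiveRoot ξ p)
    (x : ℂ) (hx : ‖x‖ = 1) :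
    ∀ r, ∑ j ∈ Finset.range p,
        ((shapiroQ p ξ j r).eval x * (starRingEnd ℂ) ((shapiroQ p ξ j r).eval x))
      = (p : ℂ) ^ (r + 1) := by
  intro r
  induction r with
  | zero =>
    simp [shapiroQ]
  | succ r ih =>
    have hxc : x * (starRingEnd ℂ) x = 1 := by
      rw [Complex.mul_conj, Complex.normSq_eq_norm_sq, hx]; norm_num
    have heval : ∀ j, (shapiroQ p ξ j (r + 1)).eval x
        = ∑ m ∈ Finset.range p, ξ ^ (j * m) * x ^ (m * p ^ r) * (shapiroQ p ξ m r).eval x := by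
      intro j
      rw [shapiroQ]
      rw [Polynomial.eval_finset_sum]
      simp
    calc ∑ j ∈ Finset.range p,
          ((shapiroQ p ξ j (r + 1)).eval x * (starRingEnd ℂ) ((shapiroQ p ξ j (r + 1)).eval x))
        = ∑ j ∈ Finset.range p, ∑ m ∈ Finset.range p, ∑ m' ∈ Finset.range p,
            (ξ ^ m * (starRingEnd ℂ) ξ ^ m') ^ j *
              (x ^ (m * p ^ r) * ((starRingEnd ℂ) x) ^ (m' * p ^ r) *
                ((shapiroQ p ξ m r).eval x * (starRingEnd ℂ) ((shapiroQ p ξ m' r).eval x))) := by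
          refine Finset.sum_congr rfl fun j _ => ?_
          rw [heval j, map_sum, Finset.sum_mul_sum]
          refine Finset.sum_congr rfl fun m _ => ?_
          refine Finset.sum_congr rfl fun m' _ => ?_
          rw [map_mul, map_mul, map_pow, map_pow, mul_pow, ← pow_mul, ← pow_mul,
            Nat.mul_comm m j, Nat.mul_comm m' j]
          ring
      _ = ∑ m ∈ Finset.range p, ∑ m' ∈ Finset.range p,
            (∑ j ∈ Finset.range p, (ξ ^ m * (starRingEnd ℂ) ξ ^ m') ^ j) *
              (x ^ (m * p ^ r) * ((starRingEnd ℂ) x) ^ (m' * p ^ r) *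
                ((shapiroQ p ξ m r).eval x * (starRingEnd ℂ) ((shapiroQ p ξ m' r).eval x))) := by
          rw [Finset.sum_comm]
          refine Finset.sum_congr rfl fun m _ => ?_
          rw [Finset.sum_comm]
          refine Finset.sum_congr rfl fun m' _ => ?_
          rw [Finset.sum_mul]
      _ = ∑ m ∈ Finset.range p, (p : ℂ) *
              (x ^ (m * p ^ r) * ((starRingEnd ℂ) x) ^ (m * p ^ r) *
                ((shapiroQ p ξ m r).eval x * (starRingEnd ℂ) ((shapiroQ p ξ m r).eval x))) := by
          refine Finset.sum_congr rfl fun m hm => ?_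
          rw [Finset.sum_congr rfl fun m' hm' => by
            rw [shapiro_inner_sum p hp ξ hξ m m' (Finset.mem_range.mp hm) (Finset.mem_range.mp hm'),
              ite_mul, zero_mul]]
          rw [Finset.sum_ite_eq (Finset.range p) m, if_pos hm]
      _ = (p : ℂ) * ∑ m ∈ Finset.range p,
              ((shapiroQ p ξ m r).eval x * (starRingEnd ℂ) ((shapiroQ p ξ m r).eval x)) := by
          rw [Finset.mul_sum]
          refine Finset.sum_congr rfl fun m _ => ?_
          rw [← mul_pow, hxc, one_pow, one_mul]
      _ = (p : ℂ) ^ (r + 1 + 1) := by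
          rw [ih, pow_succ]
          ring

/-- Proposition (bound on Hadamard powers of Shapiro polynomials): if `p ∤ k`, then for
every `x` on the unit circle `|Q_{i,r}^{(k)}(x)| ≤ p^{(r+1)/2}`. -/
theorem stmt7 (p : ℕ) (hp : p.Prime) (ξ : ℂ) (hξ : IsPrimitiveRoot ξ p)
    (i r k : ℕ) (hi : i ≤ p - 1) (hk : 0 < k) (hpk : ¬ p ∣ k)
    (x : ℂ) (hx : ‖x‖ = 1) :
    ‖(hadamardPow (shapiroQ p ξ i r) k).eval x‖
      ≤ (p : ℝ) ^ (((r : ℝ) + 1) / 2) := by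
  have hp0 : 0 < p := hp.pos
  have hip : i < p := by omega
  have hcop : Nat.Coprime p k := (Nat.Prime.coprime_iff_not_dvd hp).mpr hpk
  have hζ : IsPrimitiveRoot (ξ ^ k) p := hξ.pow_of_coprime k hcop.symm
  rw [hadamard_shapiro p hp0 ξ k hk r i]
  have hsum := shapiro_sum_sq p hp (ξ ^ k) hζ x hx r
  rw [Finset.sum_congr rfl fun j _ => Complex.mul_conj _] at hsum
  have hreal : ∑ j ∈ Finset.range p, Complex.normSq ((shapiroQ p (ξ ^ k) j r).eval x)
      = (p : ℝ) ^ (r + 1) := by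
    exact_mod_cast hsum
  have hterm : Complex.normSq ((shapiroQ p (ξ ^ k) i r).eval x) ≤ (p : ℝ) ^ (r + 1) := by
    rw [← hreal]
    exact Finset.single_le_sum (f := fun j => Complex.normSq ((shapiroQ p (ξ ^ k) j r).eval x))
      (fun j _ => Complex.normSq_nonneg _) (Finset.mem_range.mpr hip)
  rw [Complex.norm_def]
  refine (Real.sqrt_le_sqrt hterm).trans (le_of_eq ?_)
  rw [Real.sqrt_eq_rpow, ← Real.rpow_natCast (p : ℝ) (r + 1), ← Real.rpow_mul (by positivity)]
  congr 1
  push_cast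
  ring
end

section
/- There is an absolute constant C > 0 with the following property. Let p be a prime, n := p³, fix a primitive p-th root of unity and form Q_{0,3} by the generalized Shapiro construction, and let s₀,…,s_{n−1} ∈ [0,1) be such that Q_{0,3}(x) = Σ_{j=0}^{n−1} e^{2πi s_j} x^j. Then for every t ∈ ℝ, B(s₀, s₁+t, s₂+2t, …, s_{n−1}+(n−1)t) ≤ C·n^{2/3}·log n. -/
open scoped Real

open Real Finset

namespace S8

noncomputable def Hf (K : ℕ) (x : ℝ) : ℝ :=
  x + ∑ h ∈ Finset.Icc 1 K, ((1 - (h : ℝ)/(K+1)) / (π * h)) * Real.sin (2*π*h*x)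

noncomputable def Ff (K : ℕ) (t : ℝ) : ℝ :=
  1 + ∑ h ∈ Finset.Icc 1 K, 2 * (1 - (h : ℝ)/(K+1)) * Real.cos (2*π*h*t)

noncomputable def Gf (K : ℕ) (t : ℝ) : ℝ :=
  ((K:ℝ)+1) + ∑ h ∈ Finset.Icc 1 K, 2 * ((K:ℝ)+1-h) * Real.cos (2*π*h*t)

lemma hasDerivAt_Hf (K : ℕ) (x : ℝ) : HasDerivAt (Hf K) (Ff K x) x := by
  have base : HasDerivAt (fun y : ℝ => y) 1 x := hasDerivAt_id x
  have hsum : HasDerivAt (fun y : ℝ => ∑ h ∈ Finset.Icc 1 K,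
      ((1 - (h : ℝ)/(K+1)) / (π * h)) * Real.sin (2*π*h*y))
      (∑ h ∈ Finset.Icc 1 K, 2 * (1 - (h : ℝ)/(K+1)) * Real.cos (2*π*h*x)) x := by
    refine HasDerivAt.fun_sum (fun h hh => ?_)
    have h1 : (1:ℕ) ≤ h := (Finset.mem_Icc.mp hh).1
    have hh0 : (h:ℝ) ≠ 0 := by positivity
    have hπ : (π:ℝ) ≠ 0 := Real.pi_ne_zero
    have key := (((hasDerivAt_id x).const_mul (2*π*(h:ℝ))).sin).const_mul
      ((1 - (h : ℝ)/(K+1)) / (π * h))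
    refine HasDerivAt.congr_deriv key ?_
    simp only [id]
    field_simp
  exact base.add hsum

lemma dirichlet (m : ℕ) (t : ℝ) :
    Real.sin (π*t) * (1 + ∑ h ∈ Finset.Icc 1 m, 2 * Real.cos (2*π*h*t))
      = Real.sin ((2*(m:ℝ)+1) * (π*t)) := by
  induction m with
  | zero => norm_num
  | succ n ih =>
    rw [Finset.sum_Icc_succ_top (by omega : 1 ≤ n + 1)]
    push_cast
    have e1 : (2*((n:ℝ)+1)+1) * (π*t) = (2*(n:ℝ)+1) * (π*t) + 2*(π*t) := by ring
    have e2 : 2*π*((n:ℝ)+1)*t = (2*(n:ℝ)+1) * (π*t) + (π*t) := by ring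
    rw [e1, e2, Real.sin_add, Real.cos_add, Real.sin_two_mul, Real.cos_two_mul]
    linear_combination ih - 2*Real.sin ((2*(n:ℝ)+1)*(π*t)) * Real.sin_sq_add_cos_sq (π*t)

lemma gf_succ (K : ℕ) (t : ℝ) :
    Gf (K+1) t = Gf K t + (1 + ∑ h ∈ Finset.Icc 1 (K+1), 2 * Real.cos (2*π*h*t)) := by
  unfold Gf
  rw [Finset.sum_Icc_succ_top (by omega : 1 ≤ K + 1),
      Finset.sum_Icc_succ_top (by omega : 1 ≤ K + 1)]
  push_cast
  have hs : ∑ h ∈ Finset.Icc 1 K, 2 * ((K:ℝ)+1+1-h) * Real.cos (2*π*h*t)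
      = (∑ h ∈ Finset.Icc 1 K, 2 * ((K:ℝ)+1-h) * Real.cos (2*π*h*t))
        + ∑ h ∈ Finset.Icc 1 K, 2 * Real.cos (2*π*h*t) := by
    rw [← Finset.sum_add_distrib]
    exact Finset.sum_congr rfl (fun h _ => by ring)
  rw [hs]
  ring

lemma fejer (K : ℕ) (t : ℝ) :
    Real.sin (π*t)^2 * Gf K t = Real.sin (((K:ℝ)+1) * (π*t))^2 := by
  induction K with
  | zero => norm_num [Gf]
  | succ n ih =>
    rw [gf_succ]
    have hd := dirichlet (n+1) t
    push_cast at hd ⊢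
    have e2 : (2*((n:ℝ)+1)+1) * (π*t) = (((n:ℝ)+1) * (π*t) + (π*t)) + ((n:ℝ)+1) * (π*t) := by
      ring
    rw [e2] at hd
    rw [Real.sin_add, Real.cos_add, Real.sin_add] at hd
    have e1 : ((n:ℝ)+1+1) * (π*t) = ((n:ℝ)+1) * (π*t) + (π*t) := by ring
    rw [e1, Real.sin_add]
    linear_combination ih + Real.sin (π*t) * hd
      - Real.sin (((n:ℝ)+1)*(π*t))^2 * Real.sin_sq_add_cos_sq (π*t)

lemma gf_eq (K : ℕ) (t : ℝ) : Gf K t = ((K:ℝ)+1) * Ff K t := by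
  unfold Gf Ff
  rw [mul_add, mul_one, Finset.mul_sum]
  congr 1
  refine Finset.sum_congr rfl (fun h hh => ?_)
  have : ((K:ℝ)+1) ≠ 0 := by positivity
  field_simp

lemma Ff_nonneg (K : ℕ) (t : ℝ) : 0 ≤ Ff K t := by
  by_cases hs : Real.sin (π*t) = 0
  · obtain ⟨n, hn⟩ := Real.sin_eq_zero_iff.mp hs
    have ht : t = n := by
      have hπ : (π:ℝ) ≠ 0 := Real.pi_ne_zero
      have : π * t = π * n := by rw [← hn]; ring
      exact mul_left_cancel₀ hπ this
    have hFf : Ff K t = 1 + ∑ h ∈ Finset.Icc 1 K, 2 * (1 - (h : ℝ)/(K+1)) := by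
      unfold Ff
      congr 1
      refine Finset.sum_congr rfl (fun h hh => ?_)
      have : 2*π*(h:ℝ)*t = ((h * n : ℤ) : ℝ) * (2 * π) := by push_cast [ht]; ring
      rw [this, Real.cos_int_mul_two_pi, mul_one]
    rw [hFf]
    have hterm : ∀ h ∈ Finset.Icc 1 K, (0:ℝ) ≤ 2 * (1 - (h : ℝ)/(K+1)) := by
      intro h hh
      have h2 : h ≤ K := (Finset.mem_Icc.mp hh).2
      have hc : (h:ℝ) ≤ (K:ℝ) := by exact_mod_cast h2
      have hK : (0:ℝ) < (K:ℝ)+1 := by positivity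
      have : (h:ℝ)/(K+1) ≤ 1 := by
        rw [div_le_one hK]; linarith
      linarith
    have := Finset.sum_nonneg hterm
    linarith
  · have h2 : 0 < Real.sin (π*t)^2 := by positivity
    have hf := fejer K t
    rw [gf_eq] at hf
    have hK : (0:ℝ) < (K:ℝ)+1 := by positivity
    have hpos : 0 < Real.sin (π*t)^2 * ((K:ℝ)+1) := by positivity
    have hnn : 0 ≤ (Real.sin (π*t)^2 * ((K:ℝ)+1)) * Ff K t := by
      have : (Real.sin (π*t)^2 * ((K:ℝ)+1)) * Ff K t
          = Real.sin (π*t)^2 * (((K:ℝ)+1) * Ff K t) := by ring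
      rw [this, hf]
      positivity
    by_contra hneg
    push_neg at hneg
    linarith [mul_neg_of_pos_of_neg hpos hneg]

lemma Ff_le (K : ℕ) {t : ℝ} (h0 : 0 < t) (h1 : t ≤ 1/2) :
    Ff K t ≤ 1 / (((K:ℝ)+1) * (2*t)^2) := by
  have hπ : (0:ℝ) < π := Real.pi_pos
  have hsin : 2*t ≤ Real.sin (π*t) := by
    have hle := Real.mul_le_sin (x := π*t) (by positivity) (by nlinarith)
    calc 2*t = 2/π * (π*t) := by field_simp
    _ ≤ Real.sin (π*t) := hle
  have hsq : (2*t)^2 ≤ Real.sin (π*t)^2 := by nlinarith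
  have hf := fejer K t
  rw [gf_eq] at hf
  have hK : (0:ℝ) < (K:ℝ)+1 := by positivity
  have hFn := Ff_nonneg K t
  have hb : Real.sin (((K:ℝ)+1) * (π*t))^2 ≤ 1 := by
    nlinarith [Real.neg_one_le_sin (((K:ℝ)+1) * (π*t)), Real.sin_le_one (((K:ℝ)+1) * (π*t))]
  have key : (((K:ℝ)+1) * (2*t)^2) * Ff K t ≤ 1 := by
    calc (((K:ℝ)+1) * (2*t)^2) * Ff K t ≤ (((K:ℝ)+1) * Real.sin (π*t)^2) * Ff K t := by
          apply mul_le_mul_of_nonneg_right _ hFn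
          apply mul_le_mul_of_nonneg_left hsq hK.le
    _ = Real.sin (π*t)^2 * (((K:ℝ)+1) * Ff K t) := by ring
    _ = Real.sin (((K:ℝ)+1) * (π*t))^2 := by rw [← hf]
    _ ≤ 1 := hb
  rw [le_div_iff₀ (by positivity)]
  linarith [key]


lemma continuous_Ff (K : ℕ) : Continuous (Ff K) := by
  unfold Ff
  refine continuous_const.add (continuous_finset_sum _ (fun h _ => ?_))
  exact continuous_const.mul (Real.continuous_cos.comp (continuous_const.mul continuous_id))

lemma integral_Ff (K : ℕ) (a b : ℝ) : ∫ t in a..b, Ff K t = Hf K b - Hf K a :=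
  intervalIntegral.integral_eq_sub_of_hasDerivAt (fun x _ => hasDerivAt_Hf K x)
    ((continuous_Ff K).intervalIntegrable a b)

lemma Hf_mono (K : ℕ) : Monotone (Hf K) := by
  refine monotone_of_deriv_nonneg (fun x => (hasDerivAt_Hf K x).differentiableAt) (fun x => ?_)
  rw [(hasDerivAt_Hf K x).deriv]
  exact Ff_nonneg K x

lemma Hf_zero (K : ℕ) : Hf K 0 = 0 := by
  simp [Hf]

lemma Hf_half (K : ℕ) : Hf K (1/2) = 1/2 := by
  unfold Hf
  rw [Finset.sum_eq_zero, add_zero]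
  intro h _
  have e : 2*π*(h:ℝ)*(1/2) = (h:ℝ)*π := by ring
  rw [e, Real.sin_nat_mul_pi, mul_zero]

lemma Hf_neg (K : ℕ) (x : ℝ) : Hf K (-x) = -Hf K x := by
  unfold Hf
  rw [neg_add]
  rw [← Finset.sum_neg_distrib]
  congr 1
  refine Finset.sum_congr rfl (fun h _ => ?_)
  have e : 2*π*(h:ℝ)*(-x) = -(2*π*(h:ℝ)*x) := by ring
  rw [e, Real.sin_neg]
  ring

lemma Hf_add_int (K : ℕ) (x : ℝ) (m : ℤ) : Hf K (x + m) = Hf K x + m := by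
  unfold Hf
  have e : ∀ h ∈ Finset.Icc 1 K,
      ((1 - (h : ℝ)/(K+1)) / (π * h)) * Real.sin (2*π*h*(x + m))
        = ((1 - (h : ℝ)/(K+1)) / (π * h)) * Real.sin (2*π*h*x) := by
    intro h _
    have e2 : 2*π*(h:ℝ)*(x + m) = 2*π*(h:ℝ)*x + ((h*m : ℤ):ℝ)*(2*π) := by push_cast; ring
    rw [e2, Real.sin_add_int_mul_two_pi]
  rw [Finset.sum_congr rfl e]
  ring

noncomputable def rho (K : ℕ) (x : ℝ) : ℝ := (x - Hf K x) + 1/2 - Int.fract x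

lemma rho_add_int (K : ℕ) (x : ℝ) (m : ℤ) : rho K (x + m) = rho K x := by
  unfold rho
  rw [Hf_add_int, Int.fract_add_intCast]
  ring

lemma rho_eq_of_Ico (K : ℕ) {x : ℝ} (h0 : 0 ≤ x) (h1 : x < 1) :
    rho K x = 1/2 - Hf K x := by
  unfold rho
  rw [Int.fract_eq_self.mpr ⟨h0, h1⟩]
  ring

lemma rho_le_half (K : ℕ) {x : ℝ} (h0 : 0 ≤ x) (h1 : x ≤ 1/2) :
    0 ≤ 1/2 - Hf K x ∧ 1/2 - Hf K x ≤ 1/2 := by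
  constructor
  · have := Hf_mono K h1
    rw [Hf_half] at this
    linarith
  · have := Hf_mono K h0
    rw [Hf_zero] at this
    linarith

lemma rho_le_inv (K : ℕ) {x : ℝ} (h0 : 0 < x) (h1 : x ≤ 1/2) :
    1/2 - Hf K x ≤ 1/(4*((K:ℝ)+1)*x) := by
  have hK : (0:ℝ) < (K:ℝ)+1 := by positivity
  have hint : Hf K (1/2) - Hf K x ≤ ∫ t in x..(1/2), 1/(((K:ℝ)+1) * (2*t)^2) := by
    rw [← integral_Ff K x (1/2)]
    refine intervalIntegral.integral_mono_on h1 ((continuous_Ff K).intervalIntegrable _ _)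
      ?_ (fun u hu => Ff_le K (lt_of_lt_of_le h0 hu.1) hu.2)
    refine ContinuousOn.intervalIntegrable ?_
    rw [Set.uIcc_of_le h1]
    refine ContinuousOn.div continuousOn_const (by fun_prop) (fun u hu => ?_)
    have : 0 < u := lt_of_lt_of_le h0 hu.1
    positivity
  have hftc : ∫ t in x..(1/2), 1/(((K:ℝ)+1) * (2*t)^2)
      = (-(1/(4*((K:ℝ)+1))) * (1/2:ℝ)⁻¹) - (-(1/(4*((K:ℝ)+1))) * x⁻¹) := by
    refine intervalIntegral.integral_eq_sub_of_hasDerivAt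
      (f := fun t => -(1/(4*((K:ℝ)+1))) * t⁻¹) (fun u hu => ?_) ?_
    · rw [Set.uIcc_of_le h1] at hu
      have hu0 : u ≠ 0 := ne_of_gt (lt_of_lt_of_le h0 hu.1)
      have key := (hasDerivAt_inv hu0).const_mul (-(1/(4*((K:ℝ)+1))))
      refine HasDerivAt.congr_deriv key ?_
      field_simp
      ring
    · refine ContinuousOn.intervalIntegrable ?_
      rw [Set.uIcc_of_le h1]
      refine ContinuousOn.div continuousOn_const (by fun_prop) (fun u hu => ?_)
      have : 0 < u := lt_of_lt_of_le h0 hu.1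
      positivity
  rw [hftc] at hint
  rw [Hf_half] at hint
  have hx : x⁻¹ = 1/x := by field_simp
  have : 1/(4*((K:ℝ)+1)*x) = (1/(4*((K:ℝ)+1))) * (1/x) := by
    field_simp
  rw [this]
  have h2 : (0:ℝ) ≤ 1/(4*((K:ℝ)+1)) := by positivity
  nlinarith [hint]

noncomputable def Sel (K : ℕ) (δ x : ℝ) : ℝ := 2*(Hf K (x + 2*δ) - Hf K (x - 2*δ))

lemma Sel_nonneg (K : ℕ) {δ : ℝ} (hδ : 0 ≤ δ) (x : ℝ) : 0 ≤ Sel K δ x := by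
  unfold Sel
  have := Hf_mono K (show x - 2*δ ≤ x + 2*δ by linarith)
  linarith

lemma Sel_ge_one (K : ℕ) {δ x : ℝ} (hδ : 1 ≤ ((K:ℝ)+1)*δ) (hx : |x| ≤ δ) :
    1 ≤ Sel K δ x := by
  have hK : (0:ℝ) < (K:ℝ)+1 := by positivity
  have hδ0 : 0 < δ := by nlinarith
  obtain ⟨hx1, hx2⟩ := abs_le.mp hx
  have m1 : Hf K δ ≤ Hf K (x + 2*δ) := Hf_mono K (by linarith)
  have m2 : Hf K (x - 2*δ) ≤ Hf K (-δ) := Hf_mono K (by linarith)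
  have hneg : Hf K (-δ) = -Hf K δ := Hf_neg K δ
  have key : 1/4 ≤ Hf K δ := by
    rcases le_or_gt (1/2) δ with hc | hc
    · have := Hf_mono K hc
      rw [Hf_half] at this
      linarith
    · have h1 := rho_le_inv K hδ0 hc.le
      have h2 : 1/(4*((K:ℝ)+1)*δ) ≤ 1/4 := by
        rw [div_le_div_iff₀ (by positivity) (by norm_num)]
        nlinarith
      linarith
  unfold Sel
  rw [hneg] at m2
  linarith

lemma Sel_add_int (K : ℕ) (δ x : ℝ) (m : ℤ) : Sel K δ (x + m) = Sel K δ x := by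
  unfold Sel
  have e1 : x + m + 2*δ = (x + 2*δ) + m := by ring
  have e2 : x + m - 2*δ = (x - 2*δ) + m := by ring
  rw [e1, e2, Hf_add_int, Hf_add_int]
  ring

lemma Sel_even (K : ℕ) (δ x : ℝ) : Sel K δ (-x) = Sel K δ x := by
  unfold Sel
  have e1 : -x + 2*δ = -(x - 2*δ) := by ring
  have e2 : -x - 2*δ = -(x + 2*δ) := by ring
  rw [e1, e2, Hf_neg, Hf_neg]
  ring

noncomputable def Pf (K S : ℕ) (x : ℝ) : ℝ :=
  ∑ s ∈ Finset.range (S+1), (2*(1/2:ℝ)^s) * Sel K ((2:ℝ)^s/((K:ℝ)+1)) x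

lemma Pf_nonneg (K S : ℕ) (x : ℝ) : 0 ≤ Pf K S x := by
  refine Finset.sum_nonneg (fun s _ => ?_)
  have : (0:ℝ) ≤ (2:ℝ)^s/((K:ℝ)+1) := by positivity
  have := Sel_nonneg K this x
  positivity

lemma Pf_add_int (K S : ℕ) (x : ℝ) (m : ℤ) : Pf K S (x + m) = Pf K S x := by
  unfold Pf
  exact Finset.sum_congr rfl (fun s _ => by rw [Sel_add_int])

lemma Pf_even (K S : ℕ) (x : ℝ) : Pf K S (-x) = Pf K S x := by
  unfold Pf
  exact Finset.sum_congr rfl (fun s _ => by rw [Sel_even])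

lemma Pf_ge_term (K S : ℕ) {s : ℕ} (hs : s ≤ S) (x : ℝ) :
    (2*(1/2:ℝ)^s) * Sel K ((2:ℝ)^s/((K:ℝ)+1)) x ≤ Pf K S x := by
  refine Finset.single_le_sum (f := fun s => (2*(1/2:ℝ)^s) * Sel K ((2:ℝ)^s/((K:ℝ)+1)) x)
    (fun i _ => ?_) (Finset.mem_range.mpr (Nat.lt_succ_of_le hs))
  have hi : (0:ℝ) ≤ (2:ℝ)^i/((K:ℝ)+1) := by positivity
  have := Sel_nonneg K hi x
  positivity

lemma rho_zero (K : ℕ) : rho K 0 = 1/2 := by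
  unfold rho
  simp [Hf_zero]

lemma abs_rho_le_Pf (K S : ℕ) (hS : Nat.floor (Real.logb 2 ((K:ℝ)+1)) + 1 ≤ S) (x : ℝ) :
    |rho K x| ≤ Pf K S x := by
  have hK : (0:ℝ) < (K:ℝ)+1 := by positivity
  have hK1 : (1:ℝ) ≤ (K:ℝ)+1 := by
    have : (0:ℝ) ≤ (K:ℝ) := Nat.cast_nonneg K
    linarith
  -- base selector gives Pf ≥ 2 near 0
  have base : ∀ v : ℝ, |v| ≤ 1/((K:ℝ)+1) → 2 ≤ Pf K S v := by
    intro v hv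
    have hδ1 : 1 ≤ ((K:ℝ)+1) * ((2:ℝ)^(0:ℕ)/((K:ℝ)+1)) := by
      rw [pow_zero]
      field_simp
      exact le_rfl
    have hsel := Sel_ge_one K hδ1 (by rw [pow_zero]; exact hv)
    have hterm := Pf_ge_term K S (Nat.zero_le S) v
    rw [pow_zero] at hterm hsel
    nlinarith [hterm, hsel]
  -- kernel case
  have kernel : ∀ v : ℝ, 0 < v → v ≤ 1/2 → |rho K v| ≤ Pf K S v := by
    intro v hv0 hv2
    have hv1 : v < 1 := by linarith
    rw [rho_eq_of_Ico K hv0.le hv1]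
    obtain ⟨hr0, hr2⟩ := rho_le_half K hv0.le hv2
    rw [abs_of_nonneg hr0]
    rcases le_or_gt v (1/((K:ℝ)+1)) with hc | hc
    · have := base v (by rw [abs_of_pos hv0]; exact hc)
      linarith
    · set z := 2*((K:ℝ)+1)*v with hz
      have hz2 : 2 < z := by
        rw [div_lt_iff₀ hK] at hc
        rw [hz]; nlinarith
      have hz0 : (0:ℝ) < z := by linarith
      have hlog0 : 0 ≤ Real.logb 2 z := Real.logb_nonneg (by norm_num) (by linarith)
      set m := Nat.floor (Real.logb 2 z) with hm
      have hA : (2:ℝ)^m ≤ z := by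
        have h1 : ((2:ℝ)^m : ℝ) = (2:ℝ)^((m:ℕ):ℝ) := (Real.rpow_natCast 2 m).symm
        rw [h1]
        calc (2:ℝ)^((m:ℕ):ℝ) ≤ (2:ℝ)^(Real.logb 2 z) :=
              Real.rpow_le_rpow_of_exponent_le (by norm_num) (Nat.floor_le hlog0)
        _ = z := Real.rpow_logb (by norm_num) (by norm_num) hz0
      have hB : z < (2:ℝ)^(m+1) := by
        have h1 : ((2:ℝ)^(m+1) : ℝ) = (2:ℝ)^(((m+1:ℕ)):ℝ) := (Real.rpow_natCast 2 (m+1)).symm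
        rw [h1]
        calc z = (2:ℝ)^(Real.logb 2 z) := (Real.rpow_logb (by norm_num) (by norm_num) hz0).symm
        _ < (2:ℝ)^(((m+1:ℕ)):ℝ) := by
              apply Real.rpow_lt_rpow_of_exponent_lt (by norm_num)
              have := Nat.lt_succ_floor (Real.logb 2 z)
              push_cast at this ⊢
              exact_mod_cast this
      have hmS : m + 1 ≤ S := by
        have hle : Real.logb 2 z ≤ Real.logb 2 ((K:ℝ)+1) := by
          apply Real.logb_le_logb_of_le (by norm_num : (1:ℝ) < 2) hz0
          rw [hz]; nlinarith
        have := Nat.floor_le_floor hle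
        omega
      have hvδ : |v| ≤ (2:ℝ)^(m+1)/((K:ℝ)+1) := by
        rw [abs_of_pos hv0, le_div_iff₀ hK]
        nlinarith [hB, hv0, hK]
      have hδ1 : 1 ≤ ((K:ℝ)+1) * ((2:ℝ)^(m+1)/((K:ℝ)+1)) := by
        rw [mul_div_cancel₀]
        · exact one_le_pow₀ (by norm_num)
        · positivity
      have hsel := Sel_ge_one K hδ1 hvδ
      have hterm := Pf_ge_term K S hmS v
      have hrv := rho_le_inv K hv0 hv2
      have hpow : (0:ℝ) < (1/2:ℝ)^(m+1) := by positivity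
      have hc1 : 1/(4*((K:ℝ)+1)*v) = 1/(2*z) := by
        rw [hz]; ring_nf
      have hc2 : 1/(2*z) ≤ (1/2:ℝ)^(m+1) := by
        have h2m : (0:ℝ) < (2:ℝ)^m := by positivity
        have : (1/2:ℝ)^(m+1) = 1/(2*(2:ℝ)^m) := by
          rw [div_pow, one_pow, pow_succ]
          ring
        rw [this]
        apply div_le_div_of_nonneg_left (by norm_num) (by positivity)
        nlinarith
      have hc3 : (1/2:ℝ)^(m+1) ≤ (2*(1/2:ℝ)^(m+1)) * Sel K ((2:ℝ)^(m+1)/((K:ℝ)+1)) v := by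
        nlinarith [hsel, hpow]
      linarith
  -- reduce general x to Int.fract x
  have hsplit : rho K x = rho K (Int.fract x) ∧ Pf K S x = Pf K S (Int.fract x) := by
    constructor
    · conv_lhs => rw [← Int.fract_add_floor x]
      rw [rho_add_int]
    · conv_lhs => rw [← Int.fract_add_floor x]
      rw [Pf_add_int]
  rw [hsplit.1, hsplit.2]
  set u := Int.fract x with hu
  have hu0 : 0 ≤ u := Int.fract_nonneg x
  have hu1 : u < 1 := Int.fract_lt_one x
  rcases eq_or_lt_of_le hu0 with h0 | h0
  · rw [← h0, rho_zero]
    have := base 0 (by rw [abs_zero]; positivity)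
    rw [abs_of_nonneg (by norm_num : (0:ℝ) ≤ 1/2)]
    linarith
  rcases le_or_gt u (1/2) with hhalf | hhalf
  · exact kernel u h0 hhalf
  · -- mirror
    set w := 1 - u with hw
    have hw0 : 0 < w := by rw [hw]; linarith
    have hw2 : w ≤ 1/2 := by rw [hw]; linarith
    have hrr : rho K u = - rho K w := by
      have e1 : rho K u = 1/2 - Hf K u := rho_eq_of_Ico K hu0 hu1
      have e2 : rho K w = 1/2 - Hf K w := rho_eq_of_Ico K hw0.le (by linarith)
      have e3 : Hf K u = 1 - Hf K w := by
        have : u = -w + ((1:ℤ):ℝ) := by rw [hw]; push_cast; ring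
        rw [this, Hf_add_int, Hf_neg]
        push_cast
        ring
      rw [e1, e2, e3]
      ring
    have hPP : Pf K S u = Pf K S w := by
      have : u = -w + ((1:ℤ):ℝ) := by rw [hw]; push_cast; ring
      rw [this, Pf_add_int, Pf_even]
    rw [hrr, abs_neg, hPP]
    exact kernel w hw0 hw2

lemma fract_sub_of_Ico {y c : ℝ} (hy0 : 0 ≤ y) (hy1 : y < 1) (hc0 : 0 ≤ c) (hc1 : c ≤ 1) :
    Int.fract (y - c) = y - c + (if y < c then 1 else 0) := by
  by_cases h : y < c
  · rw [if_pos h]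
    have : y - c = (y - c + 1) + ((-1 : ℤ):ℝ) := by push_cast; ring
    rw [this, Int.fract_add_intCast, Int.fract_eq_self.mpr ⟨by linarith, by linarith⟩]
    push_cast
    ring
  · rw [if_neg h]
    push_neg at h
    rw [Int.fract_eq_self.mpr ⟨by linarith, by linarith⟩, add_zero]

lemma indicator_upper (K S : ℕ) (hS : Nat.floor (Real.logb 2 ((K:ℝ)+1)) + 1 ≤ S)
    {y a b : ℝ} (hy0 : 0 ≤ y) (hy1 : y < 1) (ha : 0 ≤ a) (hab : a ≤ b) (hb : b ≤ 1) :
    (if a ≤ y ∧ y ≤ b then (1:ℝ) else 0) ≤ (b-a)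
      + (((y-b) - Hf K (y-b)) - ((y-a) - Hf K (y-a)))
      + (Pf K S (y-b) + Pf K S (y-a)) := by
  have hfa := fract_sub_of_Ico hy0 hy1 ha (le_trans hab hb)
  have hfb := fract_sub_of_Ico hy0 hy1 (le_trans ha hab) hb
  have eA : (y - a) - Hf K (y-a) = rho K (y-a) + Int.fract (y-a) - 1/2 := by
    unfold rho; ring
  have eB : (y - b) - Hf K (y-b) = rho K (y-b) + Int.fract (y-b) - 1/2 := by
    unfold rho; ring
  have hA := abs_le.mp (abs_rho_le_Pf K S hS (y-a))
  have hB := abs_le.mp (abs_rho_le_Pf K S hS (y-b))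
  by_cases hcond : a ≤ y ∧ y ≤ b
  · obtain ⟨hca, hcb⟩ := hcond
    rw [if_pos ⟨hca, hcb⟩, eA, eB, hfa, hfb, if_neg (not_lt.mpr hca)]
    rcases lt_or_eq_of_le hcb with hlt | heq
    · rw [if_pos hlt]
      linarith [hA.1, hA.2, hB.1, hB.2]
    · rw [if_neg (by rw [heq]; exact lt_irrefl b)]
      have hz : y - b = 0 := by rw [heq]; ring
      have hr : rho K (y-b) = 1/2 := by rw [hz, rho_zero]
      linarith [hA.1, hA.2, hB.1, hB.2, heq.le, heq.ge, hr]
  · rw [if_neg hcond, eA, eB, hfa, hfb]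
    rcases not_and_or.mp hcond with h | h
    · have h' : y < a := not_le.mp h
      have h'' : y < b := lt_of_lt_of_le h' hab
      rw [if_pos h', if_pos h'']
      linarith [hA.1, hA.2, hB.1, hB.2]
    · have h' : b < y := not_le.mp h
      rw [if_neg (not_lt.mpr h'.le), if_neg (not_lt.mpr (le_trans hab h'.le))]
      linarith [hA.1, hA.2, hB.1, hB.2]

lemma indicator_lower (K S : ℕ) (hS : Nat.floor (Real.logb 2 ((K:ℝ)+1)) + 1 ≤ S)
    {y a b : ℝ} (hy0 : 0 ≤ y) (hy1 : y < 1) (ha : 0 ≤ a) (hab : a ≤ b) (hb : b ≤ 1) :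
    (b-a) + (((y-b) - Hf K (y-b)) - ((y-a) - Hf K (y-a)))
      - (Pf K S (y-b) + Pf K S (y-a))
      ≤ (if a ≤ y ∧ y ≤ b then (1:ℝ) else 0) := by
  have hfa := fract_sub_of_Ico hy0 hy1 ha (le_trans hab hb)
  have hfb := fract_sub_of_Ico hy0 hy1 (le_trans ha hab) hb
  have eA : (y - a) - Hf K (y-a) = rho K (y-a) + Int.fract (y-a) - 1/2 := by
    unfold rho; ring
  have eB : (y - b) - Hf K (y-b) = rho K (y-b) + Int.fract (y-b) - 1/2 := by
    unfold rho; ring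
  have hA := abs_le.mp (abs_rho_le_Pf K S hS (y-a))
  have hB := abs_le.mp (abs_rho_le_Pf K S hS (y-b))
  by_cases hcond : a ≤ y ∧ y ≤ b
  · obtain ⟨hca, hcb⟩ := hcond
    rw [if_pos ⟨hca, hcb⟩, eA, eB, hfa, hfb, if_neg (not_lt.mpr hca)]
    rcases lt_or_eq_of_le hcb with hlt | heq
    · rw [if_pos hlt]
      linarith [hA.1, hA.2, hB.1, hB.2]
    · rw [if_neg (by rw [heq]; exact lt_irrefl b)]
      linarith [hA.1, hA.2, hB.1, hB.2]
  · rw [if_neg hcond, eA, eB, hfa, hfb]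
    rcases not_and_or.mp hcond with h | h
    · have h' : y < a := not_le.mp h
      have h'' : y < b := lt_of_lt_of_le h' hab
      rw [if_pos h', if_pos h'']
      linarith [hA.1, hA.2, hB.1, hB.2]
    · have h' : b < y := not_le.mp h
      rw [if_neg (not_lt.mpr h'.le), if_neg (not_lt.mpr (le_trans hab h'.le))]
      linarith [hA.1, hA.2, hB.1, hB.2]



lemma shapiro_coeff (p : ℕ) (hp : 0 < p) (r : ℕ) : ∃ f : ℕ → ℕ → ℕ, ∀ (ξ : ℂ) (i : ℕ),
    shapiroQ p ξ i r
      = ∑ j ∈ Finset.range (p^r), Polynomial.C (ξ ^ (f i j)) * Polynomial.X ^ j := by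
  induction r with
  | zero => exact ⟨fun _ _ => 0, fun ξ i => by simp [shapiroQ]⟩
  | succ r ih =>
    obtain ⟨f, hf⟩ := ih
    have hpr : 0 < p^r := Nat.pow_pos hp
    refine ⟨fun i j => i * (j / p^r) + f (j / p^r) (j % p^r), fun ξ i => ?_⟩
    rw [shapiroQ]
    calc ∑ k ∈ Finset.range p, Polynomial.C (ξ^(i*k)) * Polynomial.X^(k*p^r) * shapiroQ p ξ k r
        = ∑ k ∈ Finset.range p, ∑ j ∈ Finset.range (p^r),
            Polynomial.C (ξ^(i*k + f k j)) * Polynomial.X^(k*p^r + j) := by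
          refine Finset.sum_congr rfl (fun k _ => ?_)
          rw [hf ξ k, Finset.mul_sum]
          refine Finset.sum_congr rfl (fun j _ => ?_)
          rw [pow_add ξ, pow_add Polynomial.X, map_mul]
          ring
      _ = ∑ x ∈ Finset.range p ×ˢ Finset.range (p^r),
            Polynomial.C (ξ^(i*x.1 + f x.1 x.2)) * Polynomial.X^(x.1*p^r + x.2) := by
          rw [Finset.sum_product]
      _ = ∑ j ∈ Finset.range (p^(r+1)),
            Polynomial.C (ξ^(i*(j/p^r) + f (j/p^r) (j % p^r))) * Polynomial.X^j := by
          refine Finset.sum_nbij' (fun x => x.1 * p^r + x.2) (fun n => (n / p^r, n % p^r))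
            ?_ ?_ ?_ ?_ ?_
          · rintro ⟨k, j⟩ hkj
            rw [Finset.mem_product, Finset.mem_range, Finset.mem_range] at hkj
            rw [Finset.mem_range]
            obtain ⟨hk, hj⟩ := hkj
            calc k * p^r + j < k * p^r + p^r := by omega
            _ = (k+1) * p^r := by ring
            _ ≤ p * p^r := Nat.mul_le_mul_right _ (by omega)
            _ = p^(r+1) := by rw [pow_succ]; ring
          · intro n hn
            rw [Finset.mem_range] at hn
            rw [Finset.mem_product, Finset.mem_range, Finset.mem_range]
            constructor
            · rw [Nat.div_lt_iff_lt_mul hpr]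
              calc n < p^(r+1) := hn
              _ = p * p^r := by rw [pow_succ]; ring
            · exact Nat.mod_lt _ hpr
          · rintro ⟨k, j⟩ hkj
            rw [Finset.mem_product, Finset.mem_range, Finset.mem_range] at hkj
            obtain ⟨hk, hj⟩ := hkj
            have h1 : (k * p^r + j) / p^r = k := by
              rw [mul_comm k (p^r), Nat.mul_add_div hpr, Nat.div_eq_of_lt hj, add_zero]
            have h2 : (k * p^r + j) % p^r = j := by
              rw [mul_comm k (p^r), Nat.mul_add_mod, Nat.mod_eq_of_lt hj]
            simp [h1, h2]
          · intro n _
            simp only []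
            rw [mul_comm, Nat.div_add_mod]
          · rintro ⟨k, j⟩ hkj
            rw [Finset.mem_product, Finset.mem_range, Finset.mem_range] at hkj
            obtain ⟨hk, hj⟩ := hkj
            have h1 : (k * p^r + j) / p^r = k := by
              rw [mul_comm k (p^r), Nat.mul_add_div hpr, Nat.div_eq_of_lt hj, add_zero]
            have h2 : (k * p^r + j) % p^r = j := by
              rw [mul_comm k (p^r), Nat.mul_add_mod, Nat.mod_eq_of_lt hj]
            rw [h1, h2]

lemma xi_conj_mul {p : ℕ} (hp : 0 < p) {ξ : ℂ} (hξ : IsPrimitiveRoot ξ p) :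
    ξ * (starRingEnd ℂ) ξ = 1 := by
  have habs : ‖ξ‖ = 1 := by
    have := Complex.norm_eq_one_of_pow_eq_one hξ.pow_eq_one hp.ne'
    simpa using this
  rw [Complex.mul_conj]
  rw [Complex.normSq_eq_norm_sq, habs]
  norm_num

lemma orth {p : ℕ} (hp : 0 < p) {ξ : ℂ} (hξ : IsPrimitiveRoot ξ p) {k k' : ℕ}
    (hk : k < p) (hk' : k' < p) :
    ∑ i ∈ Finset.range p, (ξ^(i*k) * (starRingEnd ℂ) (ξ^(i*k')))
      = if k = k' then (p:ℂ) else 0 := by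
  have hcm := xi_conj_mul hp hξ
  have hmul : ∀ i : ℕ, ξ^(i*k) * (starRingEnd ℂ) (ξ^(i*k'))
      = (ξ^k * (starRingEnd ℂ) (ξ^k'))^i := by
    intro i
    rw [mul_pow, mul_comm i k, pow_mul, ← map_pow, mul_comm i k', pow_mul]
  rw [Finset.sum_congr rfl (fun i _ => hmul i)]
  by_cases h : k = k'
  · subst h
    have hone : ξ^k * (starRingEnd ℂ) (ξ^k) = 1 := by
      rw [map_pow, ← mul_pow, hcm, one_pow]
    rw [if_pos rfl]
    calc ∑ i ∈ Finset.range p, (ξ^k * (starRingEnd ℂ) (ξ^k))^i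
        = ∑ _i ∈ Finset.range p, (1:ℂ) :=
          Finset.sum_congr rfl (fun i _ => by rw [hone, one_pow])
    _ = (p:ℂ) := by simp
  · have hμp : (ξ^k * (starRingEnd ℂ) (ξ^k'))^p = 1 := by
      rw [mul_pow, ← pow_mul, mul_comm k p, pow_mul, hξ.pow_eq_one, one_pow, one_mul,
        ← map_pow, ← pow_mul, mul_comm k' p, pow_mul, hξ.pow_eq_one, one_pow, map_one]
    have hμ1 : ξ^k * (starRingEnd ℂ) (ξ^k') ≠ 1 := by
      intro he
      apply h
      have hinv : (starRingEnd ℂ) (ξ^k') * ξ^k' = 1 := by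
        calc (starRingEnd ℂ) (ξ^k') * ξ^k' = (ξ * (starRingEnd ℂ) ξ)^k' := by
              rw [mul_pow, map_pow]; ring
        _ = 1 := by rw [hcm, one_pow]
      have : ξ^k = ξ^k' := by
        calc ξ^k = ξ^k * ((starRingEnd ℂ) (ξ^k') * ξ^k') := by rw [hinv, mul_one]
        _ = (ξ^k * (starRingEnd ℂ) (ξ^k')) * ξ^k' := by ring
        _ = ξ^k' := by rw [he, one_mul]
      exact hξ.pow_inj hk hk' this
    rw [if_neg h, geom_sum_eq hμ1, hμp]
    simp

lemma parseval {p : ℕ} (hp : 0 < p) {ξ : ℂ} (hξ : IsPrimitiveRoot ξ p) {z : ℂ}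
    (hz : z * (starRingEnd ℂ) z = 1) (r : ℕ) :
    ∑ i ∈ Finset.range p, (Polynomial.eval z (shapiroQ p ξ i r)
        * (starRingEnd ℂ) (Polynomial.eval z (shapiroQ p ξ i r))) = (p:ℂ)^(r+1) := by
  induction r with
  | zero =>
    simp only [shapiroQ]
    simp
  | succ r ih =>
    have heval : ∀ i : ℕ, Polynomial.eval z (shapiroQ p ξ i (r+1))
        = ∑ k ∈ Finset.range p, ξ^(i*k) * (z^(k*p^r) * Polynomial.eval z (shapiroQ p ξ k r)) := by
      intro i
      rw [shapiroQ, Polynomial.eval_finset_sum]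
      refine Finset.sum_congr rfl (fun k _ => ?_)
      rw [Polynomial.eval_mul, Polynomial.eval_mul, Polynomial.eval_C, Polynomial.eval_pow,
        Polynomial.eval_X]
      ring
    set w : ℕ → ℂ := fun k => z^(k*p^r) * Polynomial.eval z (shapiroQ p ξ k r) with hw
    calc ∑ i ∈ Finset.range p, (Polynomial.eval z (shapiroQ p ξ i (r+1))
            * (starRingEnd ℂ) (Polynomial.eval z (shapiroQ p ξ i (r+1))))
        = ∑ i ∈ Finset.range p, ∑ k ∈ Finset.range p, ∑ k' ∈ Finset.range p,
            ((ξ^(i*k) * (starRingEnd ℂ) (ξ^(i*k'))) * (w k * (starRingEnd ℂ) (w k'))) := by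
          refine Finset.sum_congr rfl (fun i _ => ?_)
          rw [heval i, map_sum, Finset.sum_mul_sum]
          refine Finset.sum_congr rfl (fun k _ => ?_)
          refine Finset.sum_congr rfl (fun k' _ => ?_)
          rw [map_mul]
          ring
      _ = ∑ k ∈ Finset.range p, ∑ k' ∈ Finset.range p,
            (∑ i ∈ Finset.range p, (ξ^(i*k) * (starRingEnd ℂ) (ξ^(i*k'))))
              * (w k * (starRingEnd ℂ) (w k')) := by
          rw [Finset.sum_comm]
          refine Finset.sum_congr rfl (fun k _ => ?_)
          rw [Finset.sum_comm]
          refine Finset.sum_congr rfl (fun k' _ => ?_)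
          rw [Finset.sum_mul]
      _ = ∑ k ∈ Finset.range p, (p:ℂ) * (w k * (starRingEnd ℂ) (w k)) := by
          refine Finset.sum_congr rfl (fun k hk => ?_)
          rw [Finset.sum_eq_single k]
          · rw [orth hp hξ (Finset.mem_range.mp hk) (Finset.mem_range.mp hk), if_pos rfl]
          · intro k' hk' hne
            rw [orth hp hξ (Finset.mem_range.mp hk) (Finset.mem_range.mp hk'),
              if_neg (fun he => hne he.symm), zero_mul]
          · intro hk'
            exact absurd hk hk'
      _ = ∑ k ∈ Finset.range p, (p:ℂ) * (Polynomial.eval z (shapiroQ p ξ k r)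
            * (starRingEnd ℂ) (Polynomial.eval z (shapiroQ p ξ k r))) := by
          refine Finset.sum_congr rfl (fun k _ => ?_)
          have hz1 : (z * (starRingEnd ℂ) z)^(k*p^r) = 1 := by rw [hz, one_pow]
          simp only [hw]
          rw [map_mul, map_pow]
          calc (p:ℂ) * (z^(k*p^r) * Polynomial.eval z (shapiroQ p ξ k r)
                * (((starRingEnd ℂ) z)^(k*p^r)
                  * (starRingEnd ℂ) (Polynomial.eval z (shapiroQ p ξ k r))))
              = (p:ℂ) * ((z * (starRingEnd ℂ) z)^(k*p^r)
                  * (Polynomial.eval z (shapiroQ p ξ k r)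
                    * (starRingEnd ℂ) (Polynomial.eval z (shapiroQ p ξ k r)))) := by
                rw [mul_pow]; ring
            _ = (p:ℂ) * (Polynomial.eval z (shapiroQ p ξ k r)
                  * (starRingEnd ℂ) (Polynomial.eval z (shapiroQ p ξ k r))) := by
                rw [hz1, one_mul]
      _ = (p:ℂ) * ((p:ℂ)^(r+1)) := by rw [← Finset.mul_sum, ih]
      _ = (p:ℂ)^(r+1+1) := by ring


lemma harmonic_bound (K : ℕ) : ∑ h ∈ Finset.Icc 1 K, (1:ℝ)/h ≤ 1 + Real.log K := by
  rcases Nat.eq_zero_or_pos K with h0 | hpos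
  · subst h0
    simp
  · have h1 : ∑ h ∈ Finset.Icc 1 K, (1:ℝ)/h = ((harmonic K : ℚ) : ℝ) := by
      rw [harmonic]
      push_cast
      rw [← Finset.Ico_add_one_right_eq_Icc, Finset.sum_Ico_eq_sum_range]
      refine Finset.sum_congr (by norm_num) (fun i _ => by push_cast; ring)
    rw [h1]
    have := harmonic_le_one_add_log K
    exact_mod_cast this

lemma coef_le (K h : ℕ) (hh1 : 1 ≤ h) (hh2 : h ≤ K) :
    |((1 - (h:ℝ)/(K+1))/(π*h))| ≤ 1/(h:ℝ) := by
  have hhr : (1:ℝ) ≤ (h:ℝ) := by exact_mod_cast hh1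
  have hKr : (h:ℝ) ≤ (K:ℝ) := by exact_mod_cast hh2
  have hπ := Real.pi_gt_three
  have hβ : (0:ℝ) ≤ 1 - (h:ℝ)/(K+1) := by
    have hK0 : (0:ℝ) < (K:ℝ)+1 := by positivity
    rw [sub_nonneg, div_le_one hK0]
    linarith
  rw [abs_of_nonneg (by positivity)]
  rw [div_le_div_iff₀ (by positivity) (by positivity)]
  have hq : (0:ℝ) ≤ (h:ℝ)/(K+1) := by positivity
  nlinarith

lemma sum_G_bound (K : ℕ) {n : ℕ} (x : Fin n → ℝ) {B2 : ℝ}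
    (hES : ∀ (θ : ℝ) (h : ℕ), 1 ≤ h → h ≤ K →
      |∑ j : Fin n, Real.sin (2*π*h*(x j - θ))| ≤ B2) (c : ℝ) :
    |∑ j : Fin n, ((x j - c) - Hf K (x j - c))|
      ≤ B2 * ∑ h ∈ Finset.Icc 1 K, (1:ℝ)/h := by
  have hid : ∑ j : Fin n, ((x j - c) - Hf K (x j - c))
      = -∑ h ∈ Finset.Icc 1 K, ((1 - (h:ℝ)/(K+1))/(π*h))
          * ∑ j : Fin n, Real.sin (2*π*h*(x j - c)) := by
    have e1 : ∀ j : Fin n, (x j - c) - Hf K (x j - c)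
        = ∑ h ∈ Finset.Icc 1 K,
            -(((1 - (h:ℝ)/(K+1))/(π*h)) * Real.sin (2*π*h*(x j - c))) := by
      intro j
      unfold Hf
      rw [Finset.sum_neg_distrib]
      ring
    rw [Finset.sum_congr rfl (fun j _ => e1 j), Finset.sum_comm, ← Finset.sum_neg_distrib]
    refine Finset.sum_congr rfl (fun h _ => ?_)
    rw [Finset.sum_neg_distrib, ← Finset.mul_sum]
  rw [hid, abs_neg]
  calc |∑ h ∈ Finset.Icc 1 K, ((1 - (h:ℝ)/(K+1))/(π*h))
          * ∑ j : Fin n, Real.sin (2*π*h*(x j - c))|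
      ≤ ∑ h ∈ Finset.Icc 1 K, |((1 - (h:ℝ)/(K+1))/(π*h))
          * ∑ j : Fin n, Real.sin (2*π*h*(x j - c))| := Finset.abs_sum_le_sum_abs _ _
    _ ≤ ∑ h ∈ Finset.Icc 1 K, (1:ℝ)/h * B2 := by
        refine Finset.sum_le_sum (fun h hh => ?_)
        obtain ⟨hh1, hh2⟩ := Finset.mem_Icc.mp hh
        rw [abs_mul]
        exact mul_le_mul (coef_le K h hh1 hh2) (hES c h hh1 hh2) (abs_nonneg _) (by positivity)
    _ = B2 * ∑ h ∈ Finset.Icc 1 K, (1:ℝ)/h := by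
        rw [Finset.mul_sum]
        exact Finset.sum_congr rfl (fun h _ => by ring)

lemma sum_Sel_bound (K : ℕ) {n : ℕ} (x : Fin n → ℝ) {B2 : ℝ}
    (hES : ∀ (θ : ℝ) (h : ℕ), 1 ≤ h → h ≤ K →
      |∑ j : Fin n, Real.sin (2*π*h*(x j - θ))| ≤ B2) (c : ℝ) (δ : ℝ) :
    ∑ j : Fin n, Sel K δ (x j - c)
      ≤ (n:ℝ)*(8*δ) + 4*B2*(∑ h ∈ Finset.Icc 1 K, (1:ℝ)/h) := by
  have e1 : ∀ j : Fin n, Sel K δ (x j - c)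
      = 8*δ + 2*∑ h ∈ Finset.Icc 1 K, ((1 - (h:ℝ)/(K+1))/(π*h))
          * (Real.sin (2*π*h*(x j - (c - 2*δ))) - Real.sin (2*π*h*(x j - (c + 2*δ)))) := by
    intro j
    have hsub : ∑ h ∈ Finset.Icc 1 K, ((1 - (h:ℝ)/(K+1))/(π*h))
          * (Real.sin (2*π*h*(x j - (c - 2*δ))) - Real.sin (2*π*h*(x j - (c + 2*δ))))
        = (∑ h ∈ Finset.Icc 1 K, ((1 - (h:ℝ)/(K+1))/(π*h))
            * Real.sin (2*π*h*(x j - (c - 2*δ))))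
          - ∑ h ∈ Finset.Icc 1 K, ((1 - (h:ℝ)/(K+1))/(π*h))
            * Real.sin (2*π*h*(x j - (c + 2*δ))) := by
      rw [← Finset.sum_sub_distrib]
      exact Finset.sum_congr rfl (fun h _ => by ring)
    have ea : x j - c + 2*δ = x j - (c - 2*δ) := by ring
    have eb : x j - c - 2*δ = x j - (c + 2*δ) := by ring
    unfold Sel Hf
    rw [ea, eb, hsub]
    ring
  have hid : ∑ j : Fin n, Sel K δ (x j - c)
      = (n:ℝ)*(8*δ) + 2*∑ h ∈ Finset.Icc 1 K, ((1 - (h:ℝ)/(K+1))/(π*h))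
          * ((∑ j : Fin n, Real.sin (2*π*h*(x j - (c - 2*δ))))
            - ∑ j : Fin n, Real.sin (2*π*h*(x j - (c + 2*δ)))) := by
    rw [Finset.sum_congr rfl (fun j _ => e1 j), Finset.sum_add_distrib, Finset.sum_const,
      Finset.card_univ, Fintype.card_fin]
    congr 1
    · rw [nsmul_eq_mul]
    · rw [← Finset.mul_sum]
      congr 1
      rw [Finset.sum_comm]
      refine Finset.sum_congr rfl (fun h _ => ?_)
      rw [← Finset.mul_sum, Finset.sum_sub_distrib]
  rw [hid]
  set Z := ∑ h ∈ Finset.Icc 1 K, ((1 - (h:ℝ)/(K+1))/(π*h))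
      * ((∑ j : Fin n, Real.sin (2*π*h*(x j - (c - 2*δ))))
        - ∑ j : Fin n, Real.sin (2*π*h*(x j - (c + 2*δ)))) with hZdef
  have hZ : |Z| ≤ ∑ h ∈ Finset.Icc 1 K, (1:ℝ)/h * (2*B2) := by
    calc |Z| ≤ ∑ h ∈ Finset.Icc 1 K, |((1 - (h:ℝ)/(K+1))/(π*h))
          * ((∑ j : Fin n, Real.sin (2*π*h*(x j - (c - 2*δ))))
            - ∑ j : Fin n, Real.sin (2*π*h*(x j - (c + 2*δ))))| :=
        Finset.abs_sum_le_sum_abs _ _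
      _ ≤ ∑ h ∈ Finset.Icc 1 K, (1:ℝ)/h * (2*B2) := by
        refine Finset.sum_le_sum (fun h hh => ?_)
        obtain ⟨hh1, hh2⟩ := Finset.mem_Icc.mp hh
        rw [abs_mul]
        have hd : |(∑ j : Fin n, Real.sin (2*π*h*(x j - (c - 2*δ))))
            - ∑ j : Fin n, Real.sin (2*π*h*(x j - (c + 2*δ)))| ≤ 2*B2 := by
          have t1 := hES (c - 2*δ) h hh1 hh2
          have t2 := hES (c + 2*δ) h hh1 hh2
          calc |(∑ j : Fin n, Real.sin (2*π*h*(x j - (c - 2*δ))))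
              - ∑ j : Fin n, Real.sin (2*π*h*(x j - (c + 2*δ)))|
              ≤ |∑ j : Fin n, Real.sin (2*π*h*(x j - (c - 2*δ)))|
                + |∑ j : Fin n, Real.sin (2*π*h*(x j - (c + 2*δ)))| := abs_sub _ _
            _ ≤ 2*B2 := by linarith
        exact mul_le_mul (coef_le K h hh1 hh2) hd (abs_nonneg _) (by positivity)
  have hfin : ∑ h ∈ Finset.Icc 1 K, (1:ℝ)/h * (2*B2)
      = 2*B2*(∑ h ∈ Finset.Icc 1 K, (1:ℝ)/h) := by
    rw [Finset.mul_sum]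
    exact Finset.sum_congr rfl (fun h _ => by ring)
  rw [hfin] at hZ
  have := le_abs_self Z
  linarith

lemma sum_P_bound (K S : ℕ) {n : ℕ} (x : Fin n → ℝ) {B2 : ℝ} (hB2 : 0 ≤ B2)
    (hES : ∀ (θ : ℝ) (h : ℕ), 1 ≤ h → h ≤ K →
      |∑ j : Fin n, Real.sin (2*π*h*(x j - θ))| ≤ B2) (c : ℝ) :
    ∑ j : Fin n, Pf K S (x j - c)
      ≤ (n:ℝ)*(16*((S:ℝ)+1)/((K:ℝ)+1))
        + 16*B2*(∑ h ∈ Finset.Icc 1 K, (1:ℝ)/h) := by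
  have hKpos : (0:ℝ) < (K:ℝ)+1 := by positivity
  have hswap : ∑ j : Fin n, Pf K S (x j - c)
      = ∑ s' ∈ Finset.range (S+1), (2*(1/2:ℝ)^s')
          * ∑ j : Fin n, Sel K ((2:ℝ)^s'/((K:ℝ)+1)) (x j - c) := by
    unfold Pf
    rw [Finset.sum_comm]
    exact Finset.sum_congr rfl (fun s' _ => by rw [← Finset.mul_sum])
  rw [hswap]
  have hHK : (0:ℝ) ≤ ∑ h ∈ Finset.Icc 1 K, (1:ℝ)/h :=
    Finset.sum_nonneg (fun h _ => by positivity)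
  calc ∑ s' ∈ Finset.range (S+1), (2*(1/2:ℝ)^s')
          * ∑ j : Fin n, Sel K ((2:ℝ)^s'/((K:ℝ)+1)) (x j - c)
      ≤ ∑ s' ∈ Finset.range (S+1), (2*(1/2:ℝ)^s')
          * ((n:ℝ)*(8*((2:ℝ)^s'/((K:ℝ)+1)))
            + 4*B2*(∑ h ∈ Finset.Icc 1 K, (1:ℝ)/h)) := by
        refine Finset.sum_le_sum (fun s' _ => ?_)
        exact mul_le_mul_of_nonneg_left (sum_Sel_bound K x hES c _) (by positivity)
    _ = ((S:ℝ)+1) * ((n:ℝ)*(16/((K:ℝ)+1)))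
        + (∑ s' ∈ Finset.range (S+1), 2*(1/2:ℝ)^s')
          * (4*B2*(∑ h ∈ Finset.Icc 1 K, (1:ℝ)/h)) := by
        have hterm : ∀ s' : ℕ, (2*(1/2:ℝ)^s') * ((n:ℝ)*(8*((2:ℝ)^s'/((K:ℝ)+1)))
              + 4*B2*(∑ h ∈ Finset.Icc 1 K, (1:ℝ)/h))
            = (n:ℝ)*(16/((K:ℝ)+1))
              + (2*(1/2:ℝ)^s') * (4*B2*(∑ h ∈ Finset.Icc 1 K, (1:ℝ)/h)) := by
          intro s'
          have hpow : (1/2:ℝ)^s' * (2:ℝ)^s' = 1 := by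
            rw [← mul_pow]
            norm_num
          field_simp
          nlinarith [hpow]
        rw [Finset.sum_congr rfl (fun s' _ => hterm s'), Finset.sum_add_distrib,
          Finset.sum_const, Finset.card_range, nsmul_eq_mul, Finset.sum_mul]
        push_cast
        ring
    _ ≤ (n:ℝ)*(16*((S:ℝ)+1)/((K:ℝ)+1))
        + 16*B2*(∑ h ∈ Finset.Icc 1 K, (1:ℝ)/h) := by
        have hgeo : ∑ s' ∈ Finset.range (S+1), 2*(1/2:ℝ)^s' ≤ 4 := by
          rw [← Finset.mul_sum, geom_sum_eq (by norm_num : (1/2:ℝ) ≠ 1)]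
          have h0 : (0:ℝ) ≤ (1/2:ℝ)^(S+1) := by positivity
          have he : ((1/2:ℝ)^(S+1) - 1)/((1/2:ℝ) - 1) = 2*(1 - (1/2:ℝ)^(S+1)) := by ring
          rw [he]
          nlinarith
        have hgeo0 : (0:ℝ) ≤ ∑ s' ∈ Finset.range (S+1), 2*(1/2:ℝ)^s' :=
          Finset.sum_nonneg (fun s' _ => by positivity)
        have hmain : ((S:ℝ)+1) * ((n:ℝ)*(16/((K:ℝ)+1)))
            = (n:ℝ)*(16*((S:ℝ)+1)/((K:ℝ)+1)) := by
          field_simp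
        have hlast : (∑ s' ∈ Finset.range (S+1), 2*(1/2:ℝ)^s')
            * (4*B2*(∑ h ∈ Finset.Icc 1 K, (1:ℝ)/h))
            ≤ 4 * (4*B2*(∑ h ∈ Finset.Icc 1 K, (1:ℝ)/h)) :=
          mul_le_mul_of_nonneg_right hgeo (by positivity)
        nlinarith [hmain.le, hmain.ge, hlast]

lemma eval_bound {p : ℕ} (hp : 0 < p) {ξ : ℂ} (hξ : IsPrimitiveRoot ξ p) {z : ℂ}
    (hz : z * (starRingEnd ℂ) z = 1) :
    ‖Polynomial.eval z (shapiroQ p ξ 0 3)‖ ≤ (p:ℝ)^2 := by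
  have hpar := parseval hp hξ hz 3
  have h1 : ∀ i : ℕ, Polynomial.eval z (shapiroQ p ξ i 3)
      * (starRingEnd ℂ) (Polynomial.eval z (shapiroQ p ξ i 3))
      = ((Complex.normSq (Polynomial.eval z (shapiroQ p ξ i 3)) : ℝ) : ℂ) :=
    fun i => Complex.mul_conj _
  rw [Finset.sum_congr rfl (fun i _ => h1 i)] at hpar
  have hreal : ∑ i ∈ Finset.range p, Complex.normSq (Polynomial.eval z (shapiroQ p ξ i 3))
      = (p:ℝ)^4 := by
    norm_num at hpar
    exact_mod_cast hpar
  have hterm : Complex.normSq (Polynomial.eval z (shapiroQ p ξ 0 3)) ≤ (p:ℝ)^4 := by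
    rw [← hreal]
    exact Finset.single_le_sum
      (f := fun i => Complex.normSq (Polynomial.eval z (shapiroQ p ξ i 3)))
      (fun i _ => Complex.normSq_nonneg _) (Finset.mem_range.mpr hp)
  rw [Complex.norm_def]
  calc Real.sqrt (Complex.normSq (Polynomial.eval z (shapiroQ p ξ 0 3)))
      ≤ Real.sqrt ((p:ℝ)^4) := Real.sqrt_le_sqrt hterm
    _ = (p:ℝ)^2 := by
        rw [show ((p:ℝ)^4) = ((p:ℝ)^2)^2 by ring, Real.sqrt_sq (by positivity)]


lemma norm_one_exp (θ : ℝ) :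
    Complex.exp ((θ:ℂ) * Complex.I) * (starRingEnd ℂ) (Complex.exp ((θ:ℂ) * Complex.I)) = 1 := by
  rw [Complex.mul_conj]
  have h1 : ‖Complex.exp ((θ:ℂ) * Complex.I)‖ = 1 := Complex.norm_exp_ofReal_mul_I θ
  rw [Complex.normSq_eq_norm_sq, h1]
  norm_num

lemma coeff_extract (p : ℕ) (ξ : ℂ) (s : Fin (p^3) → ℝ) (f : ℕ → ℕ → ℕ)
    (hfQ : ∀ (ξ' : ℂ) (i : ℕ), shapiroQ p ξ' i 3
      = ∑ j ∈ Finset.range (p^3), Polynomial.C (ξ' ^ (f i j)) * Polynomial.X ^ j)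
    (hQ : shapiroQ p ξ 0 3 = ∑ j : Fin (p^3),
      Polynomial.C (Complex.exp (2 * ↑π * ↑(s j) * Complex.I)) * Polynomial.X ^ (j:ℕ)) :
    ∀ j : Fin (p^3), Complex.exp (2 * ↑π * ↑(s j) * Complex.I) = ξ ^ (f 0 (j:ℕ)) := by
  intro j0
  have h1 : (shapiroQ p ξ 0 3).coeff (j0:ℕ) = ξ ^ (f 0 (j0:ℕ)) := by
    rw [hfQ ξ 0, Polynomial.finset_sum_coeff]
    rw [Finset.sum_congr rfl (fun j _ => Polynomial.coeff_C_mul_X_pow (ξ ^ (f 0 j)) j (j0:ℕ))]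
    rw [Finset.sum_ite_eq (Finset.range (p^3)) ((j0:ℕ)) (fun j => ξ ^ (f 0 j))]
    rw [if_pos (Finset.mem_range.mpr j0.isLt)]
  have h2 : (shapiroQ p ξ 0 3).coeff (j0:ℕ)
      = Complex.exp (2 * ↑π * ↑(s j0) * Complex.I) := by
    rw [hQ, Polynomial.finset_sum_coeff]
    rw [Finset.sum_congr rfl (fun (j : Fin (p^3)) _ =>
      Polynomial.coeff_C_mul_X_pow (Complex.exp (2 * ↑π * ↑(s j) * Complex.I)) (j:ℕ) (j0:ℕ))]
    rw [Finset.sum_eq_single j0]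
    · rw [if_pos rfl]
    · intro j _ hne
      exact if_neg (fun he => hne (Fin.val_injective he.symm))
    · intro hj0
      exact absurd (Finset.mem_univ j0) hj0
  rw [← h1, h2]

lemma ES_main (p : ℕ) (hp : p.Prime) (ξ : ℂ) (hξ : IsPrimitiveRoot ξ p)
    (s : Fin (p^3) → ℝ) (f : ℕ → ℕ → ℕ)
    (hfQ : ∀ (ξ' : ℂ) (i : ℕ), shapiroQ p ξ' i 3
      = ∑ j ∈ Finset.range (p^3), Polynomial.C (ξ' ^ (f i j)) * Polynomial.X ^ j)
    (hcoef : ∀ j : Fin (p^3), Complex.exp (2 * ↑π * ↑(s j) * Complex.I) = ξ ^ (f 0 (j:ℕ)))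
    (t θ : ℝ) (h : ℕ) (hh1 : 1 ≤ h) (hh2 : h < p) :
    |∑ j : Fin (p^3), Real.sin (2*π*h*((s j + (j:ℕ)*t) - θ))| ≤ (p:ℝ)^2 := by
  have hp0 : 0 < p := hp.pos
  set w : ℂ := Complex.exp (((2*π*h*t : ℝ) : ℂ) * Complex.I) with hw
  have hwc : w * (starRingEnd ℂ) w = 1 := norm_one_exp _
  have hcop : Nat.Coprime h p := by
    have : ¬ (p ∣ h) := by
      intro hd
      have := Nat.le_of_dvd (by omega) hd
      omega
    exact (Nat.coprime_comm.mp ((Nat.Prime.coprime_iff_not_dvd hp).mpr this))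
  have hprim : IsPrimitiveRoot (ξ^h) p := hξ.pow_of_coprime h hcop
  have hT : ∑ j : Fin (p^3), Complex.exp (((2*π*h*((s j + (j:ℕ)*t) - θ) : ℝ):ℂ) * Complex.I)
      = Complex.exp (((-(2*π*h*θ) : ℝ):ℂ) * Complex.I)
        * Polynomial.eval w (shapiroQ p (ξ^h) 0 3) := by
    rw [hfQ (ξ^h) 0, Polynomial.eval_finset_sum, Finset.mul_sum]
    rw [← Fin.sum_univ_eq_sum_range (fun j => Complex.exp (((-(2*π*h*θ) : ℝ):ℂ) * Complex.I)
      * Polynomial.eval w (Polynomial.C ((ξ^h)^(f 0 j)) * Polynomial.X^j)) (p^3)]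
    refine Finset.sum_congr rfl (fun j _ => ?_)
    rw [Polynomial.eval_mul, Polynomial.eval_C, Polynomial.eval_pow, Polynomial.eval_X]
    have e1 : (ξ^h)^(f 0 (j:ℕ)) = (Complex.exp (2 * ↑π * ↑(s j) * Complex.I))^h := by
      rw [hcoef j, ← pow_mul, ← pow_mul, mul_comm]
    rw [e1, hw, ← Complex.exp_nat_mul, ← Complex.exp_nat_mul, ← Complex.exp_add, ← Complex.exp_add]
    congr 1
    push_cast
    ring
  have him : ∑ j : Fin (p^3), Real.sin (2*π*h*((s j + (j:ℕ)*t) - θ))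
      = (∑ j : Fin (p^3),
          Complex.exp (((2*π*h*((s j + (j:ℕ)*t) - θ) : ℝ):ℂ) * Complex.I)).im := by
    rw [Complex.im_sum]
    exact Finset.sum_congr rfl (fun j _ => (Complex.exp_ofReal_mul_I_im _).symm)
  rw [him, hT]
  calc |(Complex.exp (((-(2*π*h*θ) : ℝ):ℂ) * Complex.I)
        * Polynomial.eval w (shapiroQ p (ξ^h) 0 3)).im|
      ≤ ‖Complex.exp (((-(2*π*h*θ) : ℝ):ℂ) * Complex.I)
        * Polynomial.eval w (shapiroQ p (ξ^h) 0 3)‖ := Complex.abs_im_le_norm _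
    _ = ‖Polynomial.eval w (shapiroQ p (ξ^h) 0 3)‖ := by
        rw [norm_mul, Complex.norm_exp_ofReal_mul_I, one_mul]
    _ ≤ (p:ℝ)^2 := eval_bound hp0 hprim hwc

set_option maxHeartbeats 2000000 in
lemma master (p : ℕ) (hp : p.Prime) (ξ : ℂ) (hξ : IsPrimitiveRoot ξ p)
    (s : Fin (p^3) → ℝ)
    (hQ : shapiroQ p ξ 0 3 = ∑ j : Fin (p^3),
      Polynomial.C (Complex.exp (2 * ↑π * ↑(s j) * Complex.I)) * Polynomial.X ^ (j:ℕ))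
    (t a b : ℝ) (ha : 0 ≤ a) (hab : a ≤ b) (hb : b ≤ 1) :
    |((Finset.univ.filter (fun i : Fin (p^3) =>
        a ≤ Int.fract (s i + (i:ℕ)*t) ∧ Int.fract (s i + (i:ℕ)*t) ≤ b)).card : ℝ)
      - (p^3 : ℕ) * (b - a)|
    ≤ 1000 * ((p:ℝ)^3) ^ ((2:ℝ)/3) * Real.log ((p:ℝ)^3) := by
  have hp0 : 0 < p := hp.pos
  have hp2 : 2 ≤ p := hp.two_le
  set K := p - 1 with hKdef
  set S := Nat.floor (Real.logb 2 (p:ℝ)) + 1 with hSdef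
  have hKp : K + 1 = p := Nat.succ_pred_eq_of_pos hp0
  have hK1 : ((K:ℕ):ℝ) + 1 = (p:ℝ) := by exact_mod_cast hKp
  have hS : Nat.floor (Real.logb 2 ((K:ℝ)+1)) + 1 ≤ S := by rw [hK1]
  obtain ⟨f, hfQ⟩ := shapiro_coeff p hp0 3
  have hcoef := coeff_extract p ξ s f hfQ hQ
  set x : Fin (p^3) → ℝ := fun j => s j + (j:ℕ)*t with hx
  have hES : ∀ (θ:ℝ) (h:ℕ), 1 ≤ h → h ≤ K →
      |∑ j : Fin (p^3), Real.sin (2*π*h*(x j - θ))| ≤ (p:ℝ)^2 := by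
    intro θ h hh1 hh2
    exact ES_main p hp ξ hξ s f hfQ hcoef t θ h hh1 (by omega)
  have hy0 : ∀ j : Fin (p^3), 0 ≤ Int.fract (x j) := fun j => Int.fract_nonneg _
  have hy1 : ∀ j : Fin (p^3), Int.fract (x j) < 1 := fun j => Int.fract_lt_one _
  have hshift : ∀ (j : Fin (p^3)) (c : ℝ),
      (((Int.fract (x j)) - c) - Hf K ((Int.fract (x j)) - c)
        = ((x j - c) - Hf K (x j - c)))
      ∧ Pf K S ((Int.fract (x j)) - c) = Pf K S (x j - c) := by
    intro j c
    have hxe : Int.fract (x j) - c = (x j - c) + ((-⌊x j⌋ : ℤ):ℝ) := by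
      rw [← Int.self_sub_floor]
      push_cast
      ring
    constructor
    · rw [hxe, Hf_add_int]
      push_cast
      ring
    · rw [hxe, Pf_add_int]
  have hcard : ((Finset.univ.filter (fun i : Fin (p^3) =>
        a ≤ Int.fract (x i) ∧ Int.fract (x i) ≤ b)).card : ℝ)
      = ∑ j : Fin (p^3), (if a ≤ Int.fract (x j) ∧ Int.fract (x j) ≤ b then (1:ℝ) else 0) := by
    rw [Finset.card_filter]
    push_cast
    rfl
  have hup : ∀ j : Fin (p^3), (if a ≤ Int.fract (x j) ∧ Int.fract (x j) ≤ b then (1:ℝ) else 0)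
      ≤ (b-a) + (((x j - b) - Hf K (x j - b)) - ((x j - a) - Hf K (x j - a)))
        + (Pf K S (x j - b) + Pf K S (x j - a)) := by
    intro j
    have h1 := indicator_upper K S hS (hy0 j) (hy1 j) ha hab hb
    rw [(hshift j b).1, (hshift j a).1, (hshift j b).2, (hshift j a).2] at h1
    exact h1
  have hlo : ∀ j : Fin (p^3),
      (b-a) + (((x j - b) - Hf K (x j - b)) - ((x j - a) - Hf K (x j - a)))
        - (Pf K S (x j - b) + Pf K S (x j - a))
      ≤ (if a ≤ Int.fract (x j) ∧ Int.fract (x j) ≤ b then (1:ℝ) else 0) := by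
    intro j
    have h1 := indicator_lower K S hS (hy0 j) (hy1 j) ha hab hb
    rw [(hshift j b).1, (hshift j a).1, (hshift j b).2, (hshift j a).2] at h1
    exact h1
  set Gb : Fin (p^3) → ℝ := fun j => (x j - b) - Hf K (x j - b) with hGb
  set Ga : Fin (p^3) → ℝ := fun j => (x j - a) - Hf K (x j - a) with hGa
  set Pb : Fin (p^3) → ℝ := fun j => Pf K S (x j - b) with hPb
  set Pa : Fin (p^3) → ℝ := fun j => Pf K S (x j - a) with hPa
  have hconst : ((p^3:ℕ):ℝ)*(b-a) = ∑ _j : Fin (p^3), (b-a) := by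
    rw [Finset.sum_const, Finset.card_univ, Fintype.card_fin, nsmul_eq_mul]
  have hsplit1 : ∑ j : Fin (p^3), ((b-a) + (Gb j - Ga j) + (Pb j + Pa j))
      = ((p^3:ℕ):ℝ)*(b-a) + (((∑ j : Fin (p^3), Gb j) - ∑ j : Fin (p^3), Ga j)
        + ((∑ j : Fin (p^3), Pb j) + ∑ j : Fin (p^3), Pa j)) := by
    rw [hconst, ← Finset.sum_sub_distrib, ← Finset.sum_add_distrib, ← Finset.sum_add_distrib,
      ← Finset.sum_add_distrib]
    exact Finset.sum_congr rfl (fun j _ => by ring)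
  have hsplit2 : ∑ j : Fin (p^3), ((b-a) + (Gb j - Ga j) - (Pb j + Pa j))
      = ((p^3:ℕ):ℝ)*(b-a) + (((∑ j : Fin (p^3), Gb j) - ∑ j : Fin (p^3), Ga j)
        - ((∑ j : Fin (p^3), Pb j) + ∑ j : Fin (p^3), Pa j)) := by
    rw [hconst, ← Finset.sum_sub_distrib, ← Finset.sum_add_distrib, ← Finset.sum_sub_distrib,
      ← Finset.sum_add_distrib]
    exact Finset.sum_congr rfl (fun j _ => by ring)
  set HK := ∑ h ∈ Finset.Icc 1 K, (1:ℝ)/h with hHKdef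
  have hHK0 : (0:ℝ) ≤ HK := Finset.sum_nonneg (fun h _ => by positivity)
  have hSGa : |∑ j : Fin (p^3), Ga j| ≤ (p:ℝ)^2 * HK := sum_G_bound K x hES a
  have hSGb : |∑ j : Fin (p^3), Gb j| ≤ (p:ℝ)^2 * HK := sum_G_bound K x hES b
  have hSPa : ∑ j : Fin (p^3), Pa j
      ≤ ((p^3:ℕ):ℝ)*(16*((S:ℝ)+1)/((K:ℝ)+1)) + 16*(p:ℝ)^2*HK :=
    sum_P_bound K S x (by positivity) hES a
  have hSPb : ∑ j : Fin (p^3), Pb j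
      ≤ ((p^3:ℕ):ℝ)*(16*((S:ℝ)+1)/((K:ℝ)+1)) + 16*(p:ℝ)^2*HK :=
    sum_P_bound K S x (by positivity) hES b
  have habs : |((Finset.univ.filter (fun i : Fin (p^3) =>
        a ≤ Int.fract (x i) ∧ Int.fract (x i) ≤ b)).card : ℝ) - (p^3 : ℕ) * (b - a)|
      ≤ 2*((p:ℝ)^2 * HK)
        + 2*(((p^3:ℕ):ℝ)*(16*((S:ℝ)+1)/((K:ℝ)+1)) + 16*(p:ℝ)^2*HK) := by
    rw [hcard, abs_le]
    have hU : ∑ j : Fin (p^3), (if a ≤ Int.fract (x j) ∧ Int.fract (x j) ≤ b then (1:ℝ) else 0)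
        ≤ ∑ j : Fin (p^3), ((b-a) + (Gb j - Ga j) + (Pb j + Pa j)) :=
      Finset.sum_le_sum (fun j _ => hup j)
    have hL : ∑ j : Fin (p^3), ((b-a) + (Gb j - Ga j) - (Pb j + Pa j))
        ≤ ∑ j : Fin (p^3), (if a ≤ Int.fract (x j) ∧ Int.fract (x j) ≤ b then (1:ℝ) else 0) :=
      Finset.sum_le_sum (fun j _ => hlo j)
    rw [hsplit1] at hU
    rw [hsplit2] at hL
    rw [abs_le] at hSGa hSGb
    constructor <;> [linarith; linarith]
  -- numeric conversion
  have hpow : ((p:ℝ)^3) ^ ((2:ℝ)/3) = (p:ℝ)^2 := by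
    have hppos : (0:ℝ) ≤ (p:ℝ) := by positivity
    rw [← Real.rpow_natCast (p:ℝ) 3, ← Real.rpow_mul hppos]
    rw [show ((3:ℕ):ℝ) * ((2:ℝ)/3) = ((2:ℕ):ℝ) by push_cast; norm_num]
    rw [Real.rpow_natCast]
  have hlog : Real.log ((p:ℝ)^3) = 3*Real.log p := by
    rw [Real.log_pow]
    push_cast
    ring
  rw [hpow, hlog]
  have hlogp : (0.6931:ℝ) ≤ Real.log p := by
    have h2 := Real.log_le_log (by norm_num : (0:ℝ) < 2)
      (show (2:ℝ) ≤ p by exact_mod_cast hp2)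
    linarith [Real.log_two_gt_d9]
  have hHKb : HK ≤ 1 + Real.log p := by
    have h1 := harmonic_bound K
    have h2 : Real.log K ≤ Real.log p := by
      apply Real.log_le_log
      · have : 1 ≤ K := by omega
        exact_mod_cast this
      · have : K ≤ p := by omega
        exact_mod_cast this
    rw [hHKdef]
    linarith
  have hSb : (0.6931:ℝ)*((S:ℝ) + 1) ≤ Real.log p + 2 := by
    have h1 : ((Nat.floor (Real.logb 2 (p:ℝ)):ℕ):ℝ) ≤ Real.logb 2 (p:ℝ) :=
      Nat.floor_le (Real.logb_nonneg (by norm_num) (by exact_mod_cast Nat.one_le_iff_ne_zero.mpr hp0.ne'))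
    have h2 : Real.logb 2 (p:ℝ) = Real.log p / Real.log 2 := Real.log_div_log.symm
    have h3 : Real.log p / Real.log 2 ≤ Real.log p / 0.6931 :=
      div_le_div_of_nonneg_left (by linarith) (by norm_num) (by linarith [Real.log_two_gt_d9])
    have h5 : (0.6931:ℝ) * (Real.log p / 0.6931) = Real.log p := by field_simp
    have h4 : (S:ℝ) = ((Nat.floor (Real.logb 2 (p:ℝ)):ℕ):ℝ) + 1 := by
      rw [hSdef]
      push_cast
      ring
    rw [h4]
    nlinarith [h1, h2, h3, h5]
  have hfrac : ((p^3:ℕ):ℝ)*(16*((S:ℝ)+1)/((K:ℝ)+1)) = 16*((S:ℝ)+1)*(p:ℝ)^2 := by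
    rw [hK1]
    have hpne : (p:ℝ) ≠ 0 := by positivity
    push_cast
    field_simp
  rw [hfrac] at habs
  have hp2r : (2:ℝ) ≤ (p:ℝ) := by exact_mod_cast hp2
  have hpsq : (0:ℝ) ≤ (p:ℝ)^2 := by positivity
  calc |((Finset.univ.filter (fun i : Fin (p^3) =>
        a ≤ Int.fract (x i) ∧ Int.fract (x i) ≤ b)).card : ℝ) - (p^3 : ℕ) * (b - a)|
      ≤ 2*((p:ℝ)^2 * HK) + 2*(16*((S:ℝ)+1)*(p:ℝ)^2 + 16*(p:ℝ)^2*HK) := habs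
    _ ≤ 1000 * (p:ℝ)^2 * (3*Real.log p) := by
        have e1 : (p:ℝ)^2*HK ≤ (p:ℝ)^2*(1 + Real.log p) :=
          mul_le_mul_of_nonneg_left hHKb hpsq
        have e2 : (0.6931:ℝ)*((p:ℝ)^2*((S:ℝ)+1)) ≤ (p:ℝ)^2*Real.log p + 2*(p:ℝ)^2 := by
          nlinarith [mul_le_mul_of_nonneg_left hSb hpsq]
        have e3 : (0.6931:ℝ)*(p:ℝ)^2 ≤ (p:ℝ)^2*Real.log p := by
          nlinarith [mul_le_mul_of_nonneg_left hlogp hpsq]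
        nlinarith [e1, e2, e3, hpsq]
end S8

/-- Corollary (explicit low-discrepancy runners): if `n = p³` and
`Q_{0,3} = Σ_{j<n} e^{2πi s_j} x^j`, then `B(s₀, s₁+t, …, s_{n−1}+(n−1)t) ≤ C·n^{2/3}·log n`
for every `t`. -/
theorem stmt8 :
    ∃ C : ℝ, 0 < C ∧
      ∀ p : ℕ, p.Prime → ∀ ξ : ℂ, IsPrimitiveRoot ξ p →
        ∀ s : Fin (p ^ 3) → ℝ, (∀ j, s j ∈ Set.Ico (0 : ℝ) 1) →
          shapiroQ p ξ 0 3 =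
            ∑ j : Fin (p ^ 3),
              Polynomial.C (Complex.exp (2 * Real.pi * (s j) * Complex.I)) *
                Polynomial.X ^ (j : ℕ) →
          ∀ t : ℝ, bias (p ^ 3) (fun j => s j + (j : ℕ) * t)
            ≤ C * ((p : ℝ) ^ 3) ^ ((2 : ℝ) / 3) * Real.log ((p : ℝ) ^ 3) := by
  refine ⟨1000, by norm_num, ?_⟩
  intro p hp ξ hξ s _hs hQ t
  unfold bias
  apply Real.sSup_le
  · rintro v ⟨a, b, ha, hab, hb, rfl⟩
    exact S8.master p hp ξ hξ s hQ t a b ha hab hb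
  · have hp1 : (1:ℝ) ≤ (p:ℝ) := by exact_mod_cast hp.one_lt.le
    have h1 : (0:ℝ) ≤ ((p:ℝ)^3) ^ ((2:ℝ)/3) := Real.rpow_nonneg (by positivity) _
    have h2 : (0:ℝ) ≤ Real.log ((p:ℝ)^3) := Real.log_nonneg (one_le_pow₀ hp1)
    exact mul_nonneg (mul_nonneg (by norm_num : (0:ℝ) ≤ 1000) h1) h2
end

section
/- Let q ∈ ℚ, m ∈ ℚ, and let g(x,y) = y^m·Σ_{j=n₁}^{n₂} c_j·xʲ·y^{qj} be a polynomial with real coefficients whose support lies on the line {(t, qt+m) : t ∈ ℝ}, with n₁ < n₂ and c_{n₁}·c_{n₂} < 0. Let h(x,y) be a polynomial with real coefficients such that every (i,j) ∈ supp(h) satisfies j > q·i + m. Then there exist real numbers 0 < d < d' such that for every sufficiently small r > 0, the univariate real polynomial g(x,r) + h(x,r) has a real root in the open interval (d·r^{−q}, d'·r^{−q}). -/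
open scoped Real Classical
open Filter Topology Polynomial Finset

/-- The univariate real polynomial `g(x,r)` for
`g(x,y) = y^m · Σ_{j=n₁}^{n₂} c_j·xʲ·y^{q·j}` (with rational exponents `m, q·j` in `y`),
evaluated at `y := r > 0` via real powers. -/
noncomputable def gREval (q m : ℚ) (n₁ n₂ : ℕ) (c : ℕ → ℝ) (r : ℝ) : Polynomial ℝ :=
  Polynomial.C (r ^ (m : ℝ)) *
    ∑ j ∈ Finset.Icc n₁ n₂,
      Polynomial.C (c j * r ^ ((q : ℝ) * j)) * Polynomial.X ^ j

/-- The univariate real polynomial `h(x,r)` for `h(x,y) = Σ_{(i,j)} c_{ij}·xⁱ·yʲ`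
(with rational exponents `j` in `y`), evaluated at `y := r > 0` via real powers. -/
noncomputable def hREval (c : (ℕ × ℚ) →₀ ℝ) (r : ℝ) : Polynomial ℝ :=
  c.sum fun ij coef => Polynomial.C (coef * r ^ ((ij.2 : ℝ))) * Polynomial.X ^ ij.1

private noncomputable def Pfun (n₁ n₂ : ℕ) (c : ℕ → ℝ) (t : ℝ) : ℝ :=
  ∑ j ∈ Finset.Icc n₁ n₂, c j * t ^ j

private noncomputable def Sfun (q m : ℚ) (ch : (ℕ × ℚ) →₀ ℝ) (r t : ℝ) : ℝ :=
  ∑ ij ∈ ch.support, ch ij * t ^ ij.1 * r ^ ((ij.2 : ℝ) - (q : ℝ) * ij.1 - (m : ℝ))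

private lemma evalKey (q m : ℚ) (n₁ n₂ : ℕ) (c : ℕ → ℝ) (ch : (ℕ × ℚ) →₀ ℝ)
    {r : ℝ} (hr : 0 < r) (t : ℝ) :
    (gREval q m n₁ n₂ c r + hREval ch r).eval (t * r ^ (-(q : ℝ))) =
      r ^ (m : ℝ) * (Pfun n₁ n₂ c t + Sfun q m ch r t) := by
  have key : ∀ (a : ℝ) (i : ℕ), (r ^ a) ^ i = r ^ (a * i) := fun a i => by
    rw [← Real.rpow_natCast (r ^ a) i, ← Real.rpow_mul hr.le]
  simp only [gREval, hREval, Finsupp.sum, Polynomial.eval_add, Polynomial.eval_mul,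
    Polynomial.eval_C, Polynomial.eval_finset_sum, Polynomial.eval_pow, Polynomial.eval_X]
  have hg : ∀ j ∈ Finset.Icc n₁ n₂,
      c j * r ^ ((q : ℝ) * j) * (t * r ^ (-(q : ℝ))) ^ j = c j * t ^ j := by
    intro j _
    have h1 : r ^ ((q : ℝ) * j) * r ^ ((-(q : ℝ)) * j) = 1 := by
      rw [← Real.rpow_add hr, show (q : ℝ) * j + (-(q : ℝ)) * j = 0 by ring, Real.rpow_zero]
    calc c j * r ^ ((q : ℝ) * j) * (t * r ^ (-(q : ℝ))) ^ j
        = c j * t ^ j * (r ^ ((q : ℝ) * j) * r ^ ((-(q : ℝ)) * j)) := by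
          rw [mul_pow, key]; ring
      _ = c j * t ^ j := by rw [h1, mul_one]
  have hh : ∀ ij ∈ ch.support,
      ch ij * r ^ ((ij.2 : ℝ)) * (t * r ^ (-(q : ℝ))) ^ ij.1 =
        r ^ (m : ℝ) * (ch ij * t ^ ij.1 * r ^ ((ij.2 : ℝ) - (q : ℝ) * ij.1 - (m : ℝ))) := by
    intro ij _
    have h1 : r ^ ((ij.2 : ℝ)) * r ^ ((-(q : ℝ)) * ij.1)
        = r ^ (m : ℝ) * r ^ ((ij.2 : ℝ) - (q : ℝ) * ij.1 - (m : ℝ)) := by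
      rw [← Real.rpow_add hr, ← Real.rpow_add hr]; congr 1; ring
    calc ch ij * r ^ ((ij.2 : ℝ)) * (t * r ^ (-(q : ℝ))) ^ ij.1
        = r ^ ((ij.2 : ℝ)) * r ^ ((-(q : ℝ)) * ij.1) * (ch ij * t ^ ij.1) := by
          rw [mul_pow, key]; ring
      _ = _ := by rw [h1]; ring
  rw [Finset.sum_congr rfl hg, Finset.sum_congr rfl hh, ← Finset.mul_sum]
  unfold Pfun Sfun
  ring

private lemma signPres {p s : ℝ} (h : |s| < |p|) : 0 < (p + s) * p := by
  rcases abs_lt.1 h with ⟨h1, h2⟩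
  rcases le_or_gt 0 p with hp | hp
  · rw [abs_of_nonneg hp] at h1 h2; nlinarith
  · rw [abs_of_neg hp] at h1 h2; nlinarith

/-- Lemma 5 (real Rouché-type perturbation): if `g(x,y) = y^m·Σ_{j=n₁}^{n₂} c_j·xʲ·y^{qj}`
has real coefficients with `c_{n₁}·c_{n₂} < 0`, and the support of the real polynomial `h`
lies strictly above the line `j = q·i + m`, then there exist `0 < d < d'` such that for every
sufficiently small `r > 0`, `g(x,r) + h(x,r)` has a real root in `(d·r^{−q}, d'·r^{−q})`. -/
theorem stmt15 (q m : ℚ) (n₁ n₂ : ℕ) (hn : n₁ < n₂) (c : ℕ → ℝ)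
    (hc : c n₁ * c n₂ < 0)
    (ch : (ℕ × ℚ) →₀ ℝ) (hch : ∀ ij ∈ ch.support, q * (ij.1 : ℚ) + m < ij.2) :
    ∃ d d' : ℝ, 0 < d ∧ d < d' ∧
      ∃ r₀ : ℝ, 0 < r₀ ∧ ∀ r : ℝ, 0 < r → r < r₀ →
        ∃ x : ℝ, d * r ^ (-(q : ℝ)) < x ∧ x < d' * r ^ (-(q : ℝ)) ∧
          (gREval q m n₁ n₂ c r + hREval ch r).IsRoot x := by
  have hn12 : n₁ ≤ n₂ := hn.le
  have hne₁ : c n₁ ≠ 0 := fun h => by simp [h] at hc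
  have hne₂ : c n₂ ≠ 0 := fun h => by simp [h] at hc
  set P : ℝ → ℝ := Pfun n₁ n₂ c with hP
  -- tendsto of Sfun
  have hS : ∀ t : ℝ, Tendsto (fun r => Sfun q m ch r t) (𝓝[>] (0:ℝ)) (𝓝 0) := by
    intro t
    have : Tendsto (fun r => ∑ ij ∈ ch.support,
        ch ij * t ^ ij.1 * r ^ ((ij.2 : ℝ) - (q : ℝ) * ij.1 - (m : ℝ))) (𝓝[>] (0:ℝ))
        (𝓝 (∑ ij ∈ ch.support, (0:ℝ))) := by
      refine tendsto_finset_sum _ fun ij hij => ?_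
      have he : 0 < (ij.2 : ℝ) - (q : ℝ) * ij.1 - (m : ℝ) := by
        rw [sub_sub, sub_pos]
        exact_mod_cast hch ij hij
      have h0 : Tendsto (fun r : ℝ => r ^ ((ij.2 : ℝ) - (q : ℝ) * ij.1 - (m : ℝ)))
          (𝓝[>] (0:ℝ)) (𝓝 0) := by
        have hc0 := (Real.continuousAt_rpow_const 0 _ (Or.inr he.le)).tendsto
        rw [Real.zero_rpow he.ne'] at hc0
        exact hc0.mono_left nhdsWithin_le_nhds
      simpa using h0.const_mul (ch ij * t ^ ij.1)
    simpa [Sfun] using this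
  -- find d
  set Q : ℝ → ℝ := fun t => ∑ j ∈ Finset.Icc n₁ n₂, c j * t ^ (j - n₁) with hQdef
  have hQ0 : Q 0 = c n₁ := by
    show (∑ j ∈ Finset.Icc n₁ n₂, c j * (0:ℝ) ^ (j - n₁)) = c n₁
    rw [Finset.sum_eq_single_of_mem n₁ (Finset.mem_Icc.2 ⟨le_refl _, hn12⟩)]
    · simp
    · intro b hb hbne
      have hb1 := (Finset.mem_Icc.1 hb).1
      rw [zero_pow (Nat.sub_ne_zero_of_lt (lt_of_le_of_ne hb1 (Ne.symm hbne)))]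
      ring
  have hQcont : Continuous Q := continuous_finset_sum _ fun j _ => continuous_const.mul (continuous_pow _)
  have hPQ : ∀ t : ℝ, P t = t ^ n₁ * Q t := by
    intro t
    rw [hP, hQdef]; unfold Pfun
    rw [Finset.mul_sum]
    refine Finset.sum_congr rfl fun j hj => ?_
    calc c j * t ^ j = c j * (t ^ n₁ * t ^ (j - n₁)) := by
          rw [← pow_add, Nat.add_sub_cancel' (Finset.mem_Icc.1 hj).1]
      _ = t ^ n₁ * (c j * t ^ (j - n₁)) := by ring
  have hev1 : ∀ᶠ t in 𝓝 (0:ℝ), 0 < Q t * c n₁ := by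
    have h1 : ContinuousAt (fun t => Q t * c n₁) 0 := (hQcont.mul continuous_const).continuousAt
    have h2 : (0:ℝ) < Q 0 * c n₁ := by rw [hQ0]; exact mul_self_pos.mpr hne₁
    exact h1.eventually (eventually_gt_nhds h2)
  obtain ⟨ε, hε, hball⟩ := Metric.eventually_nhds_iff.1 hev1
  set d : ℝ := ε / 2 with hddef
  have hd : 0 < d := by positivity
  have hQd : 0 < Q d * c n₁ := hball (by
    rw [Real.dist_eq, hddef]
    rw [sub_zero, abs_of_pos (by positivity : (0:ℝ) < ε / 2)]
    linarith)
  have hPd : 0 < P d * c n₁ := by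
    rw [hPQ, mul_assoc]
    exact mul_pos (pow_pos hd _) hQd
  -- find d'
  set R : ℝ → ℝ := fun s => ∑ j ∈ Finset.Icc n₁ n₂, c j * s ^ (n₂ - j) with hRdef
  have hR0 : R 0 = c n₂ := by
    show (∑ j ∈ Finset.Icc n₁ n₂, c j * (0:ℝ) ^ (n₂ - j)) = c n₂
    rw [Finset.sum_eq_single_of_mem n₂ (Finset.mem_Icc.2 ⟨hn12, le_refl _⟩)]
    · simp
    · intro b hb hbne
      have hb2 := (Finset.mem_Icc.1 hb).2
      rw [zero_pow (Nat.sub_ne_zero_of_lt (lt_of_le_of_ne hb2 hbne))]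
      ring
  have hRcont : Continuous R := continuous_finset_sum _ fun j _ => continuous_const.mul (continuous_pow _)
  have hev2 : ∀ᶠ s in 𝓝 (0:ℝ), 0 < R s * c n₂ := by
    have h1 : ContinuousAt (fun s => R s * c n₂) 0 := (hRcont.mul continuous_const).continuousAt
    have h2 : (0:ℝ) < R 0 * c n₂ := by rw [hR0]; exact mul_self_pos.mpr hne₂
    exact h1.eventually (eventually_gt_nhds h2)
  obtain ⟨ε', hε', hball'⟩ := Metric.eventually_nhds_iff.1 hev2
  set s0 : ℝ := min (ε' / 2) (d + 1)⁻¹ with hs0def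
  have hs0pos : 0 < s0 := lt_min (by positivity) (by positivity)
  have hs0ne : s0 ≠ 0 := hs0pos.ne'
  have hRs0 : 0 < R s0 * c n₂ := hball' (by
    rw [Real.dist_eq, sub_zero, abs_of_pos hs0pos]
    calc s0 ≤ ε' / 2 := min_le_left _ _
      _ < ε' := by linarith)
  set d' : ℝ := s0⁻¹ with hd'def
  have hd'pos : 0 < d' := inv_pos.2 hs0pos
  have hdd' : d < d' := by
    have h1 : s0 ≤ (d + 1)⁻¹ := min_le_right _ _
    have h2 : ((d + 1)⁻¹)⁻¹ ≤ s0⁻¹ := by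
      apply inv_anti₀ hs0pos h1
    rw [inv_inv] at h2
    linarith
  have hPR : P d' = d' ^ n₂ * R s0 := by
    rw [hP, hRdef]; unfold Pfun
    rw [Finset.mul_sum]
    refine Finset.sum_congr rfl fun j hj => ?_
    have hj2 := (Finset.mem_Icc.1 hj).2
    have hpow : d' ^ n₂ = d' ^ j * d' ^ (n₂ - j) := by
      rw [← pow_add, Nat.add_sub_cancel' hj2]
    have hcancel : d' ^ (n₂ - j) * s0 ^ (n₂ - j) = 1 := by
      rw [hd'def, inv_pow, inv_mul_cancel₀ (pow_ne_zero _ hs0ne)]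
    calc c j * d' ^ j = c j * d' ^ j * (d' ^ (n₂ - j) * s0 ^ (n₂ - j)) := by
          rw [hcancel, mul_one]
      _ = d' ^ n₂ * (c j * s0 ^ (n₂ - j)) := by rw [hpow]; ring
  have hPd' : 0 < P d' * c n₂ := by
    rw [hPR, mul_assoc]
    exact mul_pos (pow_pos hd'pos _) hRs0
  have hPdne : P d ≠ 0 := fun h => by rw [h] at hPd; simp at hPd
  have hPd'ne : P d' ≠ 0 := fun h => by rw [h] at hPd'; simp at hPd'
  have hPP : P d * P d' < 0 := by nlinarith [mul_pos hPd hPd']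
  -- small r
  have hev : ∀ᶠ r in 𝓝[>] (0:ℝ),
      |Sfun q m ch r d| < |P d| ∧ |Sfun q m ch r d'| < |P d'| := by
    have e1 := (hS d).eventually (eventually_abs_sub_lt 0 (abs_pos.2 hPdne))
    have e2 := (hS d').eventually (eventually_abs_sub_lt 0 (abs_pos.2 hPd'ne))
    simp only [sub_zero] at e1 e2
    exact e1.and e2
  obtain ⟨r₀, hr₀mem, hsub⟩ := mem_nhdsGT_iff_exists_Ioo_subset.1 hev
  refine ⟨d, d', hd, hdd', r₀, hr₀mem, fun r hr hrr₀ => ?_⟩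
  obtain ⟨hS1, hS2⟩ := hsub ⟨hr, hrr₀⟩
  set f : ℝ → ℝ := fun x => (gREval q m n₁ n₂ c r + hREval ch r).eval x with hfdef
  have hcont : Continuous f := Polynomial.continuous _
  have hrq : 0 < r ^ (-(q : ℝ)) := Real.rpow_pos_of_pos hr _
  have hab : d * r ^ (-(q : ℝ)) < d' * r ^ (-(q : ℝ)) := by
    exact mul_lt_mul_of_pos_right hdd' hrq
  have hfa : f (d * r ^ (-(q : ℝ))) = r ^ (m : ℝ) * (P d + Sfun q m ch r d) :=
    evalKey q m n₁ n₂ c ch hr d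
  have hfb : f (d' * r ^ (-(q : ℝ))) = r ^ (m : ℝ) * (P d' + Sfun q m ch r d') :=
    evalKey q m n₁ n₂ c ch hr d'
  have hA : 0 < (P d + Sfun q m ch r d) * P d := signPres hS1
  have hB : 0 < (P d' + Sfun q m ch r d') * P d' := signPres hS2
  have hABneg : (P d + Sfun q m ch r d) * (P d' + Sfun q m ch r d') < 0 := by
    nlinarith [mul_pos hA hB]
  have hrm : 0 < r ^ (m : ℝ) := Real.rpow_pos_of_pos hr _
  have hffneg : f (d * r ^ (-(q : ℝ))) * f (d' * r ^ (-(q : ℝ))) < 0 := by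
    rw [hfa, hfb]
    calc r ^ (m : ℝ) * (P d + Sfun q m ch r d) * (r ^ (m : ℝ) * (P d' + Sfun q m ch r d'))
        = (r ^ (m : ℝ) * r ^ (m : ℝ)) * ((P d + Sfun q m ch r d) * (P d' + Sfun q m ch r d')) := by
          ring
      _ < 0 := mul_neg_of_pos_of_neg (mul_pos hrm hrm) hABneg
  rcases mul_neg_iff.1 hffneg with ⟨h1, h2⟩ | ⟨h1, h2⟩
  · obtain ⟨x, hx, hfx⟩ := intermediate_value_Ioo' hab.le hcont.continuousOn ⟨h2, h1⟩
    exact ⟨x, hx.1, hx.2, hfx⟩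
  · obtain ⟨x, hx, hfx⟩ := intermediate_value_Ioo hab.le hcont.continuousOn ⟨h1, h2⟩
    exact ⟨x, hx.1, hx.2, hfx⟩
end

section
/- Let α₁,…,α_k ∈ [0,2π) and let n₁,…,n_k be positive integers such that nᵢ ≠ n_{i+1} for every i ∈ {1,…,k−1}. Then there exists φ ∈ [0,2π) such that the number of indices i ∈ {1,…,k−1} with cos(αᵢ + φ·nᵢ)·cos(α_{i+1} + φ·n_{i+1}) < 0 is at least (k−1)/8. -/
open scoped Real
open MeasureTheory

lemma Jzero (c : ℝ) (N : ℤ) (hN : N ≠ 0) :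
    ∫ φ in (0:ℝ)..(2*π), Real.cos (c + φ * N) = 0 := by
  have hNR : (N:ℝ) ≠ 0 := Int.cast_ne_zero.mpr hN
  have hder : ∀ φ : ℝ, HasDerivAt (fun φ => Real.sin (c + φ * N) / N) (Real.cos (c + φ * N)) φ := by
    intro φ
    have h1 : HasDerivAt (fun φ : ℝ => c + φ * N) (N:ℝ) φ := by
      simpa using ((hasDerivAt_id φ).mul_const (N:ℝ)).const_add c
    have h2 := (Real.hasDerivAt_sin (c + φ * N)).comp φ h1
    have h3 := h2.div_const (N:ℝ)
    simpa [mul_div_assoc, mul_div_cancel_right₀ _ hNR] using h3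
  rw [intervalIntegral.integral_eq_sub_of_hasDerivAt (fun φ _ => hder φ)
    ((Real.continuous_cos.comp
      (continuous_const.add (continuous_id.mul continuous_const))).intervalIntegrable _ _)]
  have : Real.sin (c + 2*π*N) = Real.sin c := by
    have := Real.sin_add_int_mul_two_pi c N
    rw [← this]; ring_nf
  simp [this]

lemma ptsum (x y : ℝ) : Real.cos x * Real.cos y = (Real.cos (x - y) + Real.cos (x + y)) / 2 := by
  rw [Real.cos_sub, Real.cos_add]; ring

lemma coscont (c r : ℝ) : Continuous fun φ : ℝ => Real.cos (c + φ * r) :=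
  Real.continuous_cos.comp (continuous_const.add (continuous_id.mul continuous_const))

lemma key (a b : ℝ) (m n : ℕ) (hm : 0 < m) (hn : 0 < n) (hmn : m ≠ n) :
    π/4 ≤ ∫ φ in (0:ℝ)..(2*π),
      (if Real.cos (a + φ * m) * Real.cos (b + φ * n) < 0 then (1:ℝ) else 0) := by
  set X : ℝ → ℝ := fun φ => Real.cos (a + φ * m) * Real.cos (b + φ * n) with hX
  have hXcont : Continuous X := (coscont a m).mul (coscont b n)
  have hXabs : ∀ φ, |X φ| ≤ 1 := by
    intro φ
    simp only [hX, abs_mul]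
    exact mul_le_one₀ (Real.abs_cos_le_one _) (abs_nonneg _) (Real.abs_cos_le_one _)
  have cint : ∀ (c : ℝ) (N : ℤ), IntervalIntegrable (fun φ => Real.cos (c + φ * N))
      volume 0 (2*π) := fun c N => (coscont c N).intervalIntegrable _ _
  have hmn' : (m:ℤ) - n ≠ 0 := sub_ne_zero.mpr (by exact_mod_cast hmn)
  have hmnp : (m:ℤ) + n ≠ 0 := by positivity
  -- ∫ X = 0
  have hXpt : ∀ φ, X φ = (Real.cos ((a-b) + φ * (((m:ℤ) - n : ℤ):ℝ))
      + Real.cos ((a+b) + φ * (((m:ℤ) + n : ℤ):ℝ)))/2 := by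
    intro φ
    simp only [hX]
    rw [ptsum, show (a + φ*(m:ℝ)) - (b + φ*n) = (a-b) + φ * (((m:ℤ) - n : ℤ):ℝ) by push_cast; ring,
      show (a + φ*(m:ℝ)) + (b + φ*n) = (a+b) + φ * (((m:ℤ) + n : ℤ):ℝ) by push_cast; ring]
  have hI0 : ∫ φ in (0:ℝ)..(2*π), X φ = 0 := by
    simp only [hXpt]
    rw [intervalIntegral.integral_div, intervalIntegral.integral_add (cint _ _) (cint _ _),
      Jzero _ _ hmn', Jzero _ _ hmnp]
    norm_num
  -- ∫ X² = π/2
  have h2m : (2*(m:ℤ)) ≠ 0 := by positivity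
  have h2n : (2*(n:ℤ)) ≠ 0 := by positivity
  have h2mn : (2*(m:ℤ) - 2*n) ≠ 0 := fun h => hmn' (by linarith)
  have h2mnp : (2*(m:ℤ) + 2*n) ≠ 0 := by positivity
  have hsq : ∀ φ, X φ ^ 2 = 1/4 + Real.cos (2*a + φ * ((2*(m:ℤ) : ℤ):ℝ))/4
      + Real.cos (2*b + φ * ((2*(n:ℤ) : ℤ):ℝ))/4
      + Real.cos ((2*a-2*b) + φ * ((2*(m:ℤ) - 2*n : ℤ):ℝ))/8
      + Real.cos ((2*a+2*b) + φ * ((2*(m:ℤ) + 2*n : ℤ):ℝ))/8 := by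
    intro φ
    have eA : Real.cos (a + φ*(m:ℝ))^2 = (1 + Real.cos (2*a + φ * ((2*(m:ℤ) : ℤ):ℝ)))/2 := by
      rw [Real.cos_sq, show 2*(a + φ*(m:ℝ)) = 2*a + φ * ((2*(m:ℤ) : ℤ):ℝ) by push_cast; ring]; ring
    have eB : Real.cos (b + φ*(n:ℝ))^2 = (1 + Real.cos (2*b + φ * ((2*(n:ℤ) : ℤ):ℝ)))/2 := by
      rw [Real.cos_sq, show 2*(b + φ*(n:ℝ)) = 2*b + φ * ((2*(n:ℤ) : ℤ):ℝ) by push_cast; ring]; ring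
    have eAB : Real.cos (2*a + φ * ((2*(m:ℤ) : ℤ):ℝ)) * Real.cos (2*b + φ * ((2*(n:ℤ) : ℤ):ℝ))
        = (Real.cos ((2*a-2*b) + φ * ((2*(m:ℤ) - 2*n : ℤ):ℝ))
          + Real.cos ((2*a+2*b) + φ * ((2*(m:ℤ) + 2*n : ℤ):ℝ)))/2 := by
      rw [ptsum,
        show (2*a + φ * ((2*(m:ℤ) : ℤ):ℝ)) - (2*b + φ * ((2*(n:ℤ) : ℤ):ℝ))
          = (2*a-2*b) + φ * ((2*(m:ℤ) - 2*n : ℤ):ℝ) by push_cast; ring,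
        show (2*a + φ * ((2*(m:ℤ) : ℤ):ℝ)) + (2*b + φ * ((2*(n:ℤ) : ℤ):ℝ))
          = (2*a+2*b) + φ * ((2*(m:ℤ) + 2*n : ℤ):ℝ) by push_cast; ring]
    have hXX : X φ ^ 2 = Real.cos (a + φ*(m:ℝ))^2 * Real.cos (b + φ*(n:ℝ))^2 := by
      simp only [hX]; ring
    rw [hXX, eA, eB]
    linear_combination (1/4 : ℝ) * eAB
  have hI2 : ∫ φ in (0:ℝ)..(2*π), X φ ^ 2 = π/2 := by
    simp only [hsq]
    rw [intervalIntegral.integral_add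
        (((intervalIntegrable_const.add ((cint _ _).div_const _)).add
          ((cint _ _).div_const _)).add ((cint _ _).div_const _)) ((cint _ _).div_const _),
      intervalIntegral.integral_add
        ((intervalIntegrable_const.add ((cint _ _).div_const _)).add
          ((cint _ _).div_const _)) ((cint _ _).div_const _),
      intervalIntegral.integral_add
        (intervalIntegrable_const.add ((cint _ _).div_const _)) ((cint _ _).div_const _),
      intervalIntegral.integral_add intervalIntegrable_const ((cint _ _).div_const _)]
    rw [intervalIntegral.integral_div, intervalIntegral.integral_div,
      intervalIntegral.integral_div, intervalIntegral.integral_div,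
      intervalIntegral.integral_div,
      Jzero _ _ h2m, Jzero _ _ h2n, Jzero _ _ h2mn, Jzero _ _ h2mnp]
    simp
    ring
  -- ∫ |X| ≥ π/2
  have hIabs : π/2 ≤ ∫ φ in (0:ℝ)..(2*π), |X φ| := by
    rw [← hI2]
    apply intervalIntegral.integral_mono_on (by positivity)
      ((hXcont.pow 2).intervalIntegrable _ _) (hXcont.abs.intervalIntegrable _ _)
    intro x _
    have h1 := hXabs x
    have h2 : X x ^ 2 = |X x|^2 := (sq_abs _).symm
    show X x ^ 2 ≤ |X x|
    nlinarith [abs_nonneg (X x)]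
  -- ∫ negative part ≥ π/4
  have hnegpt : ∀ φ, max (-(X φ)) 0 = (|X φ| - X φ)/2 := by
    intro φ
    rcases le_total 0 (X φ) with h | h
    · rw [abs_of_nonneg h, max_eq_right (by linarith)]; ring
    · rw [abs_of_nonpos h, max_eq_left (by linarith)]; ring
  have hIneg : π/4 ≤ ∫ φ in (0:ℝ)..(2*π), max (-(X φ)) 0 := by
    simp only [hnegpt]
    rw [intervalIntegral.integral_div,
      intervalIntegral.integral_sub (hXcont.abs.intervalIntegrable _ _)
        (hXcont.intervalIntegrable _ _), hI0]
    linarith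
  have hmeas : MeasurableSet {φ : ℝ | X φ < 0} :=
    (isOpen_lt hXcont continuous_const).measurableSet
  have hindint : IntervalIntegrable (fun φ => if X φ < 0 then (1:ℝ) else 0) volume 0 (2*π) := by
    have heq : (fun φ => if X φ < 0 then (1:ℝ) else 0)
        = Set.indicator {φ : ℝ | X φ < 0} (fun _ => (1:ℝ)) := by
      funext φ; simp [Set.indicator_apply]
    rw [heq, intervalIntegrable_iff]
    exact ((integrableOn_const_iff).mpr (Or.inr (by
      rw [Set.uIoc]; exact measure_Ioc_lt_top))).indicator hmeas
  calc π/4 ≤ ∫ φ in (0:ℝ)..(2*π), max (-(X φ)) 0 := hIneg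
    _ ≤ ∫ φ in (0:ℝ)..(2*π), (if X φ < 0 then (1:ℝ) else 0) := by
        apply intervalIntegral.integral_mono_on (by positivity)
          ((hXcont.neg.max continuous_const).intervalIntegrable _ _) hindint
        intro x _
        show max (-(X x)) 0 ≤ (if X x < 0 then (1:ℝ) else 0)
        rcases lt_or_ge (X x) 0 with h | h
        · rw [if_pos h, max_eq_left (by linarith)]
          have := hXabs x; rw [abs_of_neg h] at this; linarith
        · rw [if_neg (not_lt.mpr h), max_eq_right (by linarith)]

lemma indint (X : ℝ → ℝ) (hXc : Continuous X) :
    IntervalIntegrable (fun φ => if X φ < 0 then (1:ℝ) else 0) volume 0 (2*π) := by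
  have hmeas : MeasurableSet {φ : ℝ | X φ < 0} :=
    (isOpen_lt hXc continuous_const).measurableSet
  have heq : (fun φ => if X φ < 0 then (1:ℝ) else 0)
      = Set.indicator {φ : ℝ | X φ < 0} (fun _ => (1:ℝ)) := by
    funext φ; simp [Set.indicator_apply]
  rw [heq, intervalIntegrable_iff]
  exact ((integrableOn_const_iff).mpr (Or.inr (by
    rw [Set.uIoc]; exact measure_Ioc_lt_top))).indicator hmeas


set_option maxHeartbeats 1000000 in
/-- Lemma 6 (sign variations of cosines): given `α₁,…,α_k ∈ [0,2π)` and positive integers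
`n₁,…,n_k` with `nᵢ ≠ n_{i+1}` for consecutive indices, there is `φ ∈ [0,2π)` such that the
sequence `cos(αᵢ + φ·nᵢ)` has at least `(k−1)/8` sign variations. -/
theorem stmt16 (k : ℕ) (α : ℕ → ℝ) (hα : ∀ i < k, α i ∈ Set.Ico (0 : ℝ) (2 * Real.pi))
    (n : ℕ → ℕ) (hn : ∀ i < k, 0 < n i) (hne : ∀ i, i + 1 < k → n i ≠ n (i + 1)) :
    ∃ φ : ℝ, φ ∈ Set.Ico (0 : ℝ) (2 * Real.pi) ∧
      ((k : ℝ) - 1) / 8 ≤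
        (((Finset.range (k - 1)).filter
          (fun i => Real.cos (α i + φ * n i) * Real.cos (α (i + 1) + φ * n (i + 1)) < 0)).card
          : ℝ) := by
  by_cases hk : k ≤ 1
  · refine ⟨0, ⟨le_refl 0, by positivity⟩, ?_⟩
    have h1 : (k:ℝ) ≤ 1 := by exact_mod_cast hk
    have : ((k:ℝ) - 1)/8 ≤ 0 := by linarith
    exact this.trans (Nat.cast_nonneg _)
  push_neg at hk
  set K := k - 1 with hK
  have hKpos : 0 < K := by omega
  have hKcast : (K:ℝ) = (k:ℝ) - 1 := by
    rw [hK, Nat.cast_sub (by omega)]; norm_num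
  set c : ℝ := ((k:ℝ) - 1)/8 with hc
  have hcpos : 0 < c := by
    have : (2:ℝ) ≤ k := by exact_mod_cast hk
    rw [hc]; linarith
  by_contra hcon
  push_neg at hcon
  set f : ℕ → ℝ → ℝ := fun i φ =>
    if Real.cos (α i + φ * n i) * Real.cos (α (i+1) + φ * n (i+1)) < 0 then (1:ℝ) else 0
    with hf
  have hcard : ∀ φ : ℝ, (((Finset.range (k-1)).filter
      (fun i => Real.cos (α i + φ * n i) * Real.cos (α (i + 1) + φ * n (i + 1)) < 0)).card : ℝ)
      = ∑ i ∈ Finset.range K, f i φ := by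
    intro φ
    rw [Finset.card_filter, ← hK, Nat.cast_sum]
    refine Finset.sum_congr rfl fun i _ => ?_
    simp only [hf]
    split_ifs <;> simp
  have hXc : ∀ i : ℕ, Continuous fun φ : ℝ =>
      Real.cos (α i + φ * n i) * Real.cos (α (i+1) + φ * n (i+1)) :=
    fun i => (coscont _ _).mul (coscont _ _)
  have hint : ∀ i ∈ Finset.range K, IntervalIntegrable (f i) volume 0 (2*π) := by
    intro i _
    rw [hf]
    exact indint _ (hXc i)
  have hFint : IntervalIntegrable (fun φ => ∑ i ∈ Finset.range K, f i φ) volume 0 (2*π) := by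
    have h0 : (fun φ => ∑ i ∈ Finset.range K, f i φ) = ∑ i ∈ Finset.range K, f i := by
      funext φ; rw [Finset.sum_apply]
    rw [h0]
    exact IntervalIntegrable.sum _ hint
  -- lower bound on the integral
  have hlow : (K:ℝ) * (π/4) ≤ ∫ φ in (0:ℝ)..(2*π), ∑ i ∈ Finset.range K, f i φ := by
    rw [intervalIntegral.integral_finset_sum hint]
    have h0 : (K:ℝ) * (π/4) = ∑ _i ∈ Finset.range K, π/4 := by
      rw [Finset.sum_const, Finset.card_range, nsmul_eq_mul]
    rw [h0]
    refine Finset.sum_le_sum fun i hi => ?_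
    have hik : i < K := Finset.mem_range.mp hi
    have := key (α i) (α (i+1)) (n i) (n (i+1)) (hn i (by omega)) (hn (i+1) (by omega))
      (hne i (by omega))
    simpa [hf] using this
  -- upper bound: F < c everywhere on [0, 2π]
  set M : ℕ := ⌈c⌉₊ - 1 with hM
  have hMlt : (M:ℝ) < c := by
    have h1 : ⌈c⌉₊ < c + 1 := Nat.ceil_lt_add_one hcpos.le
    have h2 : 1 ≤ ⌈c⌉₊ := Nat.one_le_ceil_iff.mpr hcpos
    rw [hM, Nat.cast_sub h2]
    push_cast; linarith
  have hbound : ∀ φ ∈ Set.Ico (0:ℝ) (2*π), ∑ i ∈ Finset.range K, f i φ ≤ M := by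
    intro φ hφ
    have h1 := hcon φ hφ
    rw [hcard φ] at h1
    set v := (Finset.filter
        (fun i => Real.cos (α i + φ * n i) * Real.cos (α (i + 1) + φ * n (i + 1)) < 0)
        (Finset.range (k-1))).card with hv
    rw [← hcard φ]
    have h3 : (v:ℝ) < c := by rw [hv, hcard φ]; exact h1
    have h4 : (v:ℝ) < ⌈c⌉₊ := lt_of_lt_of_le h3 (Nat.le_ceil c)
    have h5 : v < ⌈c⌉₊ := by exact_mod_cast h4
    have h6 : v ≤ M := by omega
    exact_mod_cast h6
  -- periodicity: value at 2π equals the value at 0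
  have hper : ∀ (x : ℝ) (N : ℕ), Real.cos (x + 2*π*N) = Real.cos (x + 0*N) := by
    intro x N
    rw [show x + 2*π*N = x + N*(2*π) by ring, Real.cos_add_nat_mul_two_pi]
    norm_num
  have hF2pi : ∀ i, f i (2*π) = f i 0 := by
    intro i
    simp only [hf]
    rw [hper (α i) (n i), hper (α (i+1)) (n (i+1))]
  have hboundIcc : ∀ φ ∈ Set.Icc (0:ℝ) (2*π), ∑ i ∈ Finset.range K, f i φ ≤ M := by
    intro φ hφ
    rcases eq_or_lt_of_le hφ.2 with h | h
    · rw [h, Finset.sum_congr rfl fun i _ => hF2pi i]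
      exact hbound 0 ⟨le_refl 0, by positivity⟩
    · exact hbound φ ⟨hφ.1, h⟩
  have hup : ∫ φ in (0:ℝ)..(2*π), ∑ i ∈ Finset.range K, f i φ ≤ 2*π*M := by
    have := intervalIntegral.integral_mono_on (by positivity : (0:ℝ) ≤ 2*π)
      hFint (intervalIntegrable_const (c := (M:ℝ))) hboundIcc
    rwa [intervalIntegral.integral_const, smul_eq_mul, sub_zero] at this
  have hpi := Real.pi_pos
  have h7 : 2*π*(M:ℝ) < 2*π*c := by nlinarith
  have h8 : 2*π*c = (K:ℝ) * (π/4) := by rw [hc, hKcast]; ring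
  linarith
end
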